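/- arXiv:math/0005027 — 6 statements merged into one kernel-verified Lean document; each statement's English description precedes it below -/
import Mathlib

section
/- Let φ, ψ ∈ G satisfy lim_{t→0+} ψ(t)/φ(t) = 0 and δ_φ < 1, and suppose M(φ̃) ⊆ Λ(ψ), i.e. every measurable x with ‖x‖_{M(φ̃)} < ∞ satisfies ‖x‖_{Λ(ψ)} < ∞. Then the identity inclusion I : M(φ̃) → Λ(ψ) is disjointly strictly singular: there exist no sequence (x_n) of measurable functions with pairwise disjoint supports and 0 < ‖x_n‖_{M(φ̃)} < ∞ for all n, and no constant B > 0, such that ‖y‖_{M(φ̃)} ≤ B·‖y‖_{Λ(ψ)} for every y in the linear span of {x_n}. -/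
open MeasureTheory Set Filter Topology
open scoped ENNReal

noncomputable section

/-- Lebesgue measure restricted to `[0,1]`. -/
def mu01 : MeasureTheory.Measure ℝ := MeasureTheory.volume.restrict (Set.Icc (0:ℝ) 1)

/-- Distribution function of `x` on `[0,1]`: `μ{s ∈ [0,1] : |x s| > τ}`. -/
def distr (x : ℝ → ℝ) (τ : ℝ) : ℝ≥0∞ :=
  MeasureTheory.volume {s ∈ Set.Icc (0:ℝ) 1 | τ < |x s|}

/-- Decreasing rearrangement of `x` (as a function on `(0,1]`):
`x*(t) = inf{τ ≥ 0 : μ{|x| > τ} ≤ t}`. -/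
def rearr (x : ℝ → ℝ) (t : ℝ) : ℝ :=
  sInf {τ : ℝ | 0 ≤ τ ∧ distr x τ ≤ ENNReal.ofReal t}

/-- Lorentz functional `‖x‖_{Λ(ψ)} = ∫_{(0,1]} x*(s) dψ(s)` (Lebesgue–Stieltjes integral
with respect to the nondecreasing function `ψ`). -/
def lorentzNorm (ψ : ℝ → ℝ) (hψ : Monotone ψ) (x : ℝ → ℝ) : ℝ≥0∞ :=
  ∫⁻ s in Set.Ioc (0:ℝ) 1, ENNReal.ofReal (rearr x s) ∂hψ.stieltjesFunction.measure

/-- Marcinkiewicz functional `‖x‖_{M(φ̃)} = sup_{0<t≤1} (φ(t)/t) ∫₀^t x*(s) ds`,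
for `φ̃(t) = t/φ(t)`. -/
def marcNorm (φ : ℝ → ℝ) (x : ℝ → ℝ) : ℝ≥0∞ :=
  ⨆ t ∈ Set.Ioc (0:ℝ) 1,
    ENNReal.ofReal (φ t / t) * ∫⁻ s in Set.Ioc (0:ℝ) t, ENNReal.ofReal (rearr x s)

/-- Dilation function `M_f(t) = sup{f(st)/f(s) : 0 < s ≤ min(1, 1/t)}`. -/
def dilationFn (f : ℝ → ℝ) (t : ℝ) : ℝ :=
  sSup {r : ℝ | ∃ s : ℝ, 0 < s ∧ s ≤ min 1 (1/t) ∧ r = f (s * t) / f s}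

/-- Upper dilation index `δ_f = inf_{t>1} ln M_f(t) / ln t`. -/
def upperIndex (f : ℝ → ℝ) : ℝ :=
  sInf {r : ℝ | ∃ t : ℝ, 1 < t ∧ r = Real.log (dilationFn f t) / Real.log t}

/-- Lower dilation index `γ_f = sup_{0<t<1} ln M_f(t) / ln t`. -/
def lowerIndex (f : ℝ → ℝ) : ℝ :=
  sSup {r : ℝ | ∃ t : ℝ, 0 < t ∧ t < 1 ∧ r = Real.log (dilationFn f t) / Real.log t}

/-- Failure of disjoint strict singularity for the identity inclusion of the space with
functional `NE` into the space with functional `NF`: there is a sequence of nonzero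
measurable functions with pairwise disjoint supports such that `NE y ≤ B · NF y`
on their linear span. -/
def DSSFails (NE NF : (ℝ → ℝ) → ℝ≥0∞) : Prop :=
  ∃ (x : ℕ → ℝ → ℝ) (B : ℝ), 0 < B ∧
    (∀ n, Measurable (x n)) ∧
    (∀ n m, n ≠ m → ∀ᵐ s ∂mu01, x n s * x m s = 0) ∧
    (∀ n, 0 < NE (x n) ∧ NE (x n) < ⊤) ∧
    (∀ y ∈ Submodule.span ℝ (Set.range x), NE y ≤ ENNReal.ofReal B * NF y)


-- ## Auxiliary lemmas


lemma rearr_nonneg (x : ℝ → ℝ) (t : ℝ) : 0 ≤ rearr x t := by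
  unfold rearr
  rcases Set.eq_empty_or_nonempty {τ : ℝ | 0 ≤ τ ∧ distr x τ ≤ ENNReal.ofReal t} with h | h
  · simp [h]
  · exact le_csInf h fun τ hτ => hτ.1

lemma exists_distr_le {x : ℝ → ℝ} (hx : Measurable x) {u : ℝ} (hu : 0 < u) :
    ∃ τ : ℝ, 0 ≤ τ ∧ distr x τ ≤ ENNReal.ofReal u := by
  set A : ℕ → Set ℝ := fun n => {s ∈ Set.Icc (0:ℝ) 1 | (n:ℝ) < |x s|} with hA
  have hmeas : ∀ n : ℕ, NullMeasurableSet (A n) volume := fun n =>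
    (measurableSet_Icc.inter (measurableSet_lt measurable_const hx.abs)).nullMeasurableSet
  have hanti : Antitone A := by
    intro a b hab s hs
    exact ⟨hs.1, lt_of_le_of_lt (by exact_mod_cast Nat.cast_le.2 hab) hs.2⟩
  have hfin : ∃ n : ℕ, volume (A n) ≠ ∞ := by
    refine ⟨0, ?_⟩
    have : volume (A 0) ≤ volume (Set.Icc (0:ℝ) 1) := measure_mono fun s hs => hs.1
    exact (lt_of_le_of_lt this (by simp [Real.volume_Icc])).ne
  have hempty : (⋂ n, A n) = ∅ := by
    ext s; simp only [Set.mem_iInter, Set.mem_empty_iff_false, iff_false]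
    intro h
    obtain ⟨n, hn⟩ := exists_nat_gt (|x s|)
    exact absurd (h n).2 (not_lt.2 hn.le)
  have htend : Tendsto (volume ∘ A) atTop (nhds (volume (⋂ n, A n))) :=
    tendsto_measure_iInter_atTop hmeas hanti hfin
  rw [hempty] at htend; simp only [measure_empty] at htend
  have := (htend.eventually_lt_const (by simp [ENNReal.ofReal_pos, hu] :
      (0:ℝ≥0∞) < ENNReal.ofReal u)).exists
  obtain ⟨n, hn⟩ := this
  exact ⟨n, Nat.cast_nonneg n, hn.le⟩

lemma rearr_anti {x : ℝ → ℝ} (hx : Measurable x) {u s : ℝ} (hu : 0 < u) (hus : u ≤ s) :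
    rearr x s ≤ rearr x u := by
  apply csInf_le_csInf
  · exact ⟨0, fun τ hτ => hτ.1⟩
  · obtain ⟨τ, h1, h2⟩ := exists_distr_le hx hu
    exact ⟨τ, h1, h2⟩
  · intro τ hτ
    exact ⟨hτ.1, hτ.2.trans (ENNReal.ofReal_le_ofReal hus)⟩

lemma rearr_mul_phi_le_marc (φ : ℝ → ℝ) {x : ℝ → ℝ} (hx : Measurable x)
    {s : ℝ} (hs : s ∈ Set.Ioc (0:ℝ) 1) (hφs : 0 < φ s) :
    ENNReal.ofReal (rearr x s) * ENNReal.ofReal (φ s) ≤ marcNorm φ x := by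
  have key : ENNReal.ofReal (φ s / s) *
      ∫⁻ u in Set.Ioc (0:ℝ) s, ENNReal.ofReal (rearr x u) ≤ marcNorm φ x :=
    le_biSup (f := fun t => ENNReal.ofReal (φ t / t) *
      ∫⁻ u in Set.Ioc (0:ℝ) t, ENNReal.ofReal (rearr x u)) hs
  refine le_trans ?_ key
  have h1 : ENNReal.ofReal (rearr x s) * ENNReal.ofReal s ≤
      ∫⁻ u in Set.Ioc (0:ℝ) s, ENNReal.ofReal (rearr x u) := by
    have hvol : volume (Set.Ioc (0:ℝ) s) = ENNReal.ofReal s := by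
      rw [Real.volume_Ioc]; simp
    rw [← hvol, ← setLIntegral_const]
    refine setLIntegral_mono' measurableSet_Ioc fun u hu => ?_
    exact ENNReal.ofReal_le_ofReal (rearr_anti hx hu.1 hu.2)
  have h2 : ENNReal.ofReal (φ s) = ENNReal.ofReal (φ s / s) * ENNReal.ofReal s := by
    rw [← ENNReal.ofReal_mul (div_nonneg hφs.le hs.1.le), div_mul_cancel₀ _ hs.1.ne']
  calc ENNReal.ofReal (rearr x s) * ENNReal.ofReal (φ s)
      = ENNReal.ofReal (φ s / s) * (ENNReal.ofReal (rearr x s) * ENNReal.ofReal s) := by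
        rw [h2]; ring
    _ ≤ _ := mul_le_mul_right h1 _

lemma quasi_concave (φ : ℝ → ℝ) (hφpos : ∀ t ∈ Set.Ioc (0:ℝ) 1, 0 < φ t)
    (hφconc : ConcaveOn ℝ (Set.Ioc (0:ℝ) 1) φ) {a b : ℝ}
    (ha : 0 < a) (hab : a ≤ b) (hb : b ≤ 1) : a * φ b ≤ b * φ a := by
  rcases eq_or_lt_of_le hab with rfl | hab'
  · exact le_of_eq (by ring)
  have hb0 : 0 < b := ha.trans hab'
  have hφa : 0 < φ a := hφpos a ⟨ha, hab.trans hb⟩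
  have hφb : 0 < φ b := hφpos b ⟨hb0, hb⟩
  have key : ∀ c, 0 < c → c < a → (a - c) * φ b ≤ (b - c) * φ a := by
    intro c hc hca
    have hbc : 0 < b - c := by linarith
    have hmem_c : c ∈ Set.Ioc (0:ℝ) 1 := ⟨hc, by linarith⟩
    have hmem_b : b ∈ Set.Ioc (0:ℝ) 1 := ⟨hb0, hb⟩
    have hw1 : (0:ℝ) ≤ (b - a) / (b - c) := div_nonneg (by linarith) hbc.le
    have hw2 : (0:ℝ) ≤ (a - c) / (b - c) := div_nonneg (by linarith) hbc.le
    have hsum : (b - a) / (b - c) + (a - c) / (b - c) = 1 := by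
      field_simp
      ring
    have hcomb : (b - a) / (b - c) * c + (a - c) / (b - c) * b = a := by
      rw [div_mul_eq_mul_div, div_mul_eq_mul_div, ← add_div, div_eq_iff hbc.ne']
      ring
    have hcc := hφconc.2 hmem_c hmem_b hw1 hw2 hsum
    simp only [smul_eq_mul] at hcc
    rw [hcomb] at hcc
    have h1 : (b - a) / (b - c) * φ c ≥ 0 := mul_nonneg hw1 (hφpos c hmem_c).le
    have h2 : (a - c) / (b - c) * φ b ≤ φ a := by linarith
    calc (a - c) * φ b = (b - c) * ((a - c) / (b - c) * φ b) := by field_simp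
      _ ≤ (b - c) * φ a := by
          exact mul_le_mul_of_nonneg_left h2 hbc.le
  by_contra hcon
  push_neg at hcon
  set ε := a * φ b - b * φ a with hε
  have hεpos : 0 < ε := by simp only [hε]; linarith
  have key2 : ∀ c, 0 < c → c < a → ε ≤ c * φ b := by
    intro c hc hca
    have := key c hc hca
    nlinarith [mul_nonneg hc.le hφa.le]
  have hc := key2 (min (a/2) (ε/(2*φ b)))
    (lt_min (by linarith) (by positivity)) (lt_of_le_of_lt (min_le_left _ _) (by linarith))
  have h3 : min (a/2) (ε/(2*φ b)) * φ b ≤ ε/(2*φ b) * φ b :=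
    mul_le_mul_of_nonneg_right (min_le_right _ _) hφb.le
  have h4 : ε/(2*φ b) * φ b = ε / 2 := by
    field_simp
  linarith

lemma exists_dil (φ : ℝ → ℝ) (hφm : MonotoneOn φ (Set.Ioc (0:ℝ) 1))
    (hφpos : ∀ t ∈ Set.Ioc (0:ℝ) 1, 0 < φ t)
    (hφconc : ConcaveOn ℝ (Set.Ioc (0:ℝ) 1) φ) (hδ : upperIndex φ < 1) :
    ∃ t0 M : ℝ, 1 < t0 ∧ 1 ≤ M ∧ M < t0 ∧
      ∀ s, 0 < s → s * t0 ≤ 1 → φ (s * t0) ≤ M * φ s := by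
  set T := {r : ℝ | ∃ t : ℝ, 1 < t ∧ r = Real.log (dilationFn φ t) / Real.log t} with hT
  have hTne : T.Nonempty := ⟨_, 2, one_lt_two, rfl⟩
  have hex : ∃ r ∈ T, r < 1 := by
    by_cases hbd : BddBelow T
    · exact exists_lt_of_csInf_lt hTne hδ
    · obtain ⟨r, hrT, hr⟩ := not_bddBelow_iff.1 hbd 1
      exact ⟨r, hrT, hr⟩
  obtain ⟨r, ⟨t0, ht0, hreq⟩, hr1⟩ := hex
  have ht0pos : (0:ℝ) < t0 := lt_trans one_pos ht0
  have hmin : min 1 (1/t0) = 1/t0 := min_eq_right ((div_le_one ht0pos).2 ht0.le)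
  set R := {r : ℝ | ∃ s : ℝ, 0 < s ∧ s ≤ min 1 (1/t0) ∧ r = φ (s * t0) / φ s} with hR
  have hmem : ∀ s : ℝ, 0 < s → s ≤ 1/t0 →
      (s ∈ Set.Ioc (0:ℝ) 1 ∧ s * t0 ∈ Set.Ioc (0:ℝ) 1 ∧ s ≤ s * t0) := by
    intro s hs hst
    have h1 : s * t0 ≤ 1 := by
      calc s * t0 ≤ 1/t0 * t0 := mul_le_mul_of_nonneg_right hst ht0pos.le
        _ = 1 := by field_simp
    have h2 : s ≤ s * t0 := le_mul_of_one_le_right hs.le ht0.le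
    exact ⟨⟨hs, h2.trans h1⟩, ⟨by positivity, h1⟩, h2⟩
  have hub : ∀ r ∈ R, r ≤ t0 := by
    rintro _ ⟨s, hs, hsle, rfl⟩
    rw [hmin] at hsle
    obtain ⟨hm1, hm2, hm3⟩ := hmem s hs hsle
    have hq := quasi_concave φ hφpos hφconc hs hm3 hm2.2
    have hφs : 0 < φ s := hφpos s hm1
    rw [div_le_iff₀ hφs]
    nlinarith
  have hlb : ∀ r ∈ R, 1 ≤ r := by
    rintro _ ⟨s, hs, hsle, rfl⟩
    rw [hmin] at hsle
    obtain ⟨hm1, hm2, hm3⟩ := hmem s hs hsle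
    have hφs : 0 < φ s := hφpos s hm1
    rw [le_div_iff₀ hφs, one_mul]
    exact hφm hm1 hm2 hm3
  have hRne : R.Nonempty := by
    refine ⟨φ ((1/t0) * t0) / φ (1/t0), 1/t0, by positivity, le_of_eq hmin.symm, rfl⟩
  have hbddR : BddAbove R := ⟨t0, hub⟩
  set M := dilationFn φ t0 with hM
  have hM1 : 1 ≤ M := le_csSup_of_le hbddR hRne.choose_spec (hlb _ hRne.choose_spec)
  have hMt0 : M < t0 := by
    have hlogt0 : 0 < Real.log t0 := Real.log_pos ht0
    rw [hreq, div_lt_one hlogt0] at hr1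
    exact (Real.log_lt_log_iff (by linarith) ht0pos).1 hr1
  refine ⟨t0, M, ht0, hM1, hMt0, ?_⟩
  intro s hs hst
  have hsle : s ≤ 1/t0 := by
    rw [le_div_iff₀ ht0pos]; exact hst
  have hmemR : φ (s * t0) / φ s ∈ R := ⟨s, hs, by rw [hmin]; exact hsle, rfl⟩
  have := le_csSup hbddR hmemR
  have hMR : M = sSup R := rfl
  rw [← hMR] at this
  have hφs : 0 < φ s := hφpos s (hmem s hs hsle).1
  rw [div_le_iff₀ hφs] at this
  linarith

lemma iterate_bound (φ : ℝ → ℝ) {t0 M : ℝ} (ht0 : 1 < t0) (hM0 : 0 ≤ M)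
    (hdil : ∀ s, 0 < s → s * t0 ≤ 1 → φ (s * t0) ≤ M * φ s) :
    ∀ t ∈ Set.Ioc (0:ℝ) 1, ∀ k : ℕ, φ t ≤ M^k * φ (t * (1/t0)^k) := by
  intro t ht k
  induction k with
  | zero => simp
  | succ k ih =>
    have ht0pos : (0:ℝ) < t0 := lt_trans one_pos ht0
    have hq : (0:ℝ) < 1/t0 := by positivity
    have hqle : 1/t0 ≤ 1 := (div_le_one ht0pos).2 ht0.le
    have hs : (0:ℝ) < t * (1/t0)^(k+1) := mul_pos ht.1 (pow_pos hq _)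
    have hstep : t * (1/t0)^(k+1) * t0 = t * (1/t0)^k := by
      rw [pow_succ, mul_assoc, mul_assoc, one_div, inv_mul_cancel₀ ht0pos.ne', mul_one]
    have hle1 : t * (1/t0)^(k+1) * t0 ≤ 1 := by
      rw [hstep]
      calc t * (1/t0)^k ≤ 1 * 1 := by
            apply mul_le_mul ht.2 (pow_le_one₀ hq.le hqle) (by positivity) zero_le_one
        _ = 1 := by ring
    have := hdil _ hs hle1
    rw [hstep] at this
    calc φ t ≤ M^k * φ (t * (1/t0)^k) := ih
      _ ≤ M^k * (M * φ (t * (1/t0)^(k+1))) := mul_le_mul_of_nonneg_left this (by positivity)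
      _ = M^(k+1) * φ (t * (1/t0)^(k+1)) := by ring

lemma integral_inv_phi_bound (φ : ℝ → ℝ) (hφm : MonotoneOn φ (Set.Ioc (0:ℝ) 1))
    (hφpos : ∀ t ∈ Set.Ioc (0:ℝ) 1, 0 < φ t)
    (hφconc : ConcaveOn ℝ (Set.Ioc (0:ℝ) 1) φ) (hδ : upperIndex φ < 1) :
    ∃ C : ℝ, 0 < C ∧ ∀ t ∈ Set.Ioc (0:ℝ) 1,
      (∫⁻ s in Set.Ioc (0:ℝ) t, ENNReal.ofReal ((φ s)⁻¹)) ≤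
        ENNReal.ofReal (C * (t / φ t)) := by
  obtain ⟨t0, M, ht0, hM1, hMt0, hdil⟩ := exists_dil φ hφm hφpos hφconc hδ
  have ht0pos : (0:ℝ) < t0 := lt_trans one_pos ht0
  set q : ℝ := 1/t0 with hqdef
  have hq : (0:ℝ) < q := by positivity
  have hq1 : q < 1 := by rw [hqdef, div_lt_one ht0pos]; exact ht0
  have hqM : q * M < 1 := by
    rw [hqdef]
    rw [div_mul_eq_mul_div, one_mul, div_lt_one ht0pos]
    exact hMt0
  have hqM0 : 0 ≤ q * M := by positivity
  refine ⟨M * (1 - q*M)⁻¹, mul_pos (by linarith) (inv_pos.2 (by linarith)), ?_⟩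
  intro t ht
  have hiter := iterate_bound φ ht0 (by linarith) hdil t ht
  set I : ℕ → Set ℝ := fun k => Set.Ioc (t * q^(k+1)) (t * q^k) with hI
  have htq : ∀ k : ℕ, t * q^k ∈ Set.Ioc (0:ℝ) 1 := by
    intro k
    constructor
    · exact mul_pos ht.1 (pow_pos hq k)
    · calc t * q^k ≤ 1 * 1 :=
            mul_le_mul ht.2 (pow_le_one₀ hq.le hq1.le) (by positivity) zero_le_one
        _ = 1 := by ring
  have hunion : (⋃ k, I k) = Set.Ioc (0:ℝ) t := by
    ext s
    simp only [Set.mem_iUnion, hI, Set.mem_Ioc]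
    constructor
    · rintro ⟨k, h1, h2⟩
      refine ⟨lt_of_le_of_lt (mul_pos ht.1 (pow_pos hq _)).le h1, h2.trans ?_⟩
      calc t * q^k ≤ t * 1 := mul_le_mul_of_nonneg_left (pow_le_one₀ hq.le hq1.le) ht.1.le
        _ = t := by ring
    · rintro ⟨h1, h2⟩
      have hP : ∃ k : ℕ, t * q^k < s := by
        obtain ⟨k, hk⟩ := exists_pow_lt_of_lt_one (div_pos h1 ht.1) hq1
        exact ⟨k, by rwa [← lt_div_iff₀' ht.1]⟩
      set k0 := Nat.find hP with hk0
      have hk0spec : t * q^k0 < s := Nat.find_spec hP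
      have hk0pos : 0 < k0 := by
        rcases Nat.eq_zero_or_pos k0 with h | h
        · exfalso
          rw [h] at hk0spec
          simp only [pow_zero, mul_one] at hk0spec
          linarith
        · exact h
      refine ⟨k0 - 1, ?_, ?_⟩
      · have : k0 - 1 + 1 = k0 := Nat.succ_pred_eq_of_pos hk0pos
        rw [this]
        exact hk0spec
      · have := Nat.find_min hP (Nat.pred_lt hk0pos.ne')
        push_neg at this
        exact this
  have hdisj : Pairwise (Function.onFun Disjoint I) := by
    have key : ∀ i j : ℕ, i < j → Disjoint (I i) (I j) := by
      intro i j hij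
      rw [hI, Set.Ioc_disjoint_Ioc]
      have : t * q^j ≤ t * q^(i+1) :=
        mul_le_mul_of_nonneg_left (pow_le_pow_of_le_one hq.le hq1.le hij) ht.1.le
      calc min (t * q^i) (t * q^j) ≤ t * q^j := min_le_right _ _
        _ ≤ t * q^(i+1) := this
        _ ≤ max (t * q^(i+1)) (t * q^(j+1)) := le_max_left _ _
    intro i j hij
    rcases hij.lt_or_gt with h | h
    · exact key i j h
    · exact (key j i h).symm
  have hsplit : (∫⁻ s in Set.Ioc (0:ℝ) t, ENNReal.ofReal ((φ s)⁻¹)) =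
      ∑' k : ℕ, ∫⁻ s in I k, ENNReal.ofReal ((φ s)⁻¹) := by
    rw [← hunion, lintegral_iUnion (fun k => measurableSet_Ioc) hdisj]
  rw [hsplit]
  have hφt : 0 < φ t := hφpos t ht
  have hpiece : ∀ k : ℕ, (∫⁻ s in I k, ENNReal.ofReal ((φ s)⁻¹)) ≤
      ENNReal.ofReal (M * t / φ t) * (ENNReal.ofReal (q*M))^k := by
    intro k
    have hbnd : ∀ s ∈ I k, ENNReal.ofReal ((φ s)⁻¹) ≤ ENNReal.ofReal (M^(k+1) / φ t) := by
      intro s hs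
      rw [hI] at hs
      have hsm : s ∈ Set.Ioc (0:ℝ) 1 := by
        constructor
        · exact lt_of_le_of_lt (mul_pos ht.1 (pow_pos hq _)).le hs.1
        · exact hs.2.trans (htq k).2
      have hP : 0 < φ (t * q^(k+1)) := hφpos _ (htq (k+1))
      have hφs : φ (t * q^(k+1)) ≤ φ s := hφm (htq (k+1)) hsm hs.1.le
      have h1 : (φ s)⁻¹ ≤ (φ (t * q^(k+1)))⁻¹ := by
        apply inv_anti₀ hP hφs
      have h2 : (φ (t * q^(k+1)))⁻¹ ≤ M^(k+1) / φ t := by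
        rw [le_div_iff₀ hφt, inv_mul_le_iff₀ hP]
        calc φ t ≤ M^(k+1) * φ (t * q^(k+1)) := hiter (k+1)
          _ = φ (t * q^(k+1)) * M^(k+1) := by ring
      exact ENNReal.ofReal_le_ofReal (h1.trans h2)
    calc (∫⁻ s in I k, ENNReal.ofReal ((φ s)⁻¹))
        ≤ ∫⁻ _ in I k, ENNReal.ofReal (M^(k+1) / φ t) :=
          setLIntegral_mono' measurableSet_Ioc hbnd
      _ = ENNReal.ofReal (M^(k+1) / φ t) * volume (I k) := setLIntegral_const _ _
      _ ≤ ENNReal.ofReal (M^(k+1) / φ t) * ENNReal.ofReal (t * q^k) := by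
          apply mul_le_mul_right
          rw [hI, Real.volume_Ioc]
          apply ENNReal.ofReal_le_ofReal
          nlinarith [pow_pos hq (k+1), ht.1]
      _ = ENNReal.ofReal (M^(k+1) / φ t * (t * q^k)) :=
          (ENNReal.ofReal_mul (by positivity)).symm
      _ = ENNReal.ofReal ((M * t / φ t) * (q*M)^k) := by
          congr 1
          field_simp
          ring
      _ = ENNReal.ofReal (M * t / φ t) * (ENNReal.ofReal (q*M))^k := by
          rw [ENNReal.ofReal_mul (div_nonneg (mul_nonneg (by linarith) ht.1.le) hφt.le), ENNReal.ofReal_pow hqM0]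
  calc (∑' k : ℕ, ∫⁻ s in I k, ENNReal.ofReal ((φ s)⁻¹))
      ≤ ∑' k : ℕ, ENNReal.ofReal (M * t / φ t) * (ENNReal.ofReal (q*M))^k :=
        ENNReal.tsum_le_tsum hpiece
    _ = ENNReal.ofReal (M * t / φ t) * (1 - ENNReal.ofReal (q*M))⁻¹ := by
        rw [ENNReal.tsum_mul_left, ENNReal.tsum_geometric]
    _ = ENNReal.ofReal (M * t / φ t) * ENNReal.ofReal ((1 - q*M)⁻¹) := by
        congr 1
        rw [show (1:ℝ≥0∞) = ENNReal.ofReal 1 from ENNReal.ofReal_one.symm,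
          ← ENNReal.ofReal_sub _ hqM0]
        exact (ENNReal.ofReal_inv_of_pos (by linarith)).symm
    _ = ENNReal.ofReal ((M * t / φ t) * (1 - q*M)⁻¹) :=
        (ENNReal.ofReal_mul (div_nonneg (mul_nonneg (by linarith) ht.1.le) hφt.le)).symm
    _ = ENNReal.ofReal ((M * (1 - q*M)⁻¹) * (t / φ t)) := by
        congr 1
        ring

def hfun (φ : ℝ → ℝ) : ℝ → ℝ := fun s => if 0 < s then (φ (min s 1))⁻¹ else 0

section hfun_props

variable {φ : ℝ → ℝ} (hφm : MonotoneOn φ (Set.Ioc (0:ℝ) 1))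
  (hφpos : ∀ t ∈ Set.Ioc (0:ℝ) 1, 0 < φ t)

include hφpos in
lemma hfun_nonneg : ∀ s, 0 ≤ hfun φ s := by
  intro s
  unfold hfun
  split_ifs with h
  · exact (inv_pos.2 (hφpos _ ⟨lt_min h one_pos, min_le_right _ _⟩)).le
  · exact le_rfl

lemma hfun_eq {s : ℝ} (hs : s ∈ Set.Ioc (0:ℝ) 1) : hfun φ s = (φ s)⁻¹ := by
  unfold hfun
  rw [if_pos hs.1, min_eq_left hs.2]

include hφm hφpos in
lemma hfun_anti : ∀ u v : ℝ, 0 < u → u ≤ v → hfun φ v ≤ hfun φ u := by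
  intro u v hu huv
  unfold hfun
  rw [if_pos hu, if_pos (lt_of_lt_of_le hu huv)]
  have h1 : min u 1 ∈ Set.Ioc (0:ℝ) 1 := ⟨lt_min hu one_pos, min_le_right _ _⟩
  have h2 : min v 1 ∈ Set.Ioc (0:ℝ) 1 := ⟨lt_min (lt_of_lt_of_le hu huv) one_pos, min_le_right _ _⟩
  exact inv_anti₀ (hφpos _ h1) (hφm h1 h2 (min_le_min huv le_rfl))

include hφm hφpos in
lemma hfun_measurable : Measurable (hfun φ) := by
  apply measurable_of_Ioi
  intro a
  have : Set.OrdConnected ((hfun φ) ⁻¹' Set.Ioi a) := by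
    constructor
    intro p hp q hq z hz
    simp only [Set.mem_preimage, Set.mem_Ioi] at *
    rcases lt_or_ge a 0 with ha | ha
    · exact lt_of_lt_of_le ha (hfun_nonneg hφpos z)
    · have hp0 : 0 < p := by
        by_contra h
        push_neg at h
        have : hfun φ p = 0 := by unfold hfun; rw [if_neg (not_lt.2 h)]
        rw [this] at hp
        exact absurd hp (not_lt.2 ha)
      have hz0 : 0 < z := lt_of_lt_of_le hp0 hz.1
      exact lt_of_lt_of_le hq (hfun_anti hφm hφpos z q hz0 hz.2)
  exact this.measurableSet

include hφm hφpos in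
lemma rearr_hfun_le {t : ℝ} (ht : t ∈ Set.Ioc (0:ℝ) 1) :
    rearr (hfun φ) t ≤ (φ t)⁻¹ := by
  have hφt : 0 < φ t := hφpos t ht
  apply csInf_le ⟨0, fun τ hτ => hτ.1⟩
  refine ⟨(inv_pos.2 hφt).le, ?_⟩
  unfold distr
  have hsub : {s ∈ Set.Icc (0:ℝ) 1 | (φ t)⁻¹ < |hfun φ s|} ⊆ Set.Ico (0:ℝ) t := by
    rintro s ⟨hs1, hs2⟩
    have hs0 : 0 < s := by
      by_contra h
      push_neg at h
      have : hfun φ s = 0 := by unfold hfun; rw [if_neg (not_lt.2 h)]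
      rw [this] at hs2
      simp at hs2
      exact absurd hs2 (not_lt.2 hφt.le)
    have hsm : s ∈ Set.Ioc (0:ℝ) 1 := ⟨hs0, hs1.2⟩
    rw [hfun_eq hsm, abs_of_nonneg (inv_pos.2 (hφpos s hsm)).le] at hs2
    have hφst : φ s < φ t := by
      by_contra h
      push_neg at h
      exact absurd hs2 (not_lt.2 (inv_anti₀ hφt h))
    have hst : s < t := by
      by_contra h
      push_neg at h
      exact absurd (hφm ht hsm h) (not_le.2 hφst)
    exact ⟨hs1.1, hst⟩
  calc volume {s ∈ Set.Icc (0:ℝ) 1 | (φ t)⁻¹ < |hfun φ s|} ≤ volume (Set.Ico (0:ℝ) t) :=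
        measure_mono hsub
    _ = ENNReal.ofReal t := by rw [Real.volume_Ico]; simp

include hφm hφpos in
lemma rearr_hfun_ge {t t' : ℝ} (ht : 0 < t) (htt' : t < t') (ht' : t' ≤ 1) :
    (φ t')⁻¹ ≤ rearr (hfun φ) t := by
  have htm : t ∈ Set.Ioc (0:ℝ) 1 := ⟨ht, by linarith⟩
  apply le_csInf
  · exact ⟨(φ t)⁻¹, (inv_pos.2 (hφpos t htm)).le, by
      have := rearr_hfun_le hφm hφpos htm
      -- we reprove membership: distr (hfun φ) ((φ t)⁻¹) ≤ ofReal t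
      unfold distr
      have hsub : {s ∈ Set.Icc (0:ℝ) 1 | (φ t)⁻¹ < |hfun φ s|} ⊆ Set.Ico (0:ℝ) t := by
        rintro s ⟨hs1, hs2⟩
        have hs0 : 0 < s := by
          by_contra h
          push_neg at h
          have : hfun φ s = 0 := by unfold hfun; rw [if_neg (not_lt.2 h)]
          rw [this] at hs2
          simp at hs2
          exact absurd hs2 (not_lt.2 (hφpos t htm).le)
        have hsm : s ∈ Set.Ioc (0:ℝ) 1 := ⟨hs0, hs1.2⟩
        rw [hfun_eq hsm, abs_of_nonneg (inv_pos.2 (hφpos s hsm)).le] at hs2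
        have hφst : φ s < φ t := by
          by_contra h
          push_neg at h
          exact absurd hs2 (not_lt.2 (inv_anti₀ (hφpos t htm) h))
        have hst : s < t := by
          by_contra h
          push_neg at h
          exact absurd (hφm htm hsm h) (not_le.2 hφst)
        exact ⟨hs1.1, hst⟩
      calc volume {s ∈ Set.Icc (0:ℝ) 1 | (φ t)⁻¹ < |hfun φ s|} ≤ volume (Set.Ico (0:ℝ) t) :=
            measure_mono hsub
        _ = ENNReal.ofReal t := by rw [Real.volume_Ico]; simp⟩
  · rintro τ ⟨hτ0, hτd⟩
    by_contra hlt
    push_neg at hlt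
    have hsub : Set.Ioc (0:ℝ) t' ⊆ {s ∈ Set.Icc (0:ℝ) 1 | τ < |hfun φ s|} := by
      intro s hs
      have hsm : s ∈ Set.Ioc (0:ℝ) 1 := ⟨hs.1, hs.2.trans ht'⟩
      refine ⟨⟨hs.1.le, hsm.2⟩, ?_⟩
      rw [hfun_eq hsm, abs_of_nonneg (inv_pos.2 (hφpos s hsm)).le]
      have ht'm : t' ∈ Set.Ioc (0:ℝ) 1 := ⟨lt_trans ht htt', ht'⟩
      have : (φ t')⁻¹ ≤ (φ s)⁻¹ := inv_anti₀ (hφpos s hsm) (hφm hsm ht'm hs.2)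
      exact lt_of_lt_of_le hlt this
    have hge : ENNReal.ofReal t' ≤ distr (hfun φ) τ := by
      unfold distr
      calc ENNReal.ofReal t' = volume (Set.Ioc (0:ℝ) t') := by rw [Real.volume_Ioc]; simp
        _ ≤ _ := measure_mono hsub
    have := hge.trans hτd
    rw [ENNReal.ofReal_le_ofReal_iff (by linarith)] at this
    linarith

include hφm hφpos in
lemma inv_phi_le_rearr_hfun {s : ℝ} (hs : s ∈ Set.Ioo (0:ℝ) 1)
    (hφconc : ConcaveOn ℝ (Set.Ioc (0:ℝ) 1) φ) :
    (φ s)⁻¹ ≤ rearr (hfun φ) s := by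
  set r := rearr (hfun φ) s with hr
  have hr0 : 0 ≤ r := rearr_nonneg _ _
  have hsm : s ∈ Set.Ioc (0:ℝ) 1 := ⟨hs.1, hs.2.le⟩
  have hφs : 0 < φ s := hφpos s hsm
  have key : ∀ t', s < t' → t' ≤ 1 → (φ s)⁻¹ ≤ (t'/s) * r := by
    intro t' hst' ht'
    have ht'm : t' ∈ Set.Ioc (0:ℝ) 1 := ⟨lt_trans hs.1 hst', ht'⟩
    have hφt' : 0 < φ t' := hφpos t' ht'm
    have h1 : (φ t')⁻¹ ≤ r := rearr_hfun_ge hφm hφpos hs.1 hst' ht'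
    have h2 : (φ s)⁻¹ ≤ (t'/s) * (φ t')⁻¹ := by
      rw [div_mul_eq_mul_div, le_div_iff₀ hs.1, inv_mul_le_iff₀ hφs]
      have hqc := quasi_concave φ hφpos hφconc hs.1 hst'.le ht'
      calc s = s * φ t' * (φ t')⁻¹ := by field_simp
        _ ≤ t' * φ s * (φ t')⁻¹ := mul_le_mul_of_nonneg_right hqc (inv_pos.2 hφt').le
        _ = φ s * (t' * (φ t')⁻¹) := by ring
    exact h2.trans (mul_le_mul_of_nonneg_left h1 (div_nonneg (by linarith [hs.1]) hs.1.le))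
  by_contra hcon
  push_neg at hcon
  rcases eq_or_lt_of_le hr0 with hreq | hrpos
  · have := key ((s+1)/2) (by linarith [hs.2]) (by linarith [hs.2])
    rw [← hreq] at this
    simp at this
    exact absurd this (not_le.2 hφs)
  · set β := s * (φ s)⁻¹ / r with hβ
    have hsβ : s < β := by
      rw [hβ, lt_div_iff₀ hrpos]
      calc s * r < s * (φ s)⁻¹ := by
            exact mul_lt_mul_of_pos_left hcon hs.1
        _ = s * (φ s)⁻¹ := rfl
    set t' := min 1 ((s + β)/2) with ht'
    have ht'1 : t' ≤ 1 := min_le_left _ _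
    have hst' : s < t' := lt_min hs.2 (by linarith)
    have ht'β : t' < β := lt_of_le_of_lt (min_le_right _ _) (by linarith)
    have hk := key t' hst' ht'1
    have hlt : (t'/s) * r < (β/s) * r := by
      apply mul_lt_mul_of_pos_right _ hrpos
      exact (div_lt_div_iff_of_pos_right hs.1).2 ht'β
    have heq : (β/s) * r = (φ s)⁻¹ := by
      have hrne : r ≠ 0 := hrpos.ne'
      have hsne : s ≠ 0 := hs.1.ne'
      have hφne : φ s ≠ 0 := hφs.ne'
      rw [hβ]
      field_simp
    linarith


/-- **Theorem 4.** If `φ, ψ ∈ G` satisfy condition (A), `δ_φ < 1`, and `M(φ̃) ⊆ Λ(ψ)`, then the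
identity inclusion `I : M(φ̃) → Λ(ψ)` is disjointly strictly singular. -/
theorem marcinkiewicz_into_lorentz_DSS
    (φ ψ : ℝ → ℝ)
    (hφm : MonotoneOn φ (Set.Ioc (0:ℝ) 1)) (hφpos : ∀ t ∈ Set.Ioc (0:ℝ) 1, 0 < φ t)
    (hφconc : ConcaveOn ℝ (Set.Ioc (0:ℝ) 1) φ)
    (hψm : Monotone ψ) (hψpos : ∀ t ∈ Set.Ioc (0:ℝ) 1, 0 < ψ t)
    (hψconc : ConcaveOn ℝ (Set.Ioc (0:ℝ) 1) ψ) (hψ1 : ∀ t : ℝ, 1 ≤ t → ψ t = ψ 1)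
    (hA : Filter.Tendsto (fun t => ψ t / φ t) (nhdsWithin 0 (Set.Ioi 0)) (nhds 0))
    (hδ : upperIndex φ < 1)
    (hincl : ∀ x : ℝ → ℝ, Measurable x → marcNorm φ x < ⊤ → lorentzNorm ψ hψm x < ⊤) :
    ¬ DSSFails (marcNorm φ) (lorentzNorm ψ hψm) := by
  rintro ⟨x, B, hB, hxm, hdisj, hxne, hspan⟩
  set μψ := hψm.stieltjesFunction.measure with hμψ
  set g : ℝ → ℝ≥0∞ := fun s => ENNReal.ofReal (hfun φ s) with hg
  have hgm : Measurable g := (hfun_measurable hφm hφpos).ennreal_ofReal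
  have hμψfin : μψ (Set.Ioc (0:ℝ) 1) < ⊤ := by
    rw [hμψ, StieltjesFunction.measure_Ioc]
    exact ENNReal.ofReal_lt_top
  -- Step 1: marcNorm of hfun φ is finite
  obtain ⟨C, hC, hCbound⟩ := integral_inv_phi_bound φ hφm hφpos hφconc hδ
  have hmarc_h : marcNorm φ (hfun φ) < ⊤ := by
    have : marcNorm φ (hfun φ) ≤ ENNReal.ofReal C := by
      refine iSup₂_le fun t ht => ?_
      have hφt : 0 < φ t := hφpos t ht
      have h1 : (∫⁻ s in Set.Ioc (0:ℝ) t, ENNReal.ofReal (rearr (hfun φ) s)) ≤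
          ∫⁻ s in Set.Ioc (0:ℝ) t, ENNReal.ofReal ((φ s)⁻¹) := by
        refine setLIntegral_mono' measurableSet_Ioc fun s hsi => ?_
        exact ENNReal.ofReal_le_ofReal
          (rearr_hfun_le hφm hφpos ⟨hsi.1, hsi.2.trans ht.2⟩)
      calc ENNReal.ofReal (φ t / t) * ∫⁻ s in Set.Ioc (0:ℝ) t, ENNReal.ofReal (rearr (hfun φ) s)
          ≤ ENNReal.ofReal (φ t / t) * ENNReal.ofReal (C * (t / φ t)) :=
            mul_le_mul_right (h1.trans (hCbound t ht)) _
        _ = ENNReal.ofReal (φ t / t * (C * (t / φ t))) :=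
            (ENNReal.ofReal_mul (div_nonneg hφt.le ht.1.le)).symm
        _ = ENNReal.ofReal C := by
            congr 1
            field_simp
            exact div_self ht.1.ne'
    exact lt_of_le_of_lt this ENNReal.ofReal_lt_top
  -- Step 2: lorentzNorm of hfun φ is finite, hence ν (Ioc 0 1) < ⊤
  have hlor_h : lorentzNorm ψ hψm (hfun φ) < ⊤ :=
    hincl _ (hfun_measurable hφm hφpos) hmarc_h
  set ν := μψ.withDensity g with hν
  have hνIoc : ∀ σ : ℝ, ν (Set.Ioc 0 σ) = ∫⁻ s in Set.Ioc (0:ℝ) σ, g s ∂μψ := fun σ =>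
    withDensity_apply g measurableSet_Ioc
  have hνfin : ν (Set.Ioc (0:ℝ) 1) < ⊤ := by
    rw [hνIoc]
    have hsplit : Set.Ioc (0:ℝ) 1 = Set.Ioo (0:ℝ) 1 ∪ {1} := (Set.Ioo_union_right one_pos).symm
    rw [hsplit, lintegral_union (measurableSet_singleton 1)
      (Set.disjoint_singleton_right.2 (by simp))]
    have hpart1 : (∫⁻ s in Set.Ioo (0:ℝ) 1, g s ∂μψ) ≤ lorentzNorm ψ hψm (hfun φ) := by
      have h1 : (∫⁻ s in Set.Ioo (0:ℝ) 1, g s ∂μψ) ≤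
          ∫⁻ s in Set.Ioo (0:ℝ) 1, ENNReal.ofReal (rearr (hfun φ) s) ∂μψ := by
        refine setLIntegral_mono' measurableSet_Ioo fun s hsi => ?_
        rw [hg]
        simp only
        rw [hfun_eq ⟨hsi.1, hsi.2.le⟩]
        exact ENNReal.ofReal_le_ofReal (inv_phi_le_rearr_hfun hφm hφpos hsi hφconc)
      exact h1.trans (lintegral_mono_set Set.Ioo_subset_Ioc_self)
    have hpart2 : (∫⁻ s in ({1} : Set ℝ), g s ∂μψ) < ⊤ := by
      rw [lintegral_singleton]
      exact ENNReal.mul_lt_top ENNReal.ofReal_lt_top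
        (lt_of_le_of_lt (measure_mono (by simp)) hμψfin)
    exact ENNReal.add_lt_top.2 ⟨lt_of_le_of_lt hpart1 hlor_h, hpart2⟩
  -- Step 3: tails of ν are small
  set ε0 : ℝ≥0∞ := (2 * ENNReal.ofReal B)⁻¹ with hε0
  have hBpos : (0:ℝ≥0∞) < ENNReal.ofReal B := ENNReal.ofReal_pos.2 hB
  have hε0pos : 0 < ε0 := by
    rw [hε0]
    simp only [ENNReal.inv_pos]
    exact ENNReal.mul_ne_top (by simp) ENNReal.ofReal_ne_top
  obtain ⟨k, hk⟩ : ∃ k : ℕ, ν (Set.Ioc (0:ℝ) (1/(k+1))) < ε0 := by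
    set A : ℕ → Set ℝ := fun k => Set.Ioc (0:ℝ) (1/(k+1)) with hA
    have hAm : ∀ k, NullMeasurableSet (A k) ν := fun k => measurableSet_Ioc.nullMeasurableSet
    have hAanti : Antitone A := by
      intro a b hab s hsmem
      refine ⟨hsmem.1, hsmem.2.trans ?_⟩
      apply one_div_le_one_div_of_le
      · positivity
      · have := (Nat.cast_le (α := ℝ)).2 hab
        linarith
    have hAfin : ∃ k, ν (A k) ≠ ⊤ := by
      refine ⟨0, ?_⟩
      have : A 0 = Set.Ioc (0:ℝ) 1 := by rw [hA]; norm_num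
      rw [this]; exact hνfin.ne
    have hAempty : (⋂ k, A k) = ∅ := by
      ext s
      simp only [Set.mem_iInter, Set.mem_empty_iff_false, iff_false]
      intro h
      have hs0 : 0 < s := (h 0).1
      obtain ⟨n, hn⟩ := exists_nat_gt (1/s)
      have := (h n).2
      have hn1 : 1/s < n + 1 := by linarith [Nat.cast_nonneg (α := ℝ) n]
      have : s ≤ 1/(n+1) := (h n).2
      rw [div_lt_iff₀ hs0] at hn1
      rw [le_div_iff₀ (by positivity)] at this
      nlinarith
    have htend : Tendsto (ν ∘ A) atTop (nhds (ν (⋂ k, A k))) :=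
      tendsto_measure_iInter_atTop hAm hAanti hAfin
    rw [hAempty] at htend
    simp only [measure_empty] at htend
    exact (htend.eventually_lt_const hε0pos).exists
  set σ : ℝ := 1/(k+1) with hσ
  have hσpos : 0 < σ := by positivity
  have hσ1 : σ ≤ 1 := by
    rw [hσ]
    rw [div_le_one (by positivity)]
    linarith [Nat.cast_nonneg (α := ℝ) k]
  -- Step 4: find n with small support
  set E : ℕ → Set ℝ := fun n => {s | x n s ≠ 0} with hE
  have hEm : ∀ n, MeasurableSet (E n) := fun n =>
    ((hxm n) (measurableSet_singleton 0)).compl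
  obtain ⟨n, hn⟩ : ∃ n, mu01 (E n) < ENNReal.ofReal σ := by
    set E' : ℕ → Set ℝ := fun n => E n \ ⋃ (m : ℕ) (_ : m < n), E m with hE'
    have hE'm : ∀ n, MeasurableSet (E' n) := fun n =>
      (hEm n).diff (MeasurableSet.iUnion fun m => MeasurableSet.iUnion fun _ => hEm m)
    have hE'disj : Pairwise (Function.onFun Disjoint E') := by
      have key : ∀ i j : ℕ, i < j → Disjoint (E' i) (E' j) := by
        intro i j hij
        rw [Set.disjoint_left]
        intro a ha ha'
        have h1 : a ∈ E i := ha.1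
        exact ha'.2 (Set.mem_iUnion.2 ⟨i, Set.mem_iUnion.2 ⟨hij, h1⟩⟩)
      intro i j hij
      rcases hij.lt_or_gt with h | h
      · exact key i j h
      · exact (key j i h).symm
    have hnull : ∀ i j, i ≠ j → mu01 (E i ∩ E j) = 0 := by
      intro i j hij
      have := hdisj i j hij
      rw [ae_iff] at this
      refine measure_mono_null ?_ this
      intro a ha
      simp only [Set.mem_setOf_eq]
      exact mul_ne_zero ha.1 ha.2
    have hle : ∀ n, mu01 (E n) ≤ mu01 (E' n) := by
      intro n
      have hcover : E n ⊆ E' n ∪ (E n ∩ ⋃ (m : ℕ) (_ : m < n), E m) := by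
        intro a ha
        by_cases h : a ∈ ⋃ (m : ℕ) (_ : m < n), E m
        · exact Or.inr ⟨ha, h⟩
        · exact Or.inl ⟨ha, h⟩
      calc mu01 (E n) ≤ mu01 (E' n) + mu01 (E n ∩ ⋃ (m : ℕ) (_ : m < n), E m) :=
            le_trans (measure_mono hcover) (measure_union_le _ _)
        _ = mu01 (E' n) := by
            have : mu01 (E n ∩ ⋃ (m : ℕ) (_ : m < n), E m) = 0 := by
              have hsub : E n ∩ (⋃ (m : ℕ) (_ : m < n), E m) ⊆
                  ⋃ (m : ℕ) (_ : m < n), E n ∩ E m := by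
                rintro a ⟨ha1, ha2⟩
                obtain ⟨m, hm⟩ := Set.mem_iUnion.1 ha2
                obtain ⟨hmn, ham⟩ := Set.mem_iUnion.1 hm
                exact Set.mem_iUnion.2 ⟨m, Set.mem_iUnion.2 ⟨hmn, ha1, ham⟩⟩
              refine measure_mono_null hsub ?_
              refine measure_iUnion_null fun m => measure_iUnion_null fun hmn => ?_
              exact hnull n m (Nat.ne_of_gt hmn)
            rw [this, add_zero]
    have hsum : (∑' m, mu01 (E m)) ≠ ⊤ := by
      have h1 : (∑' m, mu01 (E m)) ≤ ∑' m, mu01 (E' m) := ENNReal.tsum_le_tsum hle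
      have h2 : (∑' m, mu01 (E' m)) = mu01 (⋃ m, E' m) := (measure_iUnion hE'disj hE'm).symm
      have h3 : mu01 (⋃ m, E' m) ≤ mu01 Set.univ := measure_mono (Set.subset_univ _)
      have h4 : mu01 Set.univ < ⊤ := by
        rw [mu01, Measure.restrict_apply_univ, Real.volume_Icc]
        exact ENNReal.ofReal_lt_top
      exact (h1.trans_lt (h2 ▸ h3.trans_lt h4)).ne
    have := ENNReal.tendsto_atTop_zero_of_tsum_ne_top hsum
    exact (this.eventually_lt_const (ENNReal.ofReal_pos.2 hσpos)).exists
  -- Step 5: rearr (x n) vanishes beyond σ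
  have hzero : ∀ s : ℝ, σ < s → rearr (x n) s = 0 := by
    intro s hσs
    have hd : distr (x n) 0 ≤ ENNReal.ofReal s := by
      have h1 : distr (x n) 0 ≤ mu01 (E n) := by
        unfold distr
        rw [mu01, Measure.restrict_apply (hEm n)]
        exact measure_mono fun a ha => ⟨abs_pos.1 ha.2, ha.1⟩
      calc distr (x n) 0 ≤ mu01 (E n) := h1
        _ ≤ ENNReal.ofReal σ := hn.le
        _ ≤ ENNReal.ofReal s := ENNReal.ofReal_le_ofReal hσs.le
    have hmem : (0:ℝ) ∈ {τ : ℝ | 0 ≤ τ ∧ distr (x n) τ ≤ ENNReal.ofReal s} := ⟨le_rfl, hd⟩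
    exact le_antisymm (csInf_le ⟨0, fun τ hτ => hτ.1⟩ hmem) (rearr_nonneg _ _)
  -- Step 6: Lorentz norm of x n is controlled
  set Mn := marcNorm φ (x n) with hMn
  obtain ⟨hMnpos, hMntop⟩ := hxne n
  have hlor_bound : lorentzNorm ψ hψm (x n) ≤ Mn * ν (Set.Ioc (0:ℝ) σ) := by
    have hsplit : Set.Ioc (0:ℝ) 1 = Set.Ioc (0:ℝ) σ ∪ Set.Ioc σ 1 :=
      (Set.Ioc_union_Ioc_eq_Ioc hσpos.le hσ1).symm
    have : lorentzNorm ψ hψm (x n) = (∫⁻ s in Set.Ioc (0:ℝ) σ,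
        ENNReal.ofReal (rearr (x n) s) ∂μψ) + ∫⁻ s in Set.Ioc σ 1,
        ENNReal.ofReal (rearr (x n) s) ∂μψ := by
      rw [lorentzNorm, hsplit, lintegral_union measurableSet_Ioc (Set.Ioc_disjoint_Ioc_of_le le_rfl)]
    rw [this]
    have hzero2 : (∫⁻ s in Set.Ioc σ 1, ENNReal.ofReal (rearr (x n) s) ∂μψ) = 0 := by
      refine le_antisymm ?_ zero_le
      calc (∫⁻ s in Set.Ioc σ 1, ENNReal.ofReal (rearr (x n) s) ∂μψ)
          ≤ ∫⁻ _ in Set.Ioc σ 1, (0:ℝ≥0∞) ∂μψ :=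
            setLIntegral_mono' measurableSet_Ioc fun s hsi => by rw [hzero s hsi.1]; simp
        _ = 0 := by simp
    rw [hzero2, add_zero]
    have hptwise : ∀ s ∈ Set.Ioc (0:ℝ) σ, ENNReal.ofReal (rearr (x n) s) ≤ Mn * g s := by
      intro s hsi
      have hsm : s ∈ Set.Ioc (0:ℝ) 1 := ⟨hsi.1, hsi.2.trans hσ1⟩
      have hφs : 0 < φ s := hφpos s hsm
      have hkey := rearr_mul_phi_le_marc φ (hxm n) hsm hφs
      have hgs : g s = (ENNReal.ofReal (φ s))⁻¹ := by
        rw [hg]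
        simp only
        rw [hfun_eq hsm, ENNReal.ofReal_inv_of_pos hφs]
      rw [hgs, ← div_eq_mul_inv]
      exact (ENNReal.le_div_iff_mul_le (Or.inl (ENNReal.ofReal_pos.2 hφs).ne')
        (Or.inl ENNReal.ofReal_ne_top)).2 hkey
    calc (∫⁻ s in Set.Ioc (0:ℝ) σ, ENNReal.ofReal (rearr (x n) s) ∂μψ)
        ≤ ∫⁻ s in Set.Ioc (0:ℝ) σ, Mn * g s ∂μψ :=
          setLIntegral_mono' measurableSet_Ioc hptwise
      _ = Mn * ∫⁻ s in Set.Ioc (0:ℝ) σ, g s ∂μψ := lintegral_const_mul Mn hgm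
      _ = Mn * ν (Set.Ioc (0:ℝ) σ) := by rw [hνIoc]
  -- Step 7: contradiction
  have hxn_mem : x n ∈ Submodule.span ℝ (Set.range x) :=
    Submodule.subset_span (Set.mem_range_self n)
  have hchain : Mn ≤ Mn * 2⁻¹ := by
    calc Mn ≤ ENNReal.ofReal B * lorentzNorm ψ hψm (x n) := hspan (x n) hxn_mem
      _ ≤ ENNReal.ofReal B * (Mn * ν (Set.Ioc (0:ℝ) σ)) := mul_le_mul_right hlor_bound _
      _ ≤ ENNReal.ofReal B * (Mn * ε0) := mul_le_mul_right (mul_le_mul_right hk.le _) _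
      _ = Mn * (ENNReal.ofReal B * ε0) := by ring
      _ = Mn * 2⁻¹ := by
          congr 1
          rw [hε0, ENNReal.mul_inv (Or.inl (by simp)) (Or.inl (by simp))]
          rw [← mul_assoc, mul_comm (ENNReal.ofReal B) (2⁻¹ : ℝ≥0∞), mul_assoc]
          rw [ENNReal.mul_inv_cancel hBpos.ne' ENNReal.ofReal_ne_top, mul_one]
  have hhalf : Mn * 2⁻¹ < Mn := by
    have heq : Mn * 2⁻¹ = Mn / 2 := by rw [div_eq_mul_inv]
    rw [heq]
    exact ENNReal.half_lt_self hMnpos.ne' hMntop.ne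
  exact absurd hchain (not_le.2 hhalf)
end hfun_props
end
end

section
/- Let φ, ψ ∈ G satisfy condition (B): γ_{ψ/φ} > 0, where ψ/φ denotes the function t ↦ ψ(t)/φ(t). Let N_E and N_F be symmetric-space norms on [0,1] with fundamental functions φ and ψ respectively, i.e. N_E(χ_{(0,t)}) = φ(t) and N_F(χ_{(0,t)}) = ψ(t) for all t ∈ (0,1]. Then there is a constant C > 0 such that N_F(x) ≤ C·N_E(x) for every measurable x (so E := {x : N_E(x) < ∞} ⊆ F := {x : N_F(x) < ∞}), and the identity inclusion I : E → F is disjointly strictly singular: there exist no sequence (x_n) of measurable functions with pairwise disjoint supports and 0 < N_E(x_n) < ∞ for all n, and no constant B > 0, such that N_E(y) ≤ B·N_F(y) for every y in the linear span of {x_n}. -/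
open MeasureTheory Set Filter Topology
open scoped ENNReal

noncomputable section

/-- A symmetric-space norm on `[0,1]`: subadditive, absolutely homogeneous,
vanishing exactly on a.e.-zero functions, monotone, rearrangement invariant,
with the Fatou property. -/
structure SymmetricNorm where
  N : (ℝ → ℝ) → ℝ≥0∞
  add_le : ∀ x y : ℝ → ℝ, N (x + y) ≤ N x + N y
  smul_eq : ∀ (c : ℝ) (x : ℝ → ℝ), N (fun t => c * x t) = ENNReal.ofReal |c| * N x
  eq_zero_iff : ∀ x : ℝ → ℝ, Measurable x → (N x = 0 ↔ ∀ᵐ s ∂mu01, x s = 0)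
  mono : ∀ x y : ℝ → ℝ, (∀ᵐ s ∂mu01, |x s| ≤ |y s|) → N x ≤ N y
  symm : ∀ x y : ℝ → ℝ, Measurable x → Measurable y →
    (∀ τ : ℝ, 0 < τ → distr x τ = distr y τ) → N x = N y
  fatou : ∀ (x : ℕ → ℝ → ℝ) (y : ℝ → ℝ),
    (∀ n, ∀ᵐ s ∂mu01, 0 ≤ x n s ∧ x n s ≤ x (n+1) s) →
    (∀ᵐ s ∂mu01, Filter.Tendsto (fun n => x n s) Filter.atTop (nhds (y s))) →
    N y = ⨆ n, N (x n)

lemma auxGeom (q : ℝ) (hq' : 0 < q) (hq1 : q < 1) (j n : ℕ) :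
    ∑ k ∈ Finset.range n, q^(max j k) ≤ (j:ℝ) * q^j + q^j/(1-q) := by
  classical
  have hq : 0 ≤ q := le_of_lt hq'
  rw [← Finset.sum_filter_add_sum_filter_not (Finset.range n) (· < j) (fun k => q^(max j k))]
  have h1 : ∑ k ∈ (Finset.range n).filter (· < j), q^(max j k) ≤ (j:ℝ) * q^j := by
    have he : ∀ k ∈ (Finset.range n).filter (· < j), q^(max j k) = q^j := by
      intro k hk
      simp only [Finset.mem_filter] at hk
      rw [max_eq_left (le_of_lt hk.2)]
    rw [Finset.sum_congr rfl he, Finset.sum_const, nsmul_eq_mul]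
    apply mul_le_mul_of_nonneg_right _ (pow_nonneg hq j)
    have hsub : (Finset.range n).filter (· < j) ⊆ Finset.range j := by
      intro k hk
      simp only [Finset.mem_filter, Finset.mem_range] at hk ⊢
      exact hk.2
    have := Finset.card_le_card hsub
    rw [Finset.card_range] at this
    exact_mod_cast this
  have h2 : ∑ k ∈ (Finset.range n).filter (fun k => ¬ k < j), q^(max j k) ≤ q^j/(1-q) := by
    have he : ∀ k ∈ (Finset.range n).filter (fun k => ¬ k < j), q^(max j k) = q^k := by
      intro k hk
      simp only [Finset.mem_filter, not_lt] at hk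
      rw [max_eq_right hk.2]
    rw [Finset.sum_congr rfl he]
    have hsub : (Finset.range n).filter (fun k => ¬ k < j) ⊆ Finset.Ico j (j+n) := by
      intro k hk
      simp only [Finset.mem_filter, Finset.mem_range, not_lt, Finset.mem_Ico] at hk ⊢
      omega
    have h3 : ∑ k ∈ (Finset.range n).filter (fun k => ¬ k < j), q^k ≤ ∑ k ∈ Finset.Ico j (j+n), q^k :=
      Finset.sum_le_sum_of_subset_of_nonneg hsub (fun k _ _ => pow_nonneg hq k)
    have h4 : ∑ k ∈ Finset.Ico j (j+n), q^k = q^j * ∑ i ∈ Finset.range n, q^i := by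
      rw [Finset.sum_Ico_eq_sum_range]
      simp only [Nat.add_sub_cancel_left]
      rw [Finset.mul_sum]
      apply Finset.sum_congr rfl
      intro i _
      rw [← pow_add]
    have h5 : ∑ i ∈ Finset.range n, q^i ≤ 1/(1-q) := by
      rw [geom_sum_eq (ne_of_lt hq1)]
      have heq : (q^n - 1)/(q - 1) = (1 - q^n)/(1-q) := by
        rw [div_eq_div_iff (by linarith) (by linarith)]
        ring
      rw [heq]
      apply div_le_div₀ zero_le_one (by nlinarith [pow_nonneg hq n]) (by linarith) le_rfl
    calc ∑ k ∈ (Finset.range n).filter (fun k => ¬ k < j), q^k ≤ q^j * ∑ i ∈ Finset.range n, q^i := by rw [← h4]; exact h3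
      _ ≤ q^j * (1/(1-q)) := mul_le_mul_of_nonneg_left h5 (pow_nonneg hq j)
      _ = q^j/(1-q) := by ring
  linarith

lemma distr_indicator (B : Set ℝ) (hBsub : B ⊆ Set.Icc 0 1) (τ : ℝ) (hτ : 0 < τ) :
    distr (B.indicator (fun _ => (1:ℝ))) τ = if τ < 1 then MeasureTheory.volume B else 0 := by
  rw [distr]
  split_ifs with h
  · congr 1
    ext s
    simp only [Set.mem_setOf_eq, Set.indicator_apply]
    constructor
    · rintro ⟨hs, hlt⟩
      by_contra hsB
      simp [hsB] at hlt
      linarith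
    · intro hsB
      refine ⟨hBsub hsB, ?_⟩
      simp [hsB, abs_one]
      exact h
  · convert MeasureTheory.measure_empty
    · ext s
      simp only [Set.mem_setOf_eq, Set.indicator_apply, Set.mem_empty_iff_false, iff_false, not_and]
      intro hs
      by_cases hsB : s ∈ B <;> simp [hsB] <;> push_neg at h <;> linarith
    · infer_instance
lemma auxD (N : SymmetricNorm) (g : ℝ → ℝ)
    (hf : ∀ t ∈ Set.Ioc (0:ℝ) 1,
      N.N ((Set.Ioo (0:ℝ) t).indicator (fun _ => (1:ℝ))) = ENNReal.ofReal (g t))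
    (B : Set ℝ) (hBmeas : MeasurableSet B) (hBsub : B ⊆ Set.Icc 0 1)
    (hB0 : MeasureTheory.volume B ≠ 0) :
    N.N (B.indicator (fun _ => (1:ℝ))) = ENNReal.ofReal (g (MeasureTheory.volume B).toReal) := by
  have hBle : MeasureTheory.volume B ≤ 1 := by
    have := MeasureTheory.measure_mono hBsub (μ := MeasureTheory.volume)
    rwa [Real.volume_Icc, sub_zero, ENNReal.ofReal_one] at this
  have hBfin : MeasureTheory.volume B ≠ ⊤ := ne_top_of_le_ne_top ENNReal.one_ne_top hBle
  set b := (MeasureTheory.volume B).toReal with hb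
  have hb0 : 0 < b := ENNReal.toReal_pos hB0 hBfin
  have hb1 : b ≤ 1 := by
    rw [hb]
    exact ENNReal.toReal_le_of_le_ofReal zero_le_one (by rwa [ENNReal.ofReal_one])
  have hbvol : ENNReal.ofReal b = MeasureTheory.volume B := ENNReal.ofReal_toReal hBfin
  have hIoo_sub : Set.Ioo (0:ℝ) b ⊆ Set.Icc 0 1 := fun s hs => ⟨le_of_lt hs.1, le_trans (le_of_lt hs.2) hb1⟩
  have hsymm := N.symm (B.indicator (fun _ => (1:ℝ))) ((Set.Ioo (0:ℝ) b).indicator (fun _ => (1:ℝ)))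
    (measurable_const.indicator hBmeas) (measurable_const.indicator measurableSet_Ioo) ?_
  · rw [hsymm, hf b ⟨hb0, hb1⟩]
  · intro τ hτ
    rw [distr_indicator B hBsub τ hτ, distr_indicator _ hIoo_sub τ hτ]
    split_ifs with h
    · rw [Real.volume_Ioo, sub_zero, hbvol]
    · rfl

lemma auxB (φ : ℝ → ℝ) (hφpos : ∀ t ∈ Set.Ioc (0:ℝ) 1, 0 < φ t)
    (hφconc : ConcaveOn ℝ (Set.Ioc (0:ℝ) 1) φ) :
    ∀ t s : ℝ, 0 < t → t ≤ s → s ≤ 1 → (t/s) * φ s ≤ φ t := by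
  intro t s ht hts hs1
  rcases eq_or_lt_of_le hts with rfl | hlt
  · have : t/t = 1 := div_self (ne_of_gt ht)
    rw [this, one_mul]
  -- t < s. For u ∈ (0,t), φ t ≥ ((t-u)/(s-u)) φ s ≥ ((t-u)/s) φ s
  have hs0 : 0 < s := lt_trans ht hlt
  have key : ∀ u : ℝ, 0 < u → u < t → ((t-u)/s) * φ s ≤ φ t := by
    intro u hu hut
    have hus : u < s := lt_trans hut hlt
    set θ : ℝ := (s - t)/(s - u) with hθ
    have hsu : 0 < s - u := by linarith
    have hθ0 : 0 ≤ θ := div_nonneg (by linarith) (le_of_lt hsu)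
    have hθ1' : 1 - θ = (t - u)/(s - u) := by
      rw [hθ, eq_div_iff (ne_of_gt hsu), sub_mul, one_mul, div_mul_cancel₀ _ (ne_of_gt hsu)]
      ring
    have hθ1 : 0 ≤ 1 - θ := by
      rw [hθ1']
      apply div_nonneg (by linarith) (le_of_lt hsu)
    have hcomb : θ • u + (1-θ) • s = t := by
      simp only [smul_eq_mul]
      rw [hθ1', hθ, div_mul_eq_mul_div, div_mul_eq_mul_div, ← add_div, div_eq_iff (ne_of_gt hsu)]
      ring
    have hmem_u : u ∈ Set.Ioc (0:ℝ) 1 := ⟨hu, by linarith⟩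
    have hmem_s : s ∈ Set.Ioc (0:ℝ) 1 := ⟨hs0, hs1⟩
    have hc := hφconc.2 hmem_u hmem_s hθ0 hθ1 (by linarith)
    rw [hcomb] at hc
    have h1 : (0:ℝ) ≤ θ * φ u := mul_nonneg hθ0 (le_of_lt (hφpos u hmem_u))
    have h2 : (1-θ) * φ s ≤ φ t := by
      have := hc
      simp only [smul_eq_mul] at this
      linarith
    have h3 : ((t-u)/s) * φ s ≤ ((t-u)/(s-u)) * φ s := by
      apply mul_le_mul_of_nonneg_right _ (le_of_lt (hφpos s hmem_s))
      apply div_le_div_of_nonneg_left (by linarith) hsu (by linarith)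
    rw [← hθ1'] at h3
    linarith
  -- limit u → 0
  have hten : Filter.Tendsto (fun u : ℝ => ((t-u)/s) * φ s) (nhdsWithin 0 (Set.Ioo 0 t)) (nhds ((t/s)*φ s)) := by
    apply Filter.Tendsto.mono_left _ nhdsWithin_le_nhds
    have : Continuous (fun u : ℝ => ((t-u)/s) * φ s) := by continuity
    have h := this.tendsto 0
    simpa using h
  have hne : (nhdsWithin (0:ℝ) (Set.Ioo 0 t)).NeBot := by
    apply IsGLB.nhdsWithin_neBot
    · exact isGLB_Ioo ht
    · exact Set.nonempty_Ioo.mpr ht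
  apply le_of_tendsto hten
  filter_upwards [self_mem_nhdsWithin] with u hu
  exact key u hu.1 hu.2

lemma auxA (φ ψ : ℝ → ℝ)
    (hφpos : ∀ t ∈ Set.Ioc (0:ℝ) 1, 0 < φ t)
    (hψpos : ∀ t ∈ Set.Ioc (0:ℝ) 1, 0 < ψ t)
    (hB : 0 < lowerIndex (fun t => ψ t / φ t)) :
    ∃ t0 q : ℝ, 0 < t0 ∧ t0 < 1 ∧ 0 < q ∧ q < 1 ∧
      ∀ s, 0 < s → s ≤ 1 → ψ (s*t0) / φ (s*t0) ≤ q * (ψ s / φ s) := by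
  set f : ℝ → ℝ := fun t => ψ t / φ t with hf
  have hfpos : ∀ t, 0 < t → t ≤ 1 → 0 < f t := fun t h1 h2 =>
    div_pos (hψpos t ⟨h1, h2⟩) (hφpos t ⟨h1, h2⟩)
  set S := {r : ℝ | ∃ t : ℝ, 0 < t ∧ t < 1 ∧ r = Real.log (dilationFn f t) / Real.log t} with hS
  have hne : S.Nonempty := by
    by_contra h
    rw [Set.not_nonempty_iff_eq_empty] at h
    rw [lowerIndex] at hB
    rw [← hS, h, Real.sSup_empty] at hB
    exact lt_irrefl 0 hB
  have hBS : 0 < sSup S := hB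
  obtain ⟨r, hrS, hr0⟩ := exists_lt_of_lt_csSup hne hBS
  obtain ⟨t0, ht0pos, ht0lt, hreq⟩ := hrS
  subst hreq
  have hlt0 : Real.log t0 < 0 := Real.log_neg ht0pos ht0lt
  set q := dilationFn f t0 with hq
  have hlogq : Real.log q < 0 := by
    rcases lt_trichotomy (Real.log q) 0 with h | h | h
    · exact h
    · rw [h] at hr0; simp at hr0
    · exfalso; nlinarith [div_neg_of_pos_of_neg h hlt0]
  set T := {r : ℝ | ∃ s : ℝ, 0 < s ∧ s ≤ min 1 (1/t0) ∧ r = f (s * t0) / f s} with hT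
  have hmin : min 1 (1/t0) = 1 := min_eq_left (le_of_lt (one_lt_one_div ht0pos ht0lt))
  have hTne : T.Nonempty := ⟨f (1 * t0) / f 1, 1, one_pos, by rw [hmin], rfl⟩
  have hbddT : BddAbove T := by
    by_contra h
    have : q = 0 := Real.sSup_of_not_bddAbove h
    rw [this, Real.log_zero] at hlogq
    exact lt_irrefl 0 hlogq
  have hq0 : 0 < q := by
    have hmem : f (1 * t0) / f 1 ∈ T := ⟨1, one_pos, by rw [hmin], rfl⟩
    have h1 : 0 < f (1 * t0) / f 1 := by
      apply div_pos (hfpos _ (by linarith) (by rw [one_mul]; linarith)) (hfpos 1 one_pos le_rfl)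
    exact lt_of_lt_of_le h1 (le_csSup hbddT hmem)
  have hq1 : q < 1 := by
    by_contra h
    push_neg at h
    have := Real.log_nonneg h
    linarith
  refine ⟨t0, q, ht0pos, ht0lt, hq0, hq1, fun s hs hs1 => ?_⟩
  have hmem : f (s * t0) / f s ∈ T := ⟨s, hs, by rw [hmin]; exact hs1, rfl⟩
  have hle : f (s * t0) / f s ≤ q := le_csSup hbddT hmem
  have hfs : 0 < f s := hfpos s hs hs1
  calc ψ (s*t0) / φ (s*t0) = f (s*t0) := rfl
    _ = (f (s*t0) / f s) * f s := by field_simp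
    _ ≤ q * f s := by apply mul_le_mul_of_nonneg_right hle (le_of_lt hfs)

lemma auxC (φ ψ : ℝ → ℝ) (t0 q : ℝ)
    (hφm : MonotoneOn φ (Set.Ioc (0:ℝ) 1)) (hφpos : ∀ t ∈ Set.Ioc (0:ℝ) 1, 0 < φ t)
    (hψm : MonotoneOn ψ (Set.Ioc (0:ℝ) 1)) (hψpos : ∀ t ∈ Set.Ioc (0:ℝ) 1, 0 < ψ t)
    (ht0 : 0 < t0) (ht01 : t0 < 1) (hq : 0 < q) (hq1 : q < 1)
    (hstep : ∀ s, 0 < s → s ≤ 1 → ψ (s*t0) / φ (s*t0) ≤ q * (ψ s / φ s)) :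
    ∀ (j : ℕ) (t : ℝ), 0 < t → t ≤ t0^j → ψ t / φ t ≤ (ψ 1 / φ t0) * q^j := by
  have hpow_pos : ∀ i : ℕ, 0 < t0^i := fun i => pow_pos ht0 i
  have hpow_le1 : ∀ i : ℕ, t0^i ≤ 1 := fun i => pow_le_one₀ (le_of_lt ht0) (le_of_lt ht01)
  have iter : ∀ (i : ℕ) (u : ℝ), 0 < u → u ≤ 1 → ψ (u*t0^i) / φ (u*t0^i) ≤ q^i * (ψ u / φ u) := by
    intro i
    induction i with
    | zero => intro u hu hu1; simp
    | succ i ih =>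
      intro u hu hu1
      have h1 : u * t0^(i+1) = (u * t0^i) * t0 := by ring
      have h2 : 0 < u * t0^i := mul_pos hu (hpow_pos i)
      have h3 : u * t0^i ≤ 1 := by
        calc u * t0^i ≤ 1 * 1 := mul_le_mul hu1 (hpow_le1 i) (le_of_lt (hpow_pos i)) zero_le_one
          _ = 1 := by ring
      calc ψ (u*t0^(i+1)) / φ (u*t0^(i+1)) = ψ ((u*t0^i)*t0) / φ ((u*t0^i)*t0) := by rw [h1]
        _ ≤ q * (ψ (u*t0^i) / φ (u*t0^i)) := hstep _ h2 h3
        _ ≤ q * (q^i * (ψ u / φ u)) := by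
            apply mul_le_mul_of_nonneg_left (ih u hu hu1) (le_of_lt hq)
        _ = q^(i+1) * (ψ u / φ u) := by ring
  intro j t ht htj
  -- find minimal n0 with t0^n0 < t
  have hex : ∃ n : ℕ, t0^n < t := by
    obtain ⟨n, hn⟩ := exists_pow_lt_of_lt_one ht ht01
    exact ⟨n, hn⟩
  set n0 := Nat.find hex with hn0
  have hn0lt : t0^n0 < t := Nat.find_spec hex
  have hjn0 : j < n0 := by
    by_contra h
    push_neg at h
    have : t0^j ≤ t0^n0 := pow_le_pow_of_le_one (le_of_lt ht0) (le_of_lt ht01) h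
    linarith
  set i := n0 - 1 with hi
  have hin0 : i < n0 := by omega
  have hji : j ≤ i := by omega
  have hti : t ≤ t0^i := le_of_not_gt (Nat.find_min hex hin0)
  set u := t / t0^i with hu
  have hu0 : 0 < u := div_pos ht (hpow_pos i)
  have hu1 : u ≤ 1 := by
    rw [hu, div_le_one (hpow_pos i)]
    exact hti
  have hut : t0 < u := by
    rw [hu, lt_div_iff₀ (hpow_pos i)]
    have : t0 * t0^i = t0^n0 := by rw [hi]; rw [← pow_succ']; congr 1; omega
    rw [this]; exact hn0lt
  have hueq : u * t0^i = t := by rw [hu]; field_simp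
  have h1 : ψ t / φ t ≤ q^i * (ψ u / φ u) := by
    rw [← hueq]; exact iter i u hu0 hu1
  have humem : u ∈ Set.Ioc (0:ℝ) 1 := ⟨hu0, hu1⟩
  have ht0mem : t0 ∈ Set.Ioc (0:ℝ) 1 := ⟨ht0, le_of_lt ht01⟩
  have h2 : ψ u / φ u ≤ ψ 1 / φ t0 := by
    apply div_le_div₀ (le_of_lt (hψpos 1 ⟨one_pos, le_refl 1⟩))
      (hψm humem ⟨one_pos, le_refl 1⟩ hu1) (hφpos t0 ht0mem)
      (hφm ht0mem humem (le_of_lt hut))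
  have h3 : q^i ≤ q^j := pow_le_pow_of_le_one (le_of_lt hq) (le_of_lt hq1) hji
  have hfu : 0 < ψ u / φ u := div_pos (hψpos u humem) (hφpos u humem)
  calc ψ t / φ t ≤ q^i * (ψ u / φ u) := h1
    _ ≤ q^j * (ψ 1 / φ t0) := by
        apply mul_le_mul h3 h2 (le_of_lt hfu) (by positivity)
    _ = (ψ 1 / φ t0) * q^j := by ring

lemma mainLemma (φ ψ : ℝ → ℝ) (t0 q : ℝ)
    (hφm : MonotoneOn φ (Set.Ioc (0:ℝ) 1)) (hφpos : ∀ t ∈ Set.Ioc (0:ℝ) 1, 0 < φ t)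
    (hψpos : ∀ t ∈ Set.Ioc (0:ℝ) 1, 0 < ψ t)
    (ht0 : 0 < t0) (ht01 : t0 < 1) (hq : 0 < q) (hq1 : q < 1)
    (hC : ∀ (j : ℕ) (t : ℝ), 0 < t → t ≤ t0^j → ψ t / φ t ≤ (ψ 1 / φ t0) * q^j)
    (hLB : ∀ t s : ℝ, 0 < t → t ≤ s → s ≤ 1 → (t/s) * φ s ≤ φ t)
    (NE NF : SymmetricNorm)
    (hfE : ∀ t ∈ Set.Ioc (0:ℝ) 1,
      NE.N ((Set.Ioo (0:ℝ) t).indicator (fun _ => (1:ℝ))) = ENNReal.ofReal (φ t))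
    (hfF : ∀ t ∈ Set.Ioc (0:ℝ) 1,
      NF.N ((Set.Ioo (0:ℝ) t).indicator (fun _ => (1:ℝ))) = ENNReal.ofReal (ψ t)) :
    ∀ (j : ℕ) (x : ℝ → ℝ), Measurable x →
      MeasureTheory.volume {s | s ∈ Set.Icc (0:ℝ) 1 ∧ x s ≠ 0} ≤ ENNReal.ofReal (t0^j) →
      NF.N x ≤ ENNReal.ofReal ((ψ 1 / φ t0) * q^j * (1 + ((j:ℝ) + 1/(1-q))/t0)) * NE.N x := by
  intro j x hxm hsupp
  set K0 := ψ 1 / φ t0 with hK0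
  have hφ1 : 0 < φ 1 := hφpos 1 ⟨one_pos, le_refl 1⟩
  have hK0pos : 0 < K0 := div_pos (hψpos 1 ⟨one_pos, le_refl 1⟩) (hφpos t0 ⟨ht0, le_of_lt ht01⟩)
  set Cj := K0 * q^j * (1 + ((j:ℝ) + 1/(1-q))/t0) with hCj
  have hCjpos : 0 < Cj := by
    apply mul_pos (mul_pos hK0pos (pow_pos hq j))
    have h1 : 0 < 1 - q := by linarith
    positivity
  set A := {s | s ∈ Set.Icc (0:ℝ) 1 ∧ x s ≠ 0} with hA
  have hAmeas : MeasurableSet A := by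
    have : A = Set.Icc (0:ℝ) 1 ∩ (x ⁻¹' {0})ᶜ := by
      ext s
      simp only [hA, Set.mem_setOf_eq, Set.mem_inter_iff, Set.mem_compl_iff, Set.mem_preimage,
        Set.mem_singleton_iff]
    rw [this]
    exact measurableSet_Icc.inter (hxm (measurableSet_singleton 0)).compl
  have hAsub : A ⊆ Set.Icc (0:ℝ) 1 := fun s hs => hs.1
  have hAfin : MeasureTheory.volume A ≠ ⊤ := by
    apply ne_top_of_le_ne_top (b := 1) ENNReal.one_ne_top
    have := MeasureTheory.measure_mono hAsub (μ := MeasureTheory.volume)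
    rwa [Real.volume_Icc, sub_zero, ENNReal.ofReal_one] at this
  -- trivial cases
  by_cases hA0 : MeasureTheory.volume A = 0
  · have hae : ∀ᵐ s ∂mu01, x s = 0 := by
      rw [MeasureTheory.ae_iff]
      rw [mu01, MeasureTheory.Measure.restrict_apply₀]
      · apply MeasureTheory.measure_mono_null _ hA0
        intro s hs
        exact ⟨hs.2, hs.1⟩
      · exact ((hxm (measurableSet_singleton 0)).compl).nullMeasurableSet
    have h0 : NF.N x = 0 := (NF.eq_zero_iff x hxm).mpr hae
    rw [h0]; exact zero_le
  by_cases hNE0 : NE.N x = 0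
  · have hae := (NE.eq_zero_iff x hxm).mp hNE0
    have h0 : NF.N x = 0 := (NF.eq_zero_iff x hxm).mpr hae
    rw [h0]; exact zero_le
  by_cases hNEtop : NE.N x = ⊤
  · rw [hNEtop, ENNReal.mul_top (by simp [ENNReal.ofReal_eq_zero]; exact hCjpos)]
    exact le_top
  -- main case
  set e := (NE.N x).toReal with he
  have he0 : 0 < e := ENNReal.toReal_pos hNE0 hNEtop
  have heE : ENNReal.ofReal e = NE.N x := ENNReal.ofReal_toReal hNEtop
  set a := (MeasureTheory.volume A).toReal with ha
  have ha0 : 0 < a := ENNReal.toReal_pos hA0 hAfin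
  have haj : a ≤ t0^j := ENNReal.toReal_le_of_le_ofReal (by positivity) hsupp
  have ha1 : a ≤ 1 := le_trans haj (pow_le_one₀ (le_of_lt ht0) (le_of_lt ht01))
  have hamem : a ∈ Set.Ioc (0:ℝ) 1 := ⟨ha0, ha1⟩
  have hφa : 0 < φ a := hφpos a hamem
  have hψa : 0 < ψ a := hψpos a hamem
  set lam : ℕ → ℝ := fun k => (e / φ a) / t0^k with hlam
  have hlampos : ∀ k, 0 < lam k := fun k => div_pos (div_pos he0 hφa) (pow_pos ht0 k)
  have hlammono : ∀ m n : ℕ, m ≤ n → lam m ≤ lam n := by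
    intro m n hmn
    apply div_le_div_of_nonneg_left (le_of_lt (div_pos he0 hφa)) (pow_pos ht0 n)
    exact pow_le_pow_of_le_one (le_of_lt ht0) (le_of_lt ht01) hmn
  set Bs : ℕ → Set ℝ := fun k => {s | s ∈ Set.Icc (0:ℝ) 1 ∧ lam k < |x s|} with hBs
  set Ds : ℕ → Set ℝ := fun k => {s | s ∈ Set.Icc (0:ℝ) 1 ∧ lam k < |x s| ∧ |x s| ≤ lam (k+1)} with hDs
  have hBmeas : ∀ k, MeasurableSet (Bs k) := by
    intro k
    have : Bs k = Set.Icc (0:ℝ) 1 ∩ ((fun s => |x s|) ⁻¹' Set.Ioi (lam k)) := by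
      ext s
      simp only [hBs, Set.mem_setOf_eq, Set.mem_inter_iff, Set.mem_preimage, Set.mem_Ioi]
    rw [this]
    exact measurableSet_Icc.inter (hxm.abs measurableSet_Ioi)
  have hDmeas : ∀ k, MeasurableSet (Ds k) := by
    intro k
    have : Ds k = Set.Icc (0:ℝ) 1 ∩ ((fun s => |x s|) ⁻¹' Set.Ioc (lam k) (lam (k+1))) := by
      ext s
      simp only [hDs, Set.mem_setOf_eq, Set.mem_inter_iff, Set.mem_preimage, Set.mem_Ioc]
    rw [this]
    exact measurableSet_Icc.inter (hxm.abs measurableSet_Ioc)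
  have hBsubA : ∀ k, Bs k ⊆ A := by
    intro k s hs
    obtain ⟨hs1, hs2⟩ := hs
    refine ⟨hs1, fun h0 => absurd hs2 ?_⟩
    rw [h0, abs_zero]
    exact not_lt_of_ge (le_of_lt (hlampos k))
  have hDsubB : ∀ k, Ds k ⊆ Bs k := fun k s hs => ⟨hs.1, hs.2.1⟩
  have hBsub1 : ∀ k, Bs k ⊆ Set.Icc (0:ℝ) 1 := fun k s hs => hs.1
  -- the functions
  set χ : Set ℝ → ℝ → ℝ := fun S => S.indicator (fun _ => (1:ℝ)) with hχ
  set g : ℕ → ℝ → ℝ := fun k s => lam (k+1) * χ (Ds k) s with hg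
  have hgnn : ∀ k s, 0 ≤ g k s := by
    intro k s
    apply mul_nonneg (le_of_lt (hlampos (k+1)))
    simp only [hχ]
    exact Set.indicator_nonneg (fun _ _ => zero_le_one) s
  have hmemD : ∀ k s, g k s ≠ 0 → s ∈ Ds k := by
    intro k s hgs
    by_contra hsD
    simp only [hg, hχ, Set.indicator_apply, if_neg hsD] at hgs
    simp at hgs
  have hDdisj : ∀ (k k' : ℕ) (s : ℝ), k ≠ k' → s ∈ Ds k → s ∈ Ds k' → False := by
    intro k k' s hne hk hk'
    rcases Nat.lt_or_ge k k' with h | h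
    · have h1 : lam (k+1) ≤ lam k' := hlammono (k+1) k' h
      obtain ⟨-, -, hk2⟩ := hk
      obtain ⟨-, hk1', -⟩ := hk'
      linarith
    · have hlt : k' < k := lt_of_le_of_ne h (Ne.symm hne)
      have h1 : lam (k'+1) ≤ lam k := hlammono (k'+1) k hlt
      obtain ⟨-, hk1, -⟩ := hk
      obtain ⟨-, -, hk2'⟩ := hk'
      linarith
  have hsummable : ∀ s, Summable (fun k => g k s) := by
    intro s
    apply summable_of_finite_support
    apply Set.Subsingleton.finite
    intro k hk k' hk'
    simp only [Function.mem_support] at hk hk'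
    by_contra hne
    exact hDdisj k k' s hne (hmemD k s hk) (hmemD k' s hk')
  set partialY : ℕ → ℝ → ℝ := fun n s => (e/φ a) * χ A s + ∑ k ∈ Finset.range n, g k s with hpartialY
  set y : ℝ → ℝ := fun s => (e/φ a) * χ A s + ∑' k, g k s with hy
  have hχnn : ∀ (S : Set ℝ) (s : ℝ), 0 ≤ χ S s := by
    intro S s
    exact Set.indicator_nonneg (fun _ _ => zero_le_one) s
  have hfirstnn : ∀ s, 0 ≤ (e/φ a) * χ A s :=
    fun s => mul_nonneg (le_of_lt (div_pos he0 hφa)) (hχnn A s)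
  have hynn : ∀ s, 0 ≤ y s := by
    intro s
    apply add_nonneg (hfirstnn s)
    exact tsum_nonneg (fun k => hgnn k s)
  have hlam0 : lam 0 = e / φ a := by simp [hlam]
  have hxy : ∀ s ∈ Set.Icc (0:ℝ) 1, |x s| ≤ y s := by
    intro s hs
    by_cases hx0 : x s = 0
    · rw [hx0, abs_zero]; exact hynn s
    by_cases hsmall : |x s| ≤ lam 0
    · have hsA : s ∈ A := ⟨hs, hx0⟩
      have : χ A s = 1 := Set.indicator_of_mem hsA _
      calc |x s| ≤ lam 0 := hsmall
        _ = (e/φ a) * χ A s := by rw [this, hlam0, mul_one]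
        _ ≤ y s := le_add_of_nonneg_right (tsum_nonneg (fun k => hgnn k s))
    · push_neg at hsmall
      have hex : ∃ n : ℕ, |x s| ≤ lam n := by
        obtain ⟨n, hn⟩ := pow_unbounded_of_one_lt (|x s| / (e/φ a)) (one_lt_one_div ht0 ht01)
        refine ⟨n, le_of_lt ?_⟩
        have hc : 0 < e / φ a := div_pos he0 hφa
        have h2 : |x s| < (1/t0)^n * (e/φ a) := by
          have h4 := mul_lt_mul_of_pos_right hn hc
          rwa [div_mul_cancel₀ _ (ne_of_gt hc)] at h4
        have h3 : (1/t0)^n * (e/φ a) = lam n := by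
          simp only [hlam, one_div_pow]
          ring
        rwa [h3] at h2
      set n1 := Nat.find hex with hn1
      have hn1spec : |x s| ≤ lam n1 := Nat.find_spec hex
      have hn1pos : 0 < n1 := by
        rcases Nat.eq_zero_or_pos n1 with h | h
        · rw [h] at hn1spec; linarith
        · exact h
      have hkk : ¬ |x s| ≤ lam (n1 - 1) := Nat.find_min hex (by omega)
      push_neg at hkk
      have hsD : s ∈ Ds (n1 - 1) := ⟨hs, hkk, by rwa [Nat.sub_add_cancel hn1pos]⟩
      have hterm : g (n1-1) s = lam ((n1-1)+1) := by
        simp only [hg, hχ, Set.indicator_of_mem hsD, mul_one]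
      calc |x s| ≤ lam n1 := hn1spec
        _ = g (n1-1) s := by rw [hterm, Nat.sub_add_cancel hn1pos]
        _ ≤ ∑' k, g k s := Summable.le_tsum (hsummable s) (n1-1) (fun k _ => hgnn k s)
        _ ≤ y s := le_add_of_nonneg_left (hfirstnn s)
  have hmonoxy : NF.N x ≤ NF.N y := by
    apply NF.mono
    rw [mu01, MeasureTheory.ae_restrict_iff' measurableSet_Icc]
    apply MeasureTheory.ae_of_all
    intro s hs
    calc |x s| ≤ y s := hxy s hs
      _ ≤ |y s| := le_abs_self _
  have htendsto : ∀ s, Filter.Tendsto (fun n => partialY n s) Filter.atTop (nhds (y s)) := by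
    intro s
    simp only [hpartialY, hy]
    exact Filter.Tendsto.const_add _ ((hsummable s).hasSum.tendsto_sum_nat)
  have hPnn : ∀ n s, 0 ≤ partialY n s := by
    intro n s
    exact add_nonneg (hfirstnn s) (Finset.sum_nonneg (fun k _ => hgnn k s))
  have hfatou : NF.N y = ⨆ n, NF.N (partialY n) := by
    apply NF.fatou
    · intro n
      apply MeasureTheory.ae_of_all
      intro s
      refine ⟨hPnn n s, ?_⟩
      simp only [hpartialY, Finset.sum_range_succ]
      have := hgnn n s
      linarith
    · exact MeasureTheory.ae_of_all _ htendsto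
  have hNFA : NF.N (fun s => (e/φ a) * χ A s) = ENNReal.ofReal ((e/φ a) * ψ a) := by
    rw [NF.smul_eq (e/φ a) (χ A)]
    have hD := auxD NF ψ hfF A hAmeas hAsub hA0
    have hχA : χ A = A.indicator (fun _ => (1:ℝ)) := rfl
    rw [hχA, hD, abs_of_pos (div_pos he0 hφa), ← ENNReal.ofReal_mul (le_of_lt (div_pos he0 hφa))]
  have htri : ∀ n, NF.N (partialY n) ≤
      NF.N (fun s => (e/φ a) * χ A s) + ∑ k ∈ Finset.range n, NF.N (g k) := by
    intro n
    induction n with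
    | zero =>
      have h0 : partialY 0 = fun s => (e/φ a) * χ A s := by
        funext s
        simp [hpartialY]
      rw [h0]
      simp
    | succ n ih =>
      have heq : partialY (n+1) = fun s => partialY n s + g n s := by
        funext s
        simp [hpartialY, Finset.sum_range_succ]
        ring
      rw [heq]
      calc NF.N (fun s => partialY n s + g n s) ≤ NF.N (partialY n) + NF.N (g n) :=
            NF.add_le (partialY n) (g n)
        _ ≤ (NF.N (fun s => (e/φ a) * χ A s) + ∑ k ∈ Finset.range n, NF.N (g k)) + NF.N (g n) :=
            add_le_add_left ih _
        _ = NF.N (fun s => (e/φ a) * χ A s) + ∑ k ∈ Finset.range (n+1), NF.N (g k) := by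
            rw [Finset.sum_range_succ, add_assoc]

  have hterm : ∀ k : ℕ, NF.N (g k) ≤ ENNReal.ofReal (e * (K0/t0) * q^(max j k)) := by
    intro k
    have hχD : χ (Ds k) = (Ds k).indicator (fun _ => (1:ℝ)) := rfl
    have hχB : χ (Bs k) = (Bs k).indicator (fun _ => (1:ℝ)) := rfl
    have hsmul : NF.N (g k) = ENNReal.ofReal (lam (k+1)) * NF.N (χ (Ds k)) := by
      have h := NF.smul_eq (lam (k+1)) (χ (Ds k))
      rw [abs_of_pos (hlampos (k+1))] at h
      exact h
    have hmonoDB : NF.N (χ (Ds k)) ≤ NF.N (χ (Bs k)) := by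
      apply NF.mono
      apply MeasureTheory.ae_of_all
      intro s
      rw [abs_of_nonneg (hχnn _ _), abs_of_nonneg (hχnn _ _)]
      exact Set.indicator_le_indicator_of_subset (hDsubB k) (fun _ => zero_le_one) s
    by_cases hBk0 : MeasureTheory.volume (Bs k) = 0
    · have h1 : mu01 (Bs k) = 0 := by
        rw [mu01, MeasureTheory.Measure.restrict_apply (hBmeas k),
          Set.inter_eq_self_of_subset_left (hBsub1 k)]
        exact hBk0
      have hz : NF.N (χ (Bs k)) = 0 := by
        rw [hχB]
        apply (NF.eq_zero_iff _ (measurable_const.indicator (hBmeas k))).mpr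
        rw [MeasureTheory.ae_iff]
        apply MeasureTheory.measure_mono_null _ h1
        intro s hs
        simp only [Set.mem_setOf_eq] at hs
        by_contra hsB
        exact hs (Set.indicator_of_notMem hsB _)
      calc NF.N (g k) = ENNReal.ofReal (lam (k+1)) * NF.N (χ (Ds k)) := hsmul
        _ ≤ ENNReal.ofReal (lam (k+1)) * NF.N (χ (Bs k)) := mul_le_mul' le_rfl hmonoDB
        _ = 0 := by rw [hz, mul_zero]
        _ ≤ _ := zero_le
    · set dk := (MeasureTheory.volume (Bs k)).toReal with hdk
      have hBfin : MeasureTheory.volume (Bs k) ≠ ⊤ :=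
        ne_top_of_le_ne_top hAfin (MeasureTheory.measure_mono (hBsubA k))
      have hdk0 : 0 < dk := ENNReal.toReal_pos hBk0 hBfin
      have hdka : dk ≤ a := ENNReal.toReal_mono hAfin (MeasureTheory.measure_mono (hBsubA k))
      have hdk1 : dk ≤ 1 := le_trans hdka ha1
      have hdkmem : dk ∈ Set.Ioc (0:ℝ) 1 := ⟨hdk0, hdk1⟩
      have hDB := auxD NF ψ hfF (Bs k) (hBmeas k) (hBsub1 k) hBk0
      have hptw : ∀ s, |lam k * χ (Bs k) s| ≤ |x s| := by
        intro s
        by_cases hsB : s ∈ Bs k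
        · rw [hχB, Set.indicator_of_mem hsB, mul_one, abs_of_pos (hlampos k)]
          exact le_of_lt hsB.2
        · rw [hχB, Set.indicator_of_notMem hsB, mul_zero, abs_zero]
          exact abs_nonneg _
      have hclaim4 : lam k * φ dk ≤ e := by
        have hm := NE.mono (fun s => lam k * χ (Bs k) s) x (MeasureTheory.ae_of_all _ hptw)
        rw [NE.smul_eq (lam k) (χ (Bs k))] at hm
        have hDE := auxD NE φ hfE (Bs k) (hBmeas k) (hBsub1 k) hBk0
        rw [hχB, hDE, abs_of_pos (hlampos k),
          ← ENNReal.ofReal_mul (le_of_lt (hlampos k)), ← heE] at hm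
        exact (ENNReal.ofReal_le_ofReal_iff (le_of_lt he0)).mp hm
      have hφdk : φ dk ≤ φ a * t0^k := by
        have h2 : e / lam k = φ a * t0^k := by
          simp only [hlam]
          field_simp
        rw [← h2, le_div_iff₀ (hlampos k)]
        calc φ dk * lam k = lam k * φ dk := mul_comm _ _
          _ ≤ e := hclaim4
      have hdkt0k : dk ≤ t0^k := by
        have h1 := hLB dk 1 hdk0 hdk1 le_rfl
        rw [div_one] at h1
        have h3 : φ a ≤ φ 1 := hφm hamem ⟨one_pos, le_refl 1⟩ ha1
        have h4 : φ dk ≤ φ 1 * t0^k :=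
          le_trans hφdk (mul_le_mul_of_nonneg_right h3 (le_of_lt (pow_pos ht0 k)))
        nlinarith
      have hdkmax : dk ≤ t0^(max j k) := by
        rcases le_total j k with h | h
        · rw [max_eq_right h]; exact hdkt0k
        · rw [max_eq_left h]; exact le_trans hdka haj
      have hfdk := hC (max j k) dk hdk0 hdkmax
      have hφdkpos : 0 < φ dk := hφpos dk hdkmem
      have hψdk : ψ dk ≤ K0 * q^(max j k) * (φ a * t0^k) := by
        have heq1 : ψ dk = (ψ dk/φ dk) * φ dk := by field_simp
        rw [heq1]
        apply mul_le_mul hfdk hφdk (le_of_lt hφdkpos) (by positivity)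
      have hlamψ : lam (k+1) * ψ dk ≤ e * (K0/t0) * q^(max j k) := by
        have hb : lam (k+1) * (K0 * q^(max j k) * (φ a * t0^k)) = e * (K0/t0) * q^(max j k) := by
          simp only [hlam, pow_succ]
          field_simp
        calc lam (k+1) * ψ dk ≤ lam (k+1) * (K0 * q^(max j k) * (φ a * t0^k)) :=
              mul_le_mul_of_nonneg_left hψdk (le_of_lt (hlampos (k+1)))
          _ = e * (K0/t0) * q^(max j k) := hb
      calc NF.N (g k) = ENNReal.ofReal (lam (k+1)) * NF.N (χ (Ds k)) := hsmul
        _ ≤ ENNReal.ofReal (lam (k+1)) * NF.N (χ (Bs k)) := mul_le_mul' le_rfl hmonoDB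
        _ = ENNReal.ofReal (lam (k+1)) * ENNReal.ofReal (ψ dk) := by rw [hχB, hDB]
        _ = ENNReal.ofReal (lam (k+1) * ψ dk) :=
            (ENNReal.ofReal_mul (le_of_lt (hlampos (k+1)))).symm
        _ ≤ ENNReal.ofReal (e * (K0/t0) * q^(max j k)) := ENNReal.ofReal_le_ofReal hlamψ
  have hsumbound : ∀ n, NF.N (partialY n) ≤ ENNReal.ofReal (e * Cj) := by
    intro n
    have h2 : ∑ k ∈ Finset.range n, NF.N (g k) ≤
        ENNReal.ofReal (e*(K0/t0)*((j:ℝ)*q^j + q^j/(1-q))) := by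
      calc ∑ k ∈ Finset.range n, NF.N (g k)
          ≤ ∑ k ∈ Finset.range n, ENNReal.ofReal (e*(K0/t0)*q^(max j k)) :=
            Finset.sum_le_sum (fun k _ => hterm k)
        _ = ENNReal.ofReal (∑ k ∈ Finset.range n, e*(K0/t0)*q^(max j k)) :=
            (ENNReal.ofReal_sum_of_nonneg (fun k _ => by positivity)).symm
        _ ≤ _ := by
            apply ENNReal.ofReal_le_ofReal
            rw [← Finset.mul_sum]
            exact mul_le_mul_of_nonneg_left (auxGeom q hq hq1 j n) (by positivity)
    have h3 : ENNReal.ofReal ((e/φ a) * ψ a) ≤ ENNReal.ofReal (e * (K0 * q^j)) := by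
      apply ENNReal.ofReal_le_ofReal
      have h5 := hC j a ha0 haj
      calc (e/φ a) * ψ a = e * (ψ a/φ a) := by ring
        _ ≤ e * (K0 * q^j) := mul_le_mul_of_nonneg_left h5 (le_of_lt he0)
    calc NF.N (partialY n) ≤ _ := htri n
      _ ≤ ENNReal.ofReal (e*(K0*q^j)) + ENNReal.ofReal (e*(K0/t0)*((j:ℝ)*q^j + q^j/(1-q))) := by
          rw [hNFA]
          exact add_le_add h3 h2
      _ = ENNReal.ofReal (e*(K0*q^j) + e*(K0/t0)*((j:ℝ)*q^j + q^j/(1-q))) := by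
          have h1q : (0:ℝ) < 1 - q := by linarith
          exact (ENNReal.ofReal_add (by positivity) (by positivity)).symm
      _ = ENNReal.ofReal (e * Cj) := by
          congr 1
          rw [hCj]
          field_simp
  calc NF.N x ≤ NF.N y := hmonoxy
    _ = ⨆ n, NF.N (partialY n) := hfatou
    _ ≤ ENNReal.ofReal (e * Cj) := iSup_le hsumbound
    _ = ENNReal.ofReal Cj * ENNReal.ofReal e := by
        rw [← ENNReal.ofReal_mul (le_of_lt hCjpos), mul_comm]
    _ = ENNReal.ofReal Cj * NE.N x := by rw [heE]

/-- **Theorem 5.** If `φ, ψ ∈ G` satisfy condition (B): `γ_{ψ/φ} > 0`, and `E`, `F` are symmetric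
spaces with fundamental functions `φ` and `ψ` respectively, then `E ⊆ F` boundedly and the
identity inclusion `I : E → F` is disjointly strictly singular. -/
theorem conditionB_implies_DSS
    (φ ψ : ℝ → ℝ)
    (hφm : MonotoneOn φ (Set.Ioc (0:ℝ) 1)) (hφpos : ∀ t ∈ Set.Ioc (0:ℝ) 1, 0 < φ t)
    (hφconc : ConcaveOn ℝ (Set.Ioc (0:ℝ) 1) φ)
    (hψm : MonotoneOn ψ (Set.Ioc (0:ℝ) 1)) (hψpos : ∀ t ∈ Set.Ioc (0:ℝ) 1, 0 < ψ t)
    (hψconc : ConcaveOn ℝ (Set.Ioc (0:ℝ) 1) ψ)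
    (hB : 0 < lowerIndex (fun t => ψ t / φ t))
    (NE NF : SymmetricNorm)
    (hfE : ∀ t ∈ Set.Ioc (0:ℝ) 1,
      NE.N ((Set.Ioo (0:ℝ) t).indicator (fun _ => (1:ℝ))) = ENNReal.ofReal (φ t))
    (hfF : ∀ t ∈ Set.Ioc (0:ℝ) 1,
      NF.N ((Set.Ioo (0:ℝ) t).indicator (fun _ => (1:ℝ))) = ENNReal.ofReal (ψ t)) :
    (∃ C : ℝ, 0 < C ∧ ∀ x : ℝ → ℝ, Measurable x →
      NF.N x ≤ ENNReal.ofReal C * NE.N x) ∧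
    ¬ DSSFails NE.N NF.N := by
  obtain ⟨t0, q, ht0, ht01, hq, hq1, hstep⟩ := auxA φ ψ hφpos hψpos hB
  have hLB := auxB φ hφpos hφconc
  have hC := auxC φ ψ t0 q hφm hφpos hψm hψpos ht0 ht01 hq hq1 hstep
  have hmain := mainLemma φ ψ t0 q hφm hφpos hψpos ht0 ht01 hq hq1 hC hLB NE NF hfE hfF
  have h1q : (0:ℝ) < 1 - q := by linarith
  set K0 := ψ 1 / φ t0 with hK0
  have hK0pos : 0 < K0 := div_pos (hψpos 1 ⟨one_pos, le_refl 1⟩) (hφpos t0 ⟨ht0, le_of_lt ht01⟩)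
  set Cv : ℕ → ℝ := fun j => K0 * q^j * (1 + ((j:ℝ) + 1/(1-q))/t0) with hCv
  have hCvpos : ∀ j, 0 < Cv j := by
    intro j
    apply mul_pos (mul_pos hK0pos (pow_pos hq j))
    positivity
  constructor
  · refine ⟨Cv 0, hCvpos 0, fun x hx => ?_⟩
    apply hmain 0 x hx
    rw [pow_zero, ENNReal.ofReal_one]
    calc MeasureTheory.volume {s | s ∈ Set.Icc (0:ℝ) 1 ∧ x s ≠ 0}
        ≤ MeasureTheory.volume (Set.Icc (0:ℝ) 1) :=
          MeasureTheory.measure_mono (fun s hs => hs.1)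
      _ = 1 := by rw [Real.volume_Icc]; norm_num
  · rintro ⟨xs, B, hBpos, hxm, hdisj, hnz, hspan⟩
    set S : ℕ → Set ℝ := fun n => {s | s ∈ Set.Icc (0:ℝ) 1 ∧ xs n s ≠ 0} with hS
    have hSmeas : ∀ n, MeasurableSet (S n) := by
      intro n
      have : S n = Set.Icc (0:ℝ) 1 ∩ (xs n ⁻¹' {0})ᶜ := by
        ext s
        simp only [hS, Set.mem_setOf_eq, Set.mem_inter_iff, Set.mem_compl_iff, Set.mem_preimage,
          Set.mem_singleton_iff]
      rw [this]
      exact measurableSet_Icc.inter ((hxm n) (measurableSet_singleton 0)).compl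
    have hSsub : ∀ n, S n ⊆ Set.Icc (0:ℝ) 1 := fun n s hs => hs.1
    have hSint : ∀ n m, n ≠ m → MeasureTheory.volume (S n ∩ S m) = 0 := by
      intro n m hnm
      have hae := hdisj n m hnm
      rw [MeasureTheory.ae_iff] at hae
      rw [mu01, MeasureTheory.Measure.restrict_apply₀] at hae
      · apply MeasureTheory.measure_mono_null _ hae
        rintro s ⟨⟨hsI, hn0⟩, ⟨-, hm0⟩⟩
        exact ⟨mul_ne_zero hn0 hm0, hsI⟩
      · exact (((hxm n).mul (hxm m)) (measurableSet_singleton 0)).compl.nullMeasurableSet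
    have hsum : ∀ N : ℕ, ∑ n ∈ Finset.range N, MeasureTheory.volume (S n) ≤ 1 := by
      intro N
      set T : ℕ → Set ℝ := fun n => S n \ ⋃ m ∈ Finset.range n, S m with hT
      have hTmeas : ∀ n, MeasurableSet (T n) := by
        intro n
        exact (hSmeas n).diff (Finset.measurableSet_biUnion _ (fun m _ => hSmeas m))
      have hTsub : ∀ n, T n ⊆ S n := fun n => Set.diff_subset
      have hvol : ∀ n, MeasureTheory.volume (S n) ≤ MeasureTheory.volume (T n) := by
        intro n
        have hcover : S n ⊆ T n ∪ ⋃ m ∈ Finset.range n, (S n ∩ S m) := by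
          intro s hs
          by_cases h : s ∈ ⋃ m ∈ Finset.range n, S m
          · right
            simp only [Set.mem_iUnion] at h ⊢
            obtain ⟨m, hm, hsm⟩ := h
            exact ⟨m, hm, hs, hsm⟩
          · exact Or.inl ⟨hs, h⟩
        calc MeasureTheory.volume (S n)
            ≤ MeasureTheory.volume (T n ∪ ⋃ m ∈ Finset.range n, (S n ∩ S m)) :=
              MeasureTheory.measure_mono hcover
          _ ≤ MeasureTheory.volume (T n) +
              MeasureTheory.volume (⋃ m ∈ Finset.range n, (S n ∩ S m)) :=
              MeasureTheory.measure_union_le _ _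
          _ ≤ MeasureTheory.volume (T n) + ∑ m ∈ Finset.range n, MeasureTheory.volume (S n ∩ S m) := by
              gcongr
              exact MeasureTheory.measure_biUnion_finset_le _ _
          _ = MeasureTheory.volume (T n) := by
              rw [Finset.sum_eq_zero, add_zero]
              intro m hm
              apply hSint n m
              intro h
              rw [h] at hm
              simp at hm
      have hTdisj : Set.PairwiseDisjoint ↑(Finset.range N) T := by
        intro n _ m _ hnm
        rcases Nat.lt_or_ge n m with h | h
        · apply Set.disjoint_left.mpr
          intro s hsn hsm
          apply hsm.2
          simp only [Set.mem_iUnion]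
          exact ⟨n, Finset.mem_range.mpr h, hTsub n hsn⟩
        · have h' : m < n := lt_of_le_of_ne h (Ne.symm hnm)
          apply Set.disjoint_left.mpr
          intro s hsn hsm
          apply hsn.2
          simp only [Set.mem_iUnion]
          exact ⟨m, Finset.mem_range.mpr h', hTsub m hsm⟩
      calc ∑ n ∈ Finset.range N, MeasureTheory.volume (S n)
          ≤ ∑ n ∈ Finset.range N, MeasureTheory.volume (T n) :=
            Finset.sum_le_sum (fun n _ => hvol n)
        _ = MeasureTheory.volume (⋃ n ∈ Finset.range N, T n) :=
            (MeasureTheory.measure_biUnion_finset hTdisj (fun n _ => hTmeas n)).symm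
        _ ≤ MeasureTheory.volume (Set.Icc (0:ℝ) 1) := by
            apply MeasureTheory.measure_mono
            intro s hs
            simp only [Set.mem_iUnion] at hs
            obtain ⟨n, -, hsn⟩ := hs
            exact hSsub n (hTsub n hsn)
        _ = 1 := by rw [Real.volume_Icc]; norm_num
    -- choose j with B * Cv j < 1
    have htend : Filter.Tendsto (fun j : ℕ => B * Cv j) Filter.atTop (nhds 0) := by
      have hg0 : Filter.Tendsto (fun j : ℕ => q^j) Filter.atTop (nhds 0) :=
        tendsto_pow_atTop_nhds_zero_of_lt_one (le_of_lt hq) hq1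
      have hg1 : Filter.Tendsto (fun j : ℕ => (j:ℝ) * q^j) Filter.atTop (nhds 0) := by
        have hs := summable_pow_mul_geometric_of_norm_lt_one 1 (r := q)
          (by rw [Real.norm_eq_abs, abs_of_pos hq]; exact hq1)
        have := hs.tendsto_atTop_zero
        simpa using this
      have heq : (fun j : ℕ => B * Cv j) =
          fun j : ℕ => (B*K0*(1 + (1/(1-q))/t0)) * q^j + (B*K0/t0) * ((j:ℝ) * q^j) := by
        funext j
        simp only [hCv]
        field_simp
        ring
      rw [heq]
      have := ((hg0.const_mul (B*K0*(1 + (1/(1-q))/t0))).add (hg1.const_mul (B*K0/t0)))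
      simpa using this
    obtain ⟨j, hjlt⟩ := (htend.eventually_lt_const one_pos).exists
    -- choose n with volume (S n) ≤ ofReal (t0^j)
    have hn : ∃ n, MeasureTheory.volume (S n) ≤ ENNReal.ofReal (t0^j) := by
      by_contra h
      push_neg at h
      obtain ⟨N, hN⟩ := exists_nat_gt (1 / t0^j)
      have hN1 : 1 < (N:ℝ) * t0^j := by
        rw [div_lt_iff₀ (pow_pos ht0 j)] at hN
        linarith
      have hlow : (N:ℝ≥0∞) * ENNReal.ofReal (t0^j) ≤ ∑ n ∈ Finset.range N, MeasureTheory.volume (S n) := by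
        calc (N:ℝ≥0∞) * ENNReal.ofReal (t0^j) = ∑ _n ∈ Finset.range N, ENNReal.ofReal (t0^j) := by
              rw [Finset.sum_const, Finset.card_range, nsmul_eq_mul]
          _ ≤ ∑ n ∈ Finset.range N, MeasureTheory.volume (S n) :=
              Finset.sum_le_sum (fun n _ => le_of_lt (h n))
      have hgt : (1:ℝ≥0∞) < (N:ℝ≥0∞) * ENNReal.ofReal (t0^j) := by
        rw [← ENNReal.ofReal_natCast, ← ENNReal.ofReal_mul (Nat.cast_nonneg N)]
        exact ENNReal.one_lt_ofReal.mpr hN1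
      exact absurd (le_trans hlow (hsum N)) (not_le.mpr hgt)
    obtain ⟨n, hns⟩ := hn
    have hb := hmain j (xs n) (hxm n) hns
    have hxn_span : xs n ∈ Submodule.span ℝ (Set.range xs) :=
      Submodule.subset_span (Set.mem_range_self n)
    have h1 := hspan (xs n) hxn_span
    obtain ⟨hpos, hfin⟩ := hnz n
    have h2 : NE.N (xs n) ≤ (ENNReal.ofReal B * ENNReal.ofReal (Cv j)) * NE.N (xs n) := by
      calc NE.N (xs n) ≤ ENNReal.ofReal B * NF.N (xs n) := h1
        _ ≤ ENNReal.ofReal B * (ENNReal.ofReal (Cv j) * NE.N (xs n)) :=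
            mul_le_mul' le_rfl hb
        _ = (ENNReal.ofReal B * ENNReal.ofReal (Cv j)) * NE.N (xs n) := by ring
    have hlt1 : ENNReal.ofReal B * ENNReal.ofReal (Cv j) < 1 := by
      rw [← ENNReal.ofReal_mul (le_of_lt hBpos)]
      exact ENNReal.ofReal_lt_one.mpr hjlt
    have h3 : (ENNReal.ofReal B * ENNReal.ofReal (Cv j)) * NE.N (xs n) < 1 * NE.N (xs n) :=
      ENNReal.mul_lt_mul_left (ne_of_gt hpos) (ne_of_lt hfin) hlt1
    rw [one_mul] at h3
    exact absurd (lt_of_le_of_lt h2 h3) (lt_irrefl _)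
end
end

section
/- Let φ, ψ ∈ G, and suppose there exist u ∈ (0,1] and C > 0 such that ψ(ts)·φ(s) ≤ C·t^u·ψ(s)·φ(ts) for all t, s ∈ (0,1]. Then M_φ(τ) ≤ C·τ^{1-u} for every τ ≥ 1; in particular δ_φ ≤ 1 − u < 1. -/
open MeasureTheory Set Filter Topology
open scoped ENNReal

noncomputable section

lemma concave_scale (g : ℝ → ℝ) (hpos : ∀ t ∈ Set.Ioc (0:ℝ) 1, 0 < g t)
    (hconc : ConcaveOn ℝ (Set.Ioc (0:ℝ) 1) g)
    (a : ℝ) (ha : a ∈ Set.Ioc (0:ℝ) 1) (l : ℝ) (hl0 : 0 < l) (hl1 : l ≤ 1) :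
    l * g a ≤ g (l * a) := by
  rcases eq_or_lt_of_le hl1 with rfl | hl1
  · simp
  · have ha0 := ha.1
    have hla : 0 < l * a := mul_pos hl0 ha0
    have hlaa : l * a < a := by nlinarith
    have key : ∀ ε ∈ Set.Ioo (0:ℝ) (l*a), (l*a - ε)/(a - ε) * g a ≤ g (l*a) := by
      intro ε hε
      have hεa : ε < a := lt_trans hε.2 hlaa
      have hden : 0 < a - ε := by linarith
      set θ : ℝ := (l*a - ε)/(a - ε) with hθ
      have hθ0 : 0 ≤ θ := div_nonneg (by linarith [hε.2]) hden.le
      have hθ1 : θ ≤ 1 := by rw [div_le_one hden]; nlinarith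
      have hεmem : ε ∈ Set.Ioc (0:ℝ) 1 := ⟨hε.1, le_trans hεa.le ha.2⟩
      have hcomb : θ • a + (1-θ) • ε = l * a := by
        simp only [smul_eq_mul, hθ]; field_simp; ring
      have hcc := hconc.2 ha hεmem hθ0 (show (0:ℝ) ≤ 1-θ by linarith) (show θ + (1-θ) = 1 by ring)
      rw [hcomb] at hcc
      have hgε : 0 < g ε := hpos ε hεmem
      simp only [smul_eq_mul] at hcc
      nlinarith
    have heq : (l*a - 0)/(a - 0) * g a = l * g a := by field_simp; ring
    have htend : Tendsto (fun ε : ℝ => (l*a - ε)/(a - ε) * g a) (𝓝[>] 0) (𝓝 (l * g a)) := by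
      rw [← heq]
      refine Tendsto.mono_left ?_ nhdsWithin_le_nhds
      exact (((tendsto_const_nhds.sub tendsto_id).div
        (tendsto_const_nhds.sub tendsto_id) (by simpa using ha0.ne')).mul tendsto_const_nhds)
    refine le_of_tendsto htend ?_
    filter_upwards [Ioo_mem_nhdsGT_of_mem (Set.left_mem_Ico.mpr hla)] with ε hε
    exact key ε hε

/-- If `φ, ψ ∈ G` satisfy `ψ(ts)φ(s) ≤ C t^u ψ(s) φ(ts)` for `t, s ∈ (0,1]`, then
`M_φ(τ) ≤ C τ^{1-u}` for `τ ≥ 1`; in particular `δ_φ ≤ 1 - u < 1`. -/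
theorem dilation_bound_of_conditionB_ineq
    (φ ψ : ℝ → ℝ)
    (hφm : MonotoneOn φ (Set.Ioc (0:ℝ) 1)) (hφpos : ∀ t ∈ Set.Ioc (0:ℝ) 1, 0 < φ t)
    (hφconc : ConcaveOn ℝ (Set.Ioc (0:ℝ) 1) φ)
    (hψm : MonotoneOn ψ (Set.Ioc (0:ℝ) 1)) (hψpos : ∀ t ∈ Set.Ioc (0:ℝ) 1, 0 < ψ t)
    (hψconc : ConcaveOn ℝ (Set.Ioc (0:ℝ) 1) ψ)
    (u C : ℝ) (hu0 : 0 < u) (hu1 : u ≤ 1) (hC : 0 < C)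
    (h : ∀ t ∈ Set.Ioc (0:ℝ) 1, ∀ s ∈ Set.Ioc (0:ℝ) 1,
      ψ (t * s) * φ s ≤ C * t ^ u * ψ s * φ (t * s)) :
    (∀ τ : ℝ, 1 ≤ τ → dilationFn φ τ ≤ C * τ ^ (1 - u)) ∧ upperIndex φ ≤ 1 - u := by
  have hbound : ∀ τ : ℝ, 1 ≤ τ →
      ∀ r ∈ {r : ℝ | ∃ s, 0 < s ∧ s ≤ min 1 (1/τ) ∧ r = φ (s*τ)/φ s}, r ≤ C * τ ^ (1-u) := by
    intro τ hτ r hr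
    obtain ⟨s, hs0, hsle, rfl⟩ := hr
    have hτ0 : (0:ℝ) < τ := lt_of_lt_of_le one_pos hτ
    have hs1τ : s ≤ 1/τ := le_trans hsle (min_le_right _ _)
    have hs1 : s ≤ 1 := le_trans hsle (min_le_left _ _)
    have hsmem : s ∈ Set.Ioc (0:ℝ) 1 := ⟨hs0, hs1⟩
    have hst0 : 0 < s * τ := mul_pos hs0 hτ0
    have hst1 : s * τ ≤ 1 := by
      have := (le_div_iff₀ hτ0).mp hs1τ; linarith
    have hstmem : s * τ ∈ Set.Ioc (0:ℝ) 1 := ⟨hst0, hst1⟩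
    have htmem : (1/τ) ∈ Set.Ioc (0:ℝ) 1 := ⟨by positivity, by rw [div_le_one hτ0]; exact hτ⟩
    have hH := h (1/τ) htmem (s*τ) hstmem
    have hsimp : (1/τ) * (s*τ) = s := by field_simp
    rw [hsimp] at hH
    -- ψ (s*τ) ≤ τ * ψ s
    have hcs := concave_scale ψ hψpos hψconc (s*τ) hstmem (1/τ) (by positivity) htmem.2
    rw [hsimp] at hcs
    have hψb : ψ (s*τ) ≤ τ * ψ s := by
      have e1 : τ * (1/τ * ψ (s*τ)) = ψ (s*τ) := by field_simp
      linarith [mul_le_mul_of_nonneg_left hcs hτ0.le, e1]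
    have hcp : (0:ℝ) < C * (1/τ)^u := by positivity
    have hpow : C * (1/τ)^u * τ = C * τ^((1:ℝ)-u) := by
      rw [show (1:ℝ)-u = -u + 1 by ring, Real.rpow_add hτ0, Real.rpow_one, one_div,
        Real.inv_rpow hτ0.le, ← Real.rpow_neg hτ0.le]
      ring
    rw [div_le_iff₀ (hφpos s hsmem), ← hpow]
    have h1 : C*(1/τ)^u * ψ (s*τ) * φ s ≤ C*(1/τ)^u * (τ*ψ s) * φ s :=
      mul_le_mul_of_nonneg_right (mul_le_mul_of_nonneg_left hψb hcp.le) (hφpos s hsmem).le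
    nlinarith [hψpos s hsmem, hφpos (s*τ) hstmem, hφpos s hsmem]
  have part1 : ∀ τ : ℝ, 1 ≤ τ → dilationFn φ τ ≤ C * τ ^ (1-u) := by
    intro τ hτ
    exact Real.sSup_le (hbound τ hτ) (by positivity)
  refine ⟨part1, ?_⟩
  -- lower bound on dilationFn: for t > 1, 1 ≤ dilationFn φ t
  have Mlb : ∀ t : ℝ, 1 < t → 1 ≤ dilationFn φ t := by
    intro t ht
    have ht0 : (0:ℝ) < t := lt_trans one_pos ht
    have htinv : (1/t) ∈ Set.Ioc (0:ℝ) 1 := ⟨by positivity, by rw [div_le_one ht0]; exact ht.le⟩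
    have hmem : φ ((1/t) * t) / φ (1/t) ∈
        {r : ℝ | ∃ s : ℝ, 0 < s ∧ s ≤ min 1 (1/t) ∧ r = φ (s * t) / φ s} := by
      exact ⟨1/t, htinv.1, le_min htinv.2 le_rfl, rfl⟩
    have hbdd : BddAbove {r : ℝ | ∃ s : ℝ, 0 < s ∧ s ≤ min 1 (1/t) ∧ r = φ (s * t) / φ s} :=
      ⟨C * t ^ (1-u), fun r hr => hbound t ht.le r hr⟩
    have hle := le_csSup hbdd hmem
    have h1t : (1/t) * t = 1 := by field_simp
    rw [h1t] at hle
    have h1mem : (1:ℝ) ∈ Set.Ioc (0:ℝ) 1 := ⟨one_pos, le_rfl⟩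
    have : 1 ≤ φ 1 / φ (1/t) := by
      rw [one_le_div (hφpos _ htinv)]
      exact hφm htinv h1mem htinv.2
    exact le_trans this hle
  have hbddS : BddBelow {r : ℝ | ∃ t : ℝ, 1 < t ∧ r = Real.log (dilationFn φ t) / Real.log t} := by
    refine ⟨0, ?_⟩
    rintro r ⟨t, ht, rfl⟩
    exact div_nonneg (Real.log_nonneg (Mlb t ht)) (Real.log_nonneg ht.le)
  refine le_of_forall_pos_le_add ?_
  intro ε hε
  set T : ℝ := max 2 (Real.exp (|Real.log C| / ε)) with hT
  have hT1 : (1:ℝ) < T := lt_of_lt_of_le one_lt_two (le_max_left _ _)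
  have hT0 : (0:ℝ) < T := lt_trans one_pos hT1
  have hlogT : 0 < Real.log T := Real.log_pos hT1
  have hlogT2 : |Real.log C| / ε ≤ Real.log T := by
    calc |Real.log C| / ε = Real.log (Real.exp (|Real.log C| / ε)) := (Real.log_exp _).symm
    _ ≤ Real.log T := Real.log_le_log (Real.exp_pos _) (le_max_right _ _)
  have hM1 : 1 ≤ dilationFn φ T := Mlb T hT1
  have hM0 : 0 < dilationFn φ T := lt_of_lt_of_le one_pos hM1
  have hMub : dilationFn φ T ≤ C * T ^ ((1:ℝ)-u) := part1 T hT1.le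
  have hxmem : Real.log (dilationFn φ T) / Real.log T ∈
      {r : ℝ | ∃ t : ℝ, 1 < t ∧ r = Real.log (dilationFn φ t) / Real.log t} := ⟨T, hT1, rfl⟩
  have hinf := csInf_le hbddS hxmem
  have hlogM : Real.log (dilationFn φ T) ≤ Real.log C + (1-u) * Real.log T := by
    calc Real.log (dilationFn φ T) ≤ Real.log (C * T ^ ((1:ℝ)-u)) := Real.log_le_log hM0 hMub
    _ = Real.log C + (1-u) * Real.log T := by
        rw [Real.log_mul hC.ne' (by positivity), Real.log_rpow hT0]
  have hx : Real.log (dilationFn φ T) / Real.log T ≤ (1-u) + ε := by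
    rw [div_le_iff₀ hlogT]
    have hC2 : Real.log C ≤ ε * Real.log T := by
      have := (div_le_iff₀ hε).mp hlogT2
      calc Real.log C ≤ |Real.log C| := le_abs_self _
      _ ≤ Real.log T * ε := this
      _ = ε * Real.log T := mul_comm _ _
    nlinarith
  calc upperIndex φ ≤ Real.log (dilationFn φ T) / Real.log T := hinf
  _ ≤ (1-u) + ε := hx
end
end

section
/- Let φ, ψ ∈ G, and suppose there exist C₁ > 0 and u > 0 such that ψ(t) ≤ C₁·t^u·φ(t) for all t ∈ (0,1]. Then lim_{t→0+} ψ(t) = 0 and the Lebesgue–Stieltjes integral ∫_{(0,1]} (1/φ(s)) dψ(s) is finite; that is, the function 1/φ belongs to the Lorentz space Λ(ψ). -/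
open MeasureTheory Set Filter Topology
open scoped ENNReal

noncomputable section

theorem concave_ratio_aux (φ : ℝ → ℝ) (hφpos : ∀ t ∈ Set.Ioc (0:ℝ) 1, 0 < φ t)
    (hφconc : ConcaveOn ℝ (Set.Ioc (0:ℝ) 1) φ)
    {a b : ℝ} (ha : 0 < a) (hab : a ≤ b) (hb1 : b ≤ 1) :
    φ b ≤ (2 * b / a) * φ a := by
  have ha2 : (a/2 : ℝ) ∈ Set.Ioc (0:ℝ) 1 := ⟨by linarith, by linarith⟩
  have hbmem : b ∈ Set.Ioc (0:ℝ) 1 := ⟨by linarith, hb1⟩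
  have hamem : a ∈ Set.Ioc (0:ℝ) 1 := ⟨ha, by linarith⟩
  have hφb : 0 ≤ φ b := (hφpos b hbmem).le
  rcases eq_or_lt_of_le hab with rfl | hlt
  · have h2 : 2 * a / a = 2 := by field_simp
    rw [h2]; linarith
  · set lam := (b - a) / (b - a/2) with hlam
    have hden : (0:ℝ) < b - a/2 := by linarith
    have hlam0 : 0 ≤ lam := div_nonneg (by linarith) hden.le
    have hlam1 : 1 - lam = (a/2) / (b - a/2) := by
      rw [hlam, eq_div_iff hden.ne', sub_mul, one_mul, div_mul_cancel₀ _ hden.ne']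
      ring
    have hlam1' : 0 ≤ 1 - lam := by rw [hlam1]; positivity
    have hcomb : lam • (a/2) + (1 - lam) • b = a := by
      simp only [smul_eq_mul]
      rw [hlam1, hlam, div_mul_eq_mul_div, div_mul_eq_mul_div, ← add_div,
        div_eq_iff hden.ne']
      ring
    have hcc := hφconc.2 ha2 hbmem hlam0 hlam1' (by ring)
    rw [hcomb] at hcc
    simp only [smul_eq_mul] at hcc
    have h1 : (a/2) / (b - a/2) * φ b ≤ φ a := by
      have h0 : 0 < φ (a/2) := hφpos _ ha2
      rw [← hlam1]
      nlinarith
    have h3 : a/(2*b) ≤ (a/2)/(b - a/2) := by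
      rw [show (2*b : ℝ) = 2 * b by ring, ← div_div]
      gcongr
      all_goals linarith
    have h2 : a/(2*b) * φ b ≤ φ a :=
      le_trans (mul_le_mul_of_nonneg_right h3 hφb) h1
    rw [div_mul_eq_mul_div, div_le_iff₀ (by linarith : (0:ℝ) < 2*b)] at h2
    rw [div_mul_eq_mul_div, le_div_iff₀ ha]
    nlinarith


/-- If `φ, ψ ∈ G` and `ψ(t) ≤ C₁ t^u φ(t)` on `(0,1]` with `u > 0`, then `ψ(t) → 0` as `t → 0+`
and `∫_{(0,1]} dψ(s)/φ(s) < ∞`, i.e. `1/φ ∈ Λ(ψ)`. -/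
theorem one_div_phi_mem_lorentz
    (φ ψ : ℝ → ℝ)
    (hφm : MonotoneOn φ (Set.Ioc (0:ℝ) 1)) (hφpos : ∀ t ∈ Set.Ioc (0:ℝ) 1, 0 < φ t)
    (hφconc : ConcaveOn ℝ (Set.Ioc (0:ℝ) 1) φ)
    (hψm : Monotone ψ) (hψpos : ∀ t ∈ Set.Ioc (0:ℝ) 1, 0 < ψ t)
    (hψconc : ConcaveOn ℝ (Set.Ioc (0:ℝ) 1) ψ) (hψ1 : ∀ t : ℝ, 1 ≤ t → ψ t = ψ 1)
    (C₁ u : ℝ) (hC₁ : 0 < C₁) (hu : 0 < u)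
    (hle : ∀ t ∈ Set.Ioc (0:ℝ) 1, ψ t ≤ C₁ * t ^ u * φ t) :
    Filter.Tendsto ψ (nhdsWithin 0 (Set.Ioi 0)) (nhds 0) ∧
    (∫⁻ s in Set.Ioc (0:ℝ) 1, ENNReal.ofReal (1 / φ s)
        ∂hψm.stieltjesFunction.measure) < ⊤ := by
  constructor
  · -- tendsto part
    have hmem : Set.Ioc (0:ℝ) 1 ∈ nhdsWithin (0:ℝ) (Set.Ioi 0) :=
      Ioc_mem_nhdsGT_of_mem (by norm_num : (0:ℝ) ∈ Set.Ico (0:ℝ) 1)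
    have hbd : ∀ᶠ t in nhdsWithin (0:ℝ) (Set.Ioi 0), ψ t ≤ C₁ * φ 1 * t ^ u := by
      refine Filter.eventually_of_mem hmem fun t ht => ?_
      refine le_trans (hle t ht) ?_
      have h1 : φ t ≤ φ 1 := hφm ht (by norm_num) ht.2
      have htu : (0:ℝ) ≤ t ^ u := Real.rpow_nonneg ht.1.le u
      calc C₁ * t ^ u * φ t ≤ C₁ * t ^ u * φ 1 :=
            mul_le_mul_of_nonneg_left h1 (by positivity)
        _ = C₁ * φ 1 * t ^ u := by ring
    have hlim : Filter.Tendsto (fun t : ℝ => C₁ * φ 1 * t ^ u)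
        (nhdsWithin 0 (Set.Ioi 0)) (nhds 0) := by
      have h1 : Filter.Tendsto (fun t : ℝ => t ^ u) (nhdsWithin 0 (Set.Ioi 0)) (nhds 0) := by
        have := (Real.continuousAt_rpow_const 0 u (Or.inr hu.le)).tendsto
        rw [Real.zero_rpow hu.ne'] at this
        exact this.mono_left nhdsWithin_le_nhds
      simpa using h1.const_mul (C₁ * φ 1)
    exact squeeze_zero' (Filter.eventually_of_mem hmem fun t ht => (hψpos t ht).le) hbd hlim
  · -- integral part
    classical
    set sf := hψm.stieltjesFunction with hsfdef
    set μ := sf.measure with hμdef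
    set c : ℕ → ℝ := fun n => (1/2:ℝ)^n with hc
    have hcpos : ∀ n, 0 < c n := fun n => by positivity
    have hcle1 : ∀ n, c n ≤ 1 := fun n => pow_le_one₀ (by norm_num) (by norm_num)
    have hcsucc : ∀ n, c (n+1) = c n / 2 := fun n => by
      simp only [hc, pow_succ]; ring
    have hcmem : ∀ n, c n ∈ Set.Ioc (0:ℝ) 1 := fun n => ⟨hcpos n, hcle1 n⟩
    -- value of stieltjes function
    have hsfval : ∀ x, sf x = Function.rightLim ψ x := fun x => hψm.stieltjesFunction_eq x
    -- key bound on sf (c n)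
    have hK : ∀ n : ℕ, sf (c n) ≤ 8 * C₁ * (2:ℝ)^u * (c n)^u * φ (c (n+1)) := by
      intro n
      set b := min (2 * c n) 1 with hb
      have hb0 : 0 < b := lt_min (by linarith [hcpos n]) one_pos
      have hb1 : b ≤ 1 := min_le_right _ _
      have hbmem : b ∈ Set.Ioc (0:ℝ) 1 := ⟨hb0, hb1⟩
      have hb2cn : b ≤ 2 * c n := min_le_left _ _
      have hcn1b : c (n+1) ≤ b := by
        rw [hcsucc]
        exact le_min (by linarith [hcpos n]) (by linarith [hcle1 n])
      have h1 : sf (c n) ≤ ψ (2 * c n) := by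
        rw [hsfval]
        exact hψm.rightLim_le (by linarith [hcpos n])
      have h2 : ψ (2 * c n) = ψ b := by
        rcases le_total (2 * c n) 1 with h | h
        · rw [hb, min_eq_left h]
        · rw [hb, min_eq_right h, hψ1 _ h]
      have h3 : ψ b ≤ C₁ * b ^ u * φ b := hle b hbmem
      have h4 : b ^ u ≤ (2 * c n) ^ u := Real.rpow_le_rpow hb0.le hb2cn hu.le
      have h5 : φ b ≤ 8 * φ (c (n+1)) := by
        have := concave_ratio_aux φ hφpos hφconc (hcpos (n+1)) hcn1b hb1
        have hratio : 2 * b / c (n+1) ≤ 8 := by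
          rw [div_le_iff₀ (hcpos (n+1))]
          rw [hcsucc]
          linarith
        have hφpos' := hφpos _ (hcmem (n+1))
        nlinarith
      have h6 : (2 * c n) ^ u = (2:ℝ)^u * (c n)^u :=
        Real.mul_rpow (by norm_num) (hcpos n).le
      have hbu : (0:ℝ) ≤ b ^ u := Real.rpow_nonneg hb0.le u
      have hcnu : (0:ℝ) ≤ (c n) ^ u := Real.rpow_nonneg (hcpos n).le u
      have h2u : (0:ℝ) < (2:ℝ)^u := Real.rpow_pos_of_pos (by norm_num) u
      have hφb : 0 ≤ φ b := (hφpos b hbmem).le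
      have hφc : 0 < φ (c (n+1)) := hφpos _ (hcmem (n+1))
      calc sf (c n) ≤ C₁ * b ^ u * φ b := (h1.trans_eq h2).trans h3
        _ ≤ C₁ * b ^ u * (8 * φ (c (n+1))) :=
            mul_le_mul_of_nonneg_left h5 (by positivity)
        _ ≤ C₁ * ((2:ℝ)^u * (c n)^u) * (8 * φ (c (n+1))) := by
            rw [← h6]
            exact mul_le_mul_of_nonneg_right
              (mul_le_mul_of_nonneg_left h4 hC₁.le) (by positivity)
        _ = 8 * C₁ * (2:ℝ)^u * (c n)^u * φ (c (n+1)) := by ring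
    -- sf nonneg on positives
    have hsf0 : ∀ n, 0 ≤ sf (c n) := fun n => by
      rw [hsfval]
      exact le_trans (hψpos _ (hcmem n)).le (hψm.le_rightLim le_rfl)
    -- per-interval bound
    set K := 8 * C₁ * (2:ℝ)^u with hKdef
    set r := ((1/2:ℝ)) ^ u with hrdef
    have hr0 : 0 ≤ r := Real.rpow_nonneg (by norm_num) u
    have hr1 : r < 1 := Real.rpow_lt_one (by norm_num) (by norm_num) hu
    have hcnu_eq : ∀ n : ℕ, (c n) ^ u = r ^ n := by
      intro n
      show ((1/2:ℝ)^n) ^ u = ((1/2:ℝ)^u) ^ n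
      rw [← Real.rpow_natCast (1/2 : ℝ) n, ← Real.rpow_mul (by norm_num),
        mul_comm, Real.rpow_mul (by norm_num), Real.rpow_natCast]
    have hint : ∀ n : ℕ, (∫⁻ s in Set.Ioc (c (n+1)) (c n), ENNReal.ofReal (1 / φ s) ∂μ)
        ≤ ENNReal.ofReal (K * r ^ n) := by
      intro n
      have hφc : 0 < φ (c (n+1)) := hφpos _ (hcmem (n+1))
      have step1 : (∫⁻ s in Set.Ioc (c (n+1)) (c n), ENNReal.ofReal (1 / φ s) ∂μ)
          ≤ (∫⁻ _ in Set.Ioc (c (n+1)) (c n), ENNReal.ofReal (1 / φ (c (n+1))) ∂μ) := by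
        refine setLIntegral_mono measurable_const fun x hx => ?_
        refine ENNReal.ofReal_le_ofReal ?_
        have hxmem : x ∈ Set.Ioc (0:ℝ) 1 := ⟨lt_trans (hcpos (n+1)) hx.1, hx.2.trans (hcle1 n)⟩
        have : φ (c (n+1)) ≤ φ x := hφm (hcmem (n+1)) hxmem hx.1.le
        exact one_div_le_one_div_of_le hφc this
      rw [setLIntegral_const] at step1
      have hμIoc : μ (Set.Ioc (c (n+1)) (c n)) = ENNReal.ofReal (sf (c n) - sf (c (n+1))) :=
        sf.measure_Ioc _ _
      refine step1.trans ?_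
      rw [hμIoc, ← ENNReal.ofReal_mul (by positivity)]
      refine ENNReal.ofReal_le_ofReal ?_
      have h1 : sf (c n) - sf (c (n+1)) ≤ sf (c n) := by linarith [hsf0 (n+1)]
      have h2 : 1 / φ (c (n+1)) * (sf (c n) - sf (c (n+1))) ≤ 1 / φ (c (n+1)) * sf (c n) :=
        mul_le_mul_of_nonneg_left h1 (by positivity)
      refine h2.trans ?_
      have h3 : 1 / φ (c (n+1)) * sf (c n) ≤ 1 / φ (c (n+1)) * (K * (c n)^u * φ (c (n+1))) := by
        refine mul_le_mul_of_nonneg_left ?_ (by positivity)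
        calc sf (c n) ≤ 8 * C₁ * (2:ℝ)^u * (c n)^u * φ (c (n+1)) := hK n
          _ = K * (c n)^u * φ (c (n+1)) := by rw [hKdef]
      refine h3.trans ?_
      rw [hcnu_eq]
      field_simp
      exact le_rfl
    -- union decomposition
    have hunion : Set.Ioc (0:ℝ) 1 = ⋃ n : ℕ, Set.Ioc (c (n+1)) (c n) := by
      ext x
      simp only [Set.mem_iUnion, Set.mem_Ioc]
      constructor
      · rintro ⟨hx0, hx1⟩
        obtain ⟨n, hn⟩ := exists_pow_lt_of_lt_one hx0 (by norm_num : (1/2:ℝ) < 1)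
        have hex : ∃ m, (1/2:ℝ)^m < x := ⟨n, hn⟩
        have hm : (1/2:ℝ)^(Nat.find hex) < x := Nat.find_spec hex
        have hm0 : Nat.find hex ≠ 0 := by
          intro h
          rw [h] at hm; simp at hm; linarith
        obtain ⟨k, hk⟩ := Nat.exists_eq_succ_of_ne_zero hm0
        rw [hk] at hm
        have hk2 : ¬ ((1/2:ℝ)^k < x) := Nat.find_min hex (by omega)
        exact ⟨k, hm, not_lt.mp hk2⟩
      · rintro ⟨n, h1, h2⟩
        exact ⟨lt_trans (hcpos (n+1)) h1, le_trans h2 (hcle1 n)⟩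
    rw [hunion]
    calc (∫⁻ s in ⋃ n : ℕ, Set.Ioc (c (n+1)) (c n), ENNReal.ofReal (1 / φ s) ∂μ)
        ≤ ∑' n : ℕ, ∫⁻ s in Set.Ioc (c (n+1)) (c n), ENNReal.ofReal (1 / φ s) ∂μ :=
          lintegral_iUnion_le _ _
      _ ≤ ∑' n : ℕ, ENNReal.ofReal (K * r ^ n) := ENNReal.tsum_le_tsum hint
      _ = ∑' n : ℕ, ENNReal.ofReal K * (ENNReal.ofReal r) ^ n := by
          congr 1; ext n
          rw [← ENNReal.ofReal_pow hr0, ← ENNReal.ofReal_mul (by positivity)]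
      _ = ENNReal.ofReal K * ∑' n : ℕ, (ENNReal.ofReal r) ^ n := ENNReal.tsum_mul_left
      _ < ⊤ := by
          rw [ENNReal.tsum_geometric]
          refine ENNReal.mul_lt_top ENNReal.ofReal_lt_top ?_
          exact ENNReal.inv_lt_top.mpr
            (tsub_pos_of_lt (ENNReal.ofReal_lt_one.mpr hr1))
end
end

section
/- Let 1 < p < ∞ and let φ(t) = t^{1/p}. Then the identity inclusion of the Lorentz space Λ(t^{1/p}) into L_p[0,1] is disjointly strictly singular: there exist no sequence (x_n) of measurable functions on [0,1] with pairwise disjoint supports (x_n·x_m = 0 a.e. for n ≠ m) and 0 < ‖x_n‖_{Λ(t^{1/p})} < ∞ for all n, and no constant B > 0, such that ‖y‖_{Λ(t^{1/p})} ≤ B·‖y‖_{L_p[0,1]} for every y in the linear span of {x_n}. -/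
open MeasureTheory Set Filter Topology
open scoped ENNReal

noncomputable section

/-- Lorentz functional for `φ(t) = t^{1/p}`:
`‖x‖_{Λ(t^{1/p})} = ∫_{(0,1]} x*(s) d(s^{1/p}) = (1/p) ∫₀¹ x*(s) s^{1/p - 1} ds`. -/
def lorentzP (p : ℝ) (x : ℝ → ℝ) : ℝ≥0∞ :=
  ∫⁻ s in Set.Ioc (0:ℝ) 1, ENNReal.ofReal (rearr x s * ((1/p) * s ^ (1/p - 1)))

/-- `‖y‖_{L_p[0,1]} = (∫₀¹ |y|^p)^{1/p}`. -/
def LpNorm (p : ℝ) (y : ℝ → ℝ) : ℝ≥0∞ :=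
  (∫⁻ s in Set.Icc (0:ℝ) 1, ENNReal.ofReal |y s| ^ p) ^ (1/p)


namespace LorentzDSS


theorem distr_anti (x : ℝ → ℝ) : Antitone (distr x) := fun a b hab =>
  measure_mono fun s hs => ⟨hs.1, lt_of_le_of_lt hab hs.2⟩

theorem distr_le_one (x : ℝ → ℝ) (τ : ℝ) : distr x τ ≤ 1 :=
  le_trans (measure_mono (Set.sep_subset _ _)) (by simp [Real.volume_Icc])

theorem distr_ne_top (x : ℝ → ℝ) (τ : ℝ) : distr x τ ≠ ⊤ :=
  (lt_of_le_of_lt (distr_le_one x τ) ENNReal.one_lt_top).ne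

theorem distr_measurable (x : ℝ → ℝ) : Measurable (distr x) :=
  Antitone.measurable (distr_anti x)

theorem distr_setMeasurable {x : ℝ → ℝ} (hx : Measurable x) (τ : ℝ) :
    MeasurableSet {s ∈ Set.Icc (0:ℝ) 1 | τ < |x s|} :=
  measurableSet_Icc.inter (measurableSet_lt measurable_const hx.abs)

theorem distr_tendsto {x : ℝ → ℝ} (hx : Measurable x) :
    Tendsto (fun n : ℕ => distr x n) atTop (𝓝 0) := by
  have h := tendsto_measure_iInter_atTop (μ := volume)
    (s := fun n : ℕ => {s ∈ Set.Icc (0:ℝ) 1 | (n : ℝ) < |x s|})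
    (fun n => (distr_setMeasurable hx n).nullMeasurableSet)
    (fun n m hnm => fun s hs => ⟨hs.1, lt_of_le_of_lt (by exact_mod_cast hnm) hs.2⟩)
    ⟨0, distr_ne_top x ((0:ℕ):ℝ)⟩
  have hempty : (⋂ n : ℕ, {s ∈ Set.Icc (0:ℝ) 1 | (n : ℝ) < |x s|}) = ∅ := by
    ext s
    simp only [Set.mem_iInter, Set.mem_sep_iff, Set.mem_empty_iff_false, iff_false, not_forall]
    obtain ⟨n, hn⟩ := exists_nat_gt |x s|
    exact ⟨n, fun h => absurd h.2 (not_lt.2 hn.le)⟩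
  rw [hempty] at h
  rw [measure_empty] at h
  exact h

theorem rearr_nonneg (x : ℝ → ℝ) (t : ℝ) : 0 ≤ rearr x t :=
  Real.sInf_nonneg fun _ hτ => hτ.1

theorem rearr_eq_zero (x : ℝ → ℝ) {t : ℝ} (ht : 1 ≤ t) : rearr x t = 0 := by
  refine le_antisymm (csInf_le ⟨0, fun τ hτ => hτ.1⟩ ?_) (rearr_nonneg x t)
  exact ⟨le_refl 0, le_trans (distr_le_one x 0) (ENNReal.one_le_ofReal.2 ht)⟩

theorem vol_gt {x : ℝ → ℝ} (hx : Measurable x) {s : ℝ} (hs : 0 < s) :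
    volume {τ : ℝ | τ ∈ Set.Ioi (0:ℝ) ∧ ENNReal.ofReal s < distr x τ}
      = ENNReal.ofReal (rearr x s) := by
  set S := {τ : ℝ | 0 ≤ τ ∧ distr x τ ≤ ENNReal.ofReal s} with hS
  have hSne : S.Nonempty := by
    have h0 : (0 : ℝ≥0∞) < ENNReal.ofReal s := ENNReal.ofReal_pos.2 hs
    obtain ⟨n, hn⟩ := ((distr_tendsto hx).eventually (eventually_lt_nhds h0)).exists
    exact ⟨n, Nat.cast_nonneg n, hn.le⟩
  have hbdd : BddBelow S := ⟨0, fun τ hτ => hτ.1⟩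
  have hr : rearr x s = sInf S := rfl
  have h0r : 0 ≤ rearr x s := rearr_nonneg x s
  apply le_antisymm
  · have hsub : {τ : ℝ | τ ∈ Set.Ioi (0:ℝ) ∧ ENNReal.ofReal s < distr x τ}
        ⊆ Set.Ioc 0 (rearr x s) := by
      rintro τ ⟨hτpos, hτgt⟩
      refine ⟨hτpos, ?_⟩
      by_contra hcon
      push_neg at hcon
      rw [hr] at hcon
      obtain ⟨τ', hτ'S, hτ'lt⟩ := exists_lt_of_csInf_lt hSne hcon
      exact absurd (le_trans (distr_anti x hτ'lt.le) hτ'S.2) (not_le.2 hτgt)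
    calc volume {τ : ℝ | τ ∈ Set.Ioi (0:ℝ) ∧ ENNReal.ofReal s < distr x τ}
        ≤ volume (Set.Ioc 0 (rearr x s)) := measure_mono hsub
      _ = ENNReal.ofReal (rearr x s) := by rw [Real.volume_Ioc, sub_zero]
  · have hsub : Set.Ioo 0 (rearr x s)
        ⊆ {τ : ℝ | τ ∈ Set.Ioi (0:ℝ) ∧ ENNReal.ofReal s < distr x τ} := by
      rintro τ ⟨h0τ, hτr⟩
      refine ⟨h0τ, ?_⟩
      have hτnS : τ ∉ S := fun hmem => absurd (csInf_le hbdd hmem) (not_le.2 (hr ▸ hτr))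
      rw [hS, Set.mem_setOf_eq] at hτnS
      push_neg at hτnS
      exact hτnS h0τ.le
    calc ENNReal.ofReal (rearr x s) = volume (Set.Ioo 0 (rearr x s)) := by
          rw [Real.volume_Ioo, sub_zero]
      _ ≤ _ := measure_mono hsub


def J (p : ℝ) (x : ℝ → ℝ) : ℝ≥0∞ := ∫⁻ τ in Set.Ioi (0:ℝ), (distr x τ) ^ (1/p)

theorem lintegral_image_deriv {s : Set ℝ} {f f' : ℝ → ℝ} (hs : MeasurableSet s)
    (hf' : ∀ x ∈ s, HasDerivWithinAt f (f' x) s x) (hf : Set.InjOn f s) (g : ℝ → ℝ≥0∞) :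
    ∫⁻ x in f '' s, g x = ∫⁻ x in s, ENNReal.ofReal |f' x| * g (f x) := by
  simpa only [ContinuousLinearMap.det_toSpanSingleton] using
    MeasureTheory.lintegral_image_eq_lintegral_abs_det_fderiv_mul volume hs
      (fun x hx => (hf' x hx).hasFDerivWithinAt) hf g

theorem lorentzP_eq {p : ℝ} (hp : 1 < p) {x : ℝ → ℝ} (hx : Measurable x) :
    lorentzP p x = J p x := by
  have hp0 : (0:ℝ) < p := lt_trans one_pos hp
  have hip : (0:ℝ) < 1/p := by positivity
  -- step 1 : pointwise description of the rpow of distr as a measure of a section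
  have key : ∀ τ : ℝ, (distr x τ) ^ (1/p)
      = volume {u : ℝ | u ∈ Set.Ioi (0:ℝ) ∧ ENNReal.ofReal (u ^ p) < distr x τ} := by
    intro τ
    have hne := distr_ne_top x τ
    have hDnn : (0:ℝ) ≤ (distr x τ).toReal := ENNReal.toReal_nonneg
    have hset : {u : ℝ | u ∈ Set.Ioi (0:ℝ) ∧ ENNReal.ofReal (u ^ p) < distr x τ}
        = Set.Ioo 0 ((distr x τ).toReal ^ (1/p)) := by
      ext u
      simp only [Set.mem_setOf_eq, Set.mem_Ioi, Set.mem_Ioo]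
      constructor
      · rintro ⟨hu, hlt⟩
        refine ⟨hu, ?_⟩
        have h1 : u ^ p < (distr x τ).toReal :=
          (ENNReal.ofReal_lt_iff_lt_toReal (Real.rpow_nonneg hu.le p) hne).1 hlt
        have h2 : (u ^ p) ^ (1/p) < (distr x τ).toReal ^ (1/p) :=
          Real.rpow_lt_rpow (Real.rpow_nonneg hu.le p) h1 hip
        rwa [← Real.rpow_mul hu.le, mul_one_div, div_self hp0.ne', Real.rpow_one] at h2
      · rintro ⟨hu, hlt⟩
        refine ⟨hu, ?_⟩
        have h1 : u ^ p < ((distr x τ).toReal ^ (1/p)) ^ p :=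
          Real.rpow_lt_rpow hu.le hlt hp0
        rw [← Real.rpow_mul hDnn, one_div_mul_cancel hp0.ne', Real.rpow_one] at h1
        exact (ENNReal.ofReal_lt_iff_lt_toReal (Real.rpow_nonneg hu.le p) hne).2 h1
    rw [hset, Real.volume_Ioo, sub_zero, ENNReal.toReal_rpow,
      ENNReal.ofReal_toReal (ENNReal.rpow_ne_top_of_nonneg hip.le hne)]
  -- step 2 : Tonelli swap
  set A : Set (ℝ × ℝ) := {q : ℝ × ℝ | ENNReal.ofReal (q.2 ^ p) < distr x q.1} with hA
  have hAmeas : MeasurableSet A := by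
    apply measurableSet_lt
    · exact ENNReal.measurable_ofReal.comp (measurable_snd.pow measurable_const)
    · exact (distr_measurable x).comp measurable_fst
  have swap : (∫⁻ τ in Set.Ioi (0:ℝ), (distr x τ) ^ (1/p))
      = ∫⁻ u in Set.Ioi (0:ℝ), ENNReal.ofReal (rearr x (u ^ p)) := by
    have hsec : ∀ τ : ℝ, MeasurableSet {u : ℝ | ENNReal.ofReal (u ^ p) < distr x τ} :=
      fun τ => measurableSet_lt (ENNReal.measurable_ofReal.comp
        (measurable_id.pow measurable_const)) measurable_const
    have hsec2 : ∀ u : ℝ, MeasurableSet {τ : ℝ | ENNReal.ofReal (u ^ p) < distr x τ} :=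
      fun u => measurableSet_lt measurable_const (distr_measurable x)
    calc (∫⁻ τ in Set.Ioi (0:ℝ), (distr x τ) ^ (1/p))
        = ∫⁻ τ in Set.Ioi (0:ℝ), ∫⁻ u in Set.Ioi (0:ℝ),
            A.indicator (fun _ => (1:ℝ≥0∞)) (τ, u) := by
          apply lintegral_congr
          intro τ
          have heq : ∀ u : ℝ, A.indicator (fun _ => (1:ℝ≥0∞)) (τ, u)
              = {u : ℝ | ENNReal.ofReal (u ^ p) < distr x τ}.indicator
                  (fun _ => (1:ℝ≥0∞)) u := by
            intro u
            simp only [Set.indicator_apply, hA, Set.mem_setOf_eq]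
          rw [lintegral_congr heq, lintegral_indicator (hsec τ),
            Measure.restrict_restrict (hsec τ), setLIntegral_one, key τ]
          congr 1
          ext u
          simp only [Set.mem_inter_iff, Set.mem_setOf_eq, Set.mem_Ioi, and_comm]
      _ = ∫⁻ u in Set.Ioi (0:ℝ), ∫⁻ τ in Set.Ioi (0:ℝ),
            A.indicator (fun _ => (1:ℝ≥0∞)) (τ, u) := by
          apply lintegral_lintegral_swap
          exact ((measurable_const.indicator hAmeas).aemeasurable)
      _ = ∫⁻ u in Set.Ioi (0:ℝ), ENNReal.ofReal (rearr x (u ^ p)) := by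
          apply setLIntegral_congr_fun measurableSet_Ioi
          intro u hu
          dsimp only
          have heq : ∀ τ : ℝ, A.indicator (fun _ => (1:ℝ≥0∞)) (τ, u)
              = {τ : ℝ | ENNReal.ofReal (u ^ p) < distr x τ}.indicator
                  (fun _ => (1:ℝ≥0∞)) τ := by
            intro τ
            simp only [Set.indicator_apply, hA, Set.mem_setOf_eq]
          rw [lintegral_congr heq, lintegral_indicator (hsec2 u),
            Measure.restrict_restrict (hsec2 u), setLIntegral_one,
            ← vol_gt hx (Real.rpow_pos_of_pos hu p)]
          congr 1
          ext τ
          simp only [Set.mem_inter_iff, Set.mem_setOf_eq, Set.mem_Ioi, and_comm]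
  -- step 3 : truncate to (0,1]
  have trunc : (∫⁻ u in Set.Ioi (0:ℝ), ENNReal.ofReal (rearr x (u ^ p)))
      = ∫⁻ u in Set.Ioc (0:ℝ) 1, ENNReal.ofReal (rearr x (u ^ p)) := by
    rw [← Set.Ioc_union_Ioi_eq_Ioi (zero_le_one (α := ℝ)),
      lintegral_union measurableSet_Ioi (Set.Ioc_disjoint_Ioi le_rfl)]
    have : (∫⁻ u in Set.Ioi (1:ℝ), ENNReal.ofReal (rearr x (u ^ p))) = 0 := by
      rw [setLIntegral_congr_fun (f := fun u => ENNReal.ofReal (rearr x (u ^ p)))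
        (g := fun _ => (0:ℝ≥0∞)) measurableSet_Ioi
        (fun u (hu : u ∈ Set.Ioi (1:ℝ)) => by
          show ENNReal.ofReal (rearr x (u ^ p)) = 0
          rw [rearr_eq_zero x (Real.one_le_rpow (le_of_lt hu) hp0.le), ENNReal.ofReal_zero])]
      simp
    rw [this, add_zero]
  -- step 4 : substitution u = s^(1/p)
  have himg : (fun s : ℝ => s ^ (1/p)) '' Set.Ioc 0 1 = Set.Ioc (0:ℝ) 1 := by
    ext u
    constructor
    · rintro ⟨s, hs, rfl⟩
      exact ⟨Real.rpow_pos_of_pos hs.1 _, Real.rpow_le_one hs.1.le hs.2 hip.le⟩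
    · intro hu
      refine ⟨u ^ p, ⟨Real.rpow_pos_of_pos hu.1 _, Real.rpow_le_one hu.1.le hu.2 hp0.le⟩, ?_⟩
      show (u ^ p) ^ (1/p) = u
      rw [← Real.rpow_mul hu.1.le, mul_one_div, div_self hp0.ne', Real.rpow_one]
  have hderiv : ∀ s ∈ Set.Ioc (0:ℝ) 1, HasDerivWithinAt (fun s : ℝ => s ^ (1/p))
      ((1/p) * s ^ (1/p - 1)) (Set.Ioc 0 1) s := fun s hs =>
    (Real.hasDerivAt_rpow_const (Or.inl hs.1.ne')).hasDerivWithinAt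
  have hinj : Set.InjOn (fun s : ℝ => s ^ (1/p)) (Set.Ioc 0 1) := by
    intro a ha b hb h
    have h' : a ^ (1/p) = b ^ (1/p) := h
    have h2 : (a ^ (1/p)) ^ p = (b ^ (1/p)) ^ p := by rw [h']
    rwa [← Real.rpow_mul ha.1.le, ← Real.rpow_mul hb.1.le, one_div_mul_cancel hp0.ne',
      Real.rpow_one, Real.rpow_one] at h2
  have sub : (∫⁻ u in Set.Ioc (0:ℝ) 1, ENNReal.ofReal (rearr x (u ^ p))) = lorentzP p x := by
    rw [← himg, lintegral_image_deriv measurableSet_Ioc hderiv hinj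
      (fun u => ENNReal.ofReal (rearr x (u ^ p)))]
    apply setLIntegral_congr_fun measurableSet_Ioc
    intro s hs
    dsimp only
    have hcol : (s ^ (1/p)) ^ p = s := by
      rw [← Real.rpow_mul hs.1.le, one_div_mul_cancel hp0.ne', Real.rpow_one]
    have hnn : (0:ℝ) ≤ (1/p) * s ^ (1/p - 1) := by
      have := Real.rpow_nonneg hs.1.le (1/p - 1)
      positivity
    rw [hcol, abs_of_nonneg hnn, ← ENNReal.ofReal_mul hnn, mul_comm]
  rw [J, ← sub, ← trunc, ← swap]

theorem distr_const_mul {c : ℝ} (hc : 0 < c) (x : ℝ → ℝ) (τ : ℝ) :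
    distr (fun s => c * x s) τ = distr x (τ / c) := by
  unfold distr
  congr 1
  ext s
  simp only [Set.mem_sep_iff, abs_mul, abs_of_pos hc]
  rw [div_lt_iff₀ hc, mul_comm]

theorem J_const_mul (p : ℝ) {c : ℝ} (hc : 0 < c) (x : ℝ → ℝ) :
    J p (fun s => c * x s) = ENNReal.ofReal c * J p x := by
  have himg : (fun t : ℝ => c * t) '' Set.Ioi 0 = Set.Ioi (0:ℝ) := by
    rw [Set.image_const_mul_Ioi_zero hc]
  have hderiv : ∀ t ∈ Set.Ioi (0:ℝ), HasDerivWithinAt (fun t : ℝ => c * t) c (Set.Ioi 0) t :=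
    fun t _ => by simpa using ((hasDerivAt_id t).const_mul c).hasDerivWithinAt
  have hinj : Set.InjOn (fun t : ℝ => c * t) (Set.Ioi 0) :=
    fun a _ b _ h => by
      have : c * a = c * b := h
      exact mul_left_cancel₀ hc.ne' this
  calc J p (fun s => c * x s)
      = ∫⁻ τ in Set.Ioi (0:ℝ), (distr x (τ / c)) ^ (1/p) := by
        unfold J; apply lintegral_congr; intro τ; rw [distr_const_mul hc]
    _ = ∫⁻ τ in (fun t : ℝ => c * t) '' Set.Ioi 0, (distr x (τ / c)) ^ (1/p) := by rw [himg]
    _ = ∫⁻ t in Set.Ioi (0:ℝ), ENNReal.ofReal |c| * (distr x ((c * t) / c)) ^ (1/p) :=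
        lintegral_image_deriv measurableSet_Ioi hderiv hinj
          (fun τ => (distr x (τ / c)) ^ (1/p))
    _ = ENNReal.ofReal c * J p x := by
        rw [lintegral_const_mul' (ENNReal.ofReal |c|) _ ENNReal.ofReal_ne_top, abs_of_pos hc]
        congr 1
        apply lintegral_congr
        intro t
        rw [mul_div_cancel_left₀ _ hc.ne']

theorem mul_rpow_le_J {p : ℝ} (hp : 1 < p) (x : ℝ → ℝ) {t : ℝ} (ht : 0 < t) :
    ENNReal.ofReal t * (distr x t) ^ (1/p) ≤ J p x := by
  have hip : (0:ℝ) < 1/p := by positivity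
  calc ENNReal.ofReal t * (distr x t) ^ (1/p)
      = ∫⁻ _ in Set.Ioc (0:ℝ) t, (distr x t) ^ (1/p) := by
        rw [setLIntegral_const, Real.volume_Ioc, sub_zero, mul_comm]
    _ ≤ ∫⁻ τ in Set.Ioc (0:ℝ) t, (distr x τ) ^ (1/p) := by
        apply setLIntegral_mono' measurableSet_Ioc
        intro τ hτ
        exact ENNReal.rpow_le_rpow (distr_anti x hτ.2) hip.le
    _ ≤ J p x := lintegral_mono_set Set.Ioc_subset_Ioi_self

theorem lp_int_le {p : ℝ} (hp : 1 < p) {x : ℝ → ℝ} (hx : Measurable x) :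
    (∫⁻ s in Set.Icc (0:ℝ) 1, ENNReal.ofReal |x s| ^ p) ≤ ENNReal.ofReal p * (J p x) ^ p := by
  have hp0 : (0:ℝ) < p := lt_trans one_pos hp
  have hip : (0:ℝ) < 1/p := by positivity
  have hp1 : (0:ℝ) ≤ p - 1 := by linarith
  -- rewrite LHS with the layer cake formula
  have h1 : (∫⁻ s in Set.Icc (0:ℝ) 1, ENNReal.ofReal |x s| ^ p)
      = ∫⁻ s in Set.Icc (0:ℝ) 1, ENNReal.ofReal (|x s| ^ p) := by
    apply lintegral_congr
    intro s
    rw [ENNReal.ofReal_rpow_of_nonneg (abs_nonneg _) hp0.le]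
  have hlc := MeasureTheory.lintegral_rpow_eq_lintegral_meas_lt_mul
    (volume.restrict (Set.Icc (0:ℝ) 1)) (f := fun s => |x s|)
    (ae_of_all _ (fun s => abs_nonneg (x s))) hx.abs.aemeasurable hp0
  have hres : ∀ t : ℝ, (volume.restrict (Set.Icc (0:ℝ) 1)) {a : ℝ | t < |x a|} = distr x t := by
    intro t
    rw [Measure.restrict_apply (measurableSet_lt measurable_const hx.abs)]
    unfold distr
    congr 1
    ext s
    simp only [Set.mem_inter_iff, Set.mem_setOf_eq, Set.mem_sep_iff, Set.mem_Icc, and_comm]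
  rw [h1, hlc]
  apply mul_le_mul_right
  -- pointwise bound then integrate
  have hpt : ∀ t ∈ Set.Ioi (0:ℝ),
      (volume.restrict (Set.Icc (0:ℝ) 1)) {a : ℝ | t < |x a|} * ENNReal.ofReal (t ^ (p-1))
        ≤ (distr x t) ^ (1/p) * (J p x) ^ (p-1) := by
    intro t ht
    rw [hres t]
    by_cases hd : distr x t = 0
    · rw [hd, zero_mul]
      exact zero_le
    · have hkey : ENNReal.ofReal t * (distr x t) ^ (1/p) ≤ J p x := mul_rpow_le_J hp x ht
      have h2 : (ENNReal.ofReal t * (distr x t) ^ (1/p)) ^ (p-1) ≤ (J p x) ^ (p-1) :=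
        ENNReal.rpow_le_rpow hkey hp1
      rw [ENNReal.mul_rpow_of_nonneg _ _ hp1] at h2
      have hof : ENNReal.ofReal (t ^ (p-1)) = (ENNReal.ofReal t) ^ (p-1) :=
        (ENNReal.ofReal_rpow_of_pos ht).symm
      have hone : (1:ℝ)/p + (1/p) * (p-1) = 1 := by field_simp; ring
      have hd_eq : distr x t = (distr x t) ^ (1/p) * ((distr x t) ^ (1/p)) ^ (p-1) := by
        rw [← ENNReal.rpow_mul, ← ENNReal.rpow_add _ _ hd (distr_ne_top x t), hone,
          ENNReal.rpow_one]
      calc distr x t * ENNReal.ofReal (t ^ (p-1))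
          = ((distr x t) ^ (1/p) * ((distr x t) ^ (1/p)) ^ (p-1))
              * (ENNReal.ofReal t) ^ (p-1) := by rw [← hd_eq, hof]
        _ = (distr x t) ^ (1/p)
              * ((ENNReal.ofReal t) ^ (p-1) * ((distr x t) ^ (1/p)) ^ (p-1)) := by ring
        _ ≤ (distr x t) ^ (1/p) * (J p x) ^ (p-1) := mul_le_mul_right h2 _
  have hJJ : J p x * (J p x) ^ (p-1) = (J p x) ^ p := by
    rcases eq_or_ne (J p x) 0 with h0 | h0
    · rw [h0, ENNReal.zero_rpow_of_pos (by linarith : (0:ℝ) < p - 1),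
        ENNReal.zero_rpow_of_pos hp0, mul_zero]
    rcases eq_or_ne (J p x) ⊤ with htop | htop
    · rw [htop, ENNReal.top_rpow_of_pos (by linarith : (0:ℝ) < p - 1),
        ENNReal.top_rpow_of_pos hp0, ENNReal.top_mul_top]
    · nth_rewrite 1 [← ENNReal.rpow_one (J p x)]
      rw [← ENNReal.rpow_add _ _ h0 htop]
      norm_num
  calc (∫⁻ t in Set.Ioi (0:ℝ), (volume.restrict (Set.Icc (0:ℝ) 1)) {a : ℝ | t < |x a|}
          * ENNReal.ofReal (t ^ (p-1)))
      ≤ ∫⁻ t in Set.Ioi (0:ℝ), (distr x t) ^ (1/p) * (J p x) ^ (p-1) :=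
        setLIntegral_mono' measurableSet_Ioi hpt
    _ = J p x * (J p x) ^ (p-1) := by
        rw [lintegral_mul_const _ ((distr_measurable x).pow measurable_const)]
        rfl
    _ = (J p x) ^ p := hJJ

theorem abs_sum_rpow {p : ℝ} (hp0 : 0 < p) (A : Finset ℕ) (t : ℕ → ℝ)
    (h : ∀ l ∈ A, ∀ m ∈ A, l ≠ m → t l * t m = 0) :
    |∑ l ∈ A, t l| ^ p = ∑ l ∈ A, |t l| ^ p := by
  induction A using Finset.induction with
  | empty => simp [Real.zero_rpow hp0.ne']
  | insert _ _ haA ih =>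
    rename_i a A'
    rw [Finset.sum_insert haA, Finset.sum_insert haA]
    by_cases hta : t a = 0
    · rw [hta, zero_add, abs_zero, Real.zero_rpow hp0.ne', zero_add]
      exact ih fun l hl m hm hlm =>
        h l (Finset.mem_insert_of_mem hl) m (Finset.mem_insert_of_mem hm) hlm
    · have hz : ∀ l ∈ A', t l = 0 := by
        intro l hl
        have hal : a ≠ l := fun e => haA (e ▸ hl)
        have := h a (Finset.mem_insert_self _ _) l (Finset.mem_insert_of_mem hl) hal
        exact (mul_eq_zero.1 this).resolve_left hta
      rw [Finset.sum_eq_zero hz, add_zero,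
        Finset.sum_eq_zero (fun l hl => by rw [hz l hl, abs_zero, Real.zero_rpow hp0.ne']),
        add_zero]

theorem tail_exists {p : ℝ} (x : ℝ → ℝ) (hJ : J p x = 1) (T : ℝ) :
    ∃ β : ℝ, T < β ∧
      ENNReal.ofReal (3/4) ≤ ∫⁻ τ in Set.Ioc (0:ℝ) β, (distr x τ) ^ (1/p) := by
  set f := fun τ : ℝ => (distr x τ) ^ (1/p) with hf
  have hfm : Measurable f := (distr_measurable x).pow measurable_const
  set ν := (volume.restrict (Set.Ioi (0:ℝ))).withDensity f with hν
  have hνIoc : ∀ b : ℝ, ν (Set.Ioc 0 b) = ∫⁻ τ in Set.Ioc (0:ℝ) b, f τ := by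
    intro b
    rw [hν, withDensity_apply _ measurableSet_Ioc,
      Measure.restrict_restrict measurableSet_Ioc,
      show Set.Ioc (0:ℝ) b ∩ Set.Ioi 0 = Set.Ioc (0:ℝ) b from
        Set.inter_eq_left.2 (fun τ hτ => hτ.1)]
  have hν1 : ν (Set.Ioi (0:ℝ)) = 1 := by
    rw [hν, withDensity_apply _ measurableSet_Ioi,
      Measure.restrict_restrict measurableSet_Ioi, Set.inter_self]
    exact hJ
  have hU : Tendsto (fun m : ℕ => ν (Set.Ioc (0:ℝ) m)) atTop
      (𝓝 (ν (⋃ m : ℕ, Set.Ioc (0:ℝ) m))) := by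
    have := tendsto_measure_iUnion_atTop (μ := ν)
      (s := fun m : ℕ => Set.Ioc (0:ℝ) m)
      (fun i j hij => Set.Ioc_subset_Ioc_right (by exact_mod_cast hij))
    exact this
  have hUeq : (⋃ m : ℕ, Set.Ioc (0:ℝ) m) = Set.Ioi (0:ℝ) := by
    ext τ
    simp only [Set.mem_iUnion, Set.mem_Ioc, Set.mem_Ioi]
    constructor
    · rintro ⟨m, hm⟩; exact hm.1
    · intro hτ
      obtain ⟨m, hm⟩ := exists_nat_ge τ
      exact ⟨m, hτ, hm⟩
  rw [hUeq, hν1] at hU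
  have hlt : ENNReal.ofReal (3/4) < 1 := by
    rw [← ENNReal.ofReal_one]
    exact ENNReal.ofReal_lt_ofReal_iff_of_nonneg (by norm_num) |>.2 (by norm_num)
  have hev : ∀ᶠ m : ℕ in atTop, ENNReal.ofReal (3/4) < ν (Set.Ioc (0:ℝ) m) :=
    hU.eventually (eventually_gt_nhds hlt)
  have hev2 : ∀ᶠ m : ℕ in atTop, T < (m : ℝ) :=
    (tendsto_natCast_atTop_atTop (R := ℝ)).eventually (eventually_gt_atTop T)
  obtain ⟨m, hm1, hm2⟩ := (hev.and hev2).exists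
  exact ⟨m, hm2, by rw [← hνIoc]; exact hm1.le⟩

end LorentzDSS

open LorentzDSS

/-- **Remark 3.** For `1 < p < ∞`, the identity inclusion of the Lorentz space `Λ(t^{1/p})`
into `L_p[0,1]` is disjointly strictly singular. -/
theorem lorentz_into_Lp_DSS (p : ℝ) (hp : 1 < p) :
    ¬ DSSFails (lorentzP p) (LpNorm p) := by
  rintro ⟨x, B, hB, hmeas, hdisj, hnorm, hspan⟩
  have hp0 : (0:ℝ) < p := lt_trans one_pos hp
  have hip : (0:ℝ) < 1/p := by positivity
  -- combined a.e. disjointness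
  have hae : ∀ᵐ s ∂(volume.restrict (Set.Icc (0:ℝ) 1)), ∀ n m, n ≠ m → x n s * x m s = 0 := by
    rw [ae_all_iff]
    intro n
    rw [ae_all_iff]
    intro m
    by_cases hnm : n = m
    · exact ae_of_all _ fun s h => absurd hnm h
    · have h := hdisj n m hnm
      filter_upwards [h] with s hs _
      exact hs
  -- normalized functions
  set z : ℕ → ℝ → ℝ := fun n s => ((lorentzP p (x n)).toReal)⁻¹ * x n s with hzdef
  have hcpos : ∀ n, 0 < ((lorentzP p (x n)).toReal)⁻¹ := fun n =>
    inv_pos.2 (ENNReal.toReal_pos (hnorm n).1.ne' (hnorm n).2.ne)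
  have hzmeas : ∀ n, Measurable (z n) := fun n => (hmeas n).const_mul _
  have hJz : ∀ n, J p (z n) = 1 := by
    intro n
    rw [hzdef]
    rw [J_const_mul p (hcpos n) (x n), ← lorentzP_eq hp (hmeas n)]
    have hor : ENNReal.ofReal ((lorentzP p (x n)).toReal) = lorentzP p (x n) :=
      ENNReal.ofReal_toReal (hnorm n).2.ne
    rw [← hor, ENNReal.toReal_ofReal ENNReal.toReal_nonneg,
      ← ENNReal.ofReal_mul (hcpos n).le,
      inv_mul_cancel₀ (ENNReal.toReal_pos (hnorm n).1.ne' (hnorm n).2.ne).ne',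
      ENNReal.ofReal_one]
  -- supports and their measures
  set a : ℕ → ℝ≥0∞ := fun n => distr (x n) 0 with hadef
  have hnull : volume ({s : ℝ | ¬ ∀ n m, n ≠ m → x n s * x m s = 0} ∩ Set.Icc (0:ℝ) 1) = 0 := by
    have h := hae
    rw [MeasureTheory.ae_iff] at h
    rwa [Measure.restrict_apply' measurableSet_Icc] at h
  have hsum : ∀ F : Finset ℕ, (∑ n ∈ F, a n) ≤ 1 := by
    intro F
    have hAED : (↑F : Set ℕ).Pairwise (Function.onFun (MeasureTheory.AEDisjoint volume)
        fun n => {s ∈ Set.Icc (0:ℝ) 1 | (0:ℝ) < |x n s|}) := by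
      intro n _ m _ hnm
      apply measure_mono_null _ hnull
      rintro s ⟨⟨hs1, hs2⟩, ⟨_, hs3⟩⟩
      refine ⟨fun hP => ?_, hs1⟩
      exact (mul_ne_zero (abs_pos.1 hs2) (abs_pos.1 hs3)) (hP n m hnm)
    have hbu := measure_biUnion_finset₀ (μ := volume) hAED
      (fun n _ => (distr_setMeasurable (hmeas n) 0).nullMeasurableSet)
    calc (∑ n ∈ F, a n)
        = volume (⋃ n ∈ F, {s ∈ Set.Icc (0:ℝ) 1 | (0:ℝ) < |x n s|}) := hbu.symm
      _ ≤ volume (Set.Icc (0:ℝ) 1) :=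
          measure_mono (Set.iUnion₂_subset fun n _ => Set.sep_subset _ _)
      _ = 1 := by simp [Real.volume_Icc]
  have ha0 : Tendsto a atTop (𝓝 0) := by
    apply ENNReal.tendsto_atTop_zero_of_tsum_ne_top
    rw [ENNReal.tsum_eq_iSup_sum]
    exact ((iSup_le hsum).trans_lt ENNReal.one_lt_top).ne
  have hzdistr0 : ∀ n, distr (z n) 0 = a n := by
    intro n
    rw [hzdef, distr_const_mul (hcpos n) (x n) 0, zero_div]
  -- selection step
  have step : ∀ (N : ℕ) (T : ℝ), 1 ≤ T → ∃ n, N ≤ n ∧ ∃ β : ℝ, T < β ∧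
      ENNReal.ofReal (1/2) ≤ ∫⁻ τ in Set.Ioc T β, (distr (z n) τ) ^ (1/p) := by
    intro N T hT
    have hTpos : (0:ℝ) < T := lt_of_lt_of_le one_pos hT
    set ε : ℝ≥0∞ := ENNReal.ofReal (1/(4*T)) with hε
    have hεpos : 0 < ε := ENNReal.ofReal_pos.2 (by positivity)
    have hεp : (0:ℝ≥0∞) < ε ^ p := ENNReal.rpow_pos hεpos ENNReal.ofReal_ne_top
    obtain ⟨n, hn, hnN⟩ := ((ha0.eventually (eventually_lt_nhds hεp)).and
      (eventually_ge_atTop N)).exists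
    have hhead : (∫⁻ τ in Set.Ioc (0:ℝ) T, (distr (z n) τ) ^ (1/p)) ≤ ENNReal.ofReal (1/4) := by
      have hb : ∀ τ ∈ Set.Ioc (0:ℝ) T, (distr (z n) τ) ^ (1/p) ≤ ε := by
        intro τ hτ
        have h1 : distr (z n) τ ≤ a n := by
          rw [← hzdistr0 n]
          exact distr_anti (z n) hτ.1.le
        have h2 : distr (z n) τ ≤ ε ^ p := le_trans h1 hn.le
        calc (distr (z n) τ) ^ (1/p) ≤ (ε ^ p) ^ (1/p) := ENNReal.rpow_le_rpow h2 hip.le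
          _ = ε := by
            rw [← ENNReal.rpow_mul, mul_one_div, div_self hp0.ne', ENNReal.rpow_one]
      calc (∫⁻ τ in Set.Ioc (0:ℝ) T, (distr (z n) τ) ^ (1/p))
          ≤ ∫⁻ _ in Set.Ioc (0:ℝ) T, ε := setLIntegral_mono' measurableSet_Ioc hb
        _ = ε * ENNReal.ofReal T := by rw [setLIntegral_const, Real.volume_Ioc, sub_zero]
        _ = ENNReal.ofReal (1/4) := by
            rw [hε, ← ENNReal.ofReal_mul (by positivity)]
            congr 1
            field_simp
    obtain ⟨β, hTβ, htail⟩ := tail_exists (z n) (hJz n) T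
    refine ⟨n, hnN, β, hTβ, ?_⟩
    have hsplit : (∫⁻ τ in Set.Ioc (0:ℝ) β, (distr (z n) τ) ^ (1/p))
        = (∫⁻ τ in Set.Ioc (0:ℝ) T, (distr (z n) τ) ^ (1/p))
          + ∫⁻ τ in Set.Ioc T β, (distr (z n) τ) ^ (1/p) := by
      rw [← lintegral_union measurableSet_Ioc (Set.Ioc_disjoint_Ioc_of_le le_rfl),
        Set.Ioc_union_Ioc_eq_Ioc hTpos.le hTβ.le]
    by_contra hcon
    push_neg at hcon
    have hlt : (∫⁻ τ in Set.Ioc (0:ℝ) β, (distr (z n) τ) ^ (1/p)) < ENNReal.ofReal (3/4) := by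
      rw [hsplit]
      calc (∫⁻ τ in Set.Ioc (0:ℝ) T, (distr (z n) τ) ^ (1/p))
            + (∫⁻ τ in Set.Ioc T β, (distr (z n) τ) ^ (1/p))
          ≤ ENNReal.ofReal (1/4) + ∫⁻ τ in Set.Ioc T β, (distr (z n) τ) ^ (1/p) :=
            add_le_add_left hhead _
        _ < ENNReal.ofReal (1/4) + ENNReal.ofReal (1/2) :=
            ENNReal.add_lt_add_left ENNReal.ofReal_ne_top hcon
        _ = ENNReal.ofReal (3/4) := by
            rw [← ENNReal.ofReal_add (by norm_num) (by norm_num)]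
            norm_num
    exact absurd htail (not_le.2 hlt)
  -- iterate the selection
  have key : ∀ q : {q : ℕ × ℝ // 1 ≤ q.2}, ∃ q' : {q : ℕ × ℝ // 1 ≤ q.2},
      q.1.1 < q'.1.1 ∧ q.1.2 < q'.1.2 ∧
      ENNReal.ofReal (1/2) ≤ ∫⁻ τ in Set.Ioc q.1.2 q'.1.2, (distr (z q'.1.1) τ) ^ (1/p) := by
    rintro ⟨⟨N, T⟩, hT⟩
    obtain ⟨n, hnN, β, hTβ, hmass⟩ := step (N+1) T hT
    exact ⟨⟨⟨n, β⟩, le_trans hT hTβ.le⟩, lt_of_lt_of_le (Nat.lt_succ_self N) hnN, hTβ, hmass⟩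
  choose g hg1 hg2 hg3 using key
  set F : ℕ → {q : ℕ × ℝ // 1 ≤ q.2} := fun k => g^[k] ⟨(0, 1), le_refl 1⟩ with hF
  have hFsucc : ∀ k, F (k+1) = g (F k) := fun k => Function.iterate_succ_apply' g k _
  set m : ℕ → ℕ := fun k => (F (k+1)).1.1 with hm
  set T : ℕ → ℝ := fun k => (F k).1.2 with hTdef
  have hTmono : StrictMono T := strictMono_nat_of_lt_succ fun k => by
    rw [hTdef]
    simp only [hFsucc k]
    exact hg2 (F k)
  have hT1 : ∀ k, 1 ≤ T k := fun k => (F k).2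
  have hmmono : StrictMono m := strictMono_nat_of_lt_succ fun k => by
    rw [hm]
    simp only [hFsucc (k+1)]
    exact hg1 (F (k+1))
  have hmass : ∀ k, ENNReal.ofReal (1/2)
      ≤ ∫⁻ τ in Set.Ioc (T k) (T (k+1)), (distr (z (m k)) τ) ^ (1/p) := by
    intro k
    have h := hg3 (F k)
    rw [← hFsucc k] at h
    exact h
  -- choose K
  obtain ⟨K, hK1, hKbig⟩ : ∃ K : ℕ, 1 ≤ K ∧ 2 * B * p ^ (1/p) < (K:ℝ) ^ (1 - 1/p) := by
    have hexp : (0:ℝ) < 1 - 1/p := by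
      have : 1/p < 1 := by rw [div_lt_one hp0]; exact hp
      linarith
    have h1 : Tendsto (fun k : ℕ => (k:ℝ) ^ (1 - 1/p)) atTop atTop :=
      (tendsto_rpow_atTop hexp).comp tendsto_natCast_atTop_atTop
    obtain ⟨K, hK⟩ := ((h1.eventually_gt_atTop (2*B*p^(1/p))).and (eventually_ge_atTop 1)).exists
    exact ⟨K, hK.2, hK.1⟩
  -- the test function
  set y : ℝ → ℝ := fun s => ∑ k ∈ Finset.range K, z (m k) s with hy
  have hymeas : Measurable y := Finset.measurable_sum _ fun k _ => hzmeas (m k)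
  have hyspan : y ∈ Submodule.span ℝ (Set.range x) := by
    have hyeq : y = ∑ k ∈ Finset.range K, ((lorentzP p (x (m k))).toReal)⁻¹ • x (m k) := by
      funext s
      rw [hy, Finset.sum_apply]
      apply Finset.sum_congr rfl
      intro k _
      simp [hzdef]
    rw [hyeq]
    exact Submodule.sum_mem _ fun k _ =>
      Submodule.smul_mem _ _ (Submodule.subset_span ⟨m k, rfl⟩)
  -- pointwise domination of distributions
  have hdom : ∀ k, k < K → ∀ τ : ℝ, distr (z (m k)) τ ≤ distr y τ := by
    intro k hk τ
    rcases lt_or_ge τ 0 with hτ | hτ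
    · exact measure_mono fun s hs => ⟨hs.1, lt_of_lt_of_le hτ (abs_nonneg _)⟩
    · apply measure_mono_ae
      have h1 : ∀ᵐ sp ∂(volume : Measure ℝ), sp ∈ Set.Icc (0:ℝ) 1 →
          ∀ n m', n ≠ m' → x n sp * x m' sp = 0 := (ae_restrict_iff' measurableSet_Icc).1 hae
      filter_upwards [h1] with s hs
      rintro ⟨hsI, hslt⟩
      have hxk : x (m k) s ≠ 0 := by
        intro h0
        have hz0 : z (m k) s = 0 := by rw [hzdef]; simp [h0]
        rw [hz0, abs_zero] at hslt
        exact absurd hslt (not_lt.2 hτ)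
      have hys : y s = z (m k) s := by
        rw [hy]
        apply Finset.sum_eq_single_of_mem k (Finset.mem_range.2 hk)
        intro l hl hlk
        have hx0 : x (m l) s * x (m k) s = 0 :=
          hs hsI (m l) (m k) fun e => hlk (hmmono.injective e)
        have hxl : x (m l) s = 0 := (mul_eq_zero.1 hx0).resolve_right hxk
        rw [hzdef]
        simp [hxl]
      exact ⟨hsI, by rw [hys]; exact hslt⟩
  -- lower bound for the Lorentz functional of y
  have hwin_sub : (⋃ k ∈ Finset.range K, Set.Ioc (T k) (T (k+1))) ⊆ Set.Ioi (0:ℝ) := by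
    intro τ hτ
    simp only [Set.mem_iUnion] at hτ
    obtain ⟨k, _, hτ2⟩ := hτ
    exact lt_trans (lt_of_lt_of_le one_pos (hT1 k)) hτ2.1
  have hwin_disj : Set.PairwiseDisjoint (↑(Finset.range K) : Set ℕ)
      (fun k => Set.Ioc (T k) (T (k+1))) := by
    intro k _ l _ hkl
    rcases lt_or_gt_of_ne hkl with h | h
    · apply Set.Ioc_disjoint_Ioc.2
      calc min (T (k+1)) (T (l+1)) ≤ T (k+1) := min_le_left _ _
        _ ≤ T l := hTmono.monotone (by omega)
        _ ≤ max (T k) (T l) := le_max_right _ _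
    · apply Set.Ioc_disjoint_Ioc.2
      calc min (T (k+1)) (T (l+1)) ≤ T (l+1) := min_le_right _ _
        _ ≤ T k := hTmono.monotone (by omega)
        _ ≤ max (T k) (T l) := le_max_left _ _
  have hlow : ENNReal.ofReal (K * (1/2)) ≤ lorentzP p y := by
    rw [lorentzP_eq hp hymeas]
    calc ENNReal.ofReal (K * (1/2))
        = ∑ _k ∈ Finset.range K, ENNReal.ofReal (1/2) := by
          rw [Finset.sum_const, Finset.card_range, nsmul_eq_mul,
            ENNReal.ofReal_mul (Nat.cast_nonneg K), ENNReal.ofReal_natCast]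
      _ ≤ ∑ k ∈ Finset.range K,
            ∫⁻ τ in Set.Ioc (T k) (T (k+1)), (distr (z (m k)) τ) ^ (1/p) :=
          Finset.sum_le_sum fun k _ => hmass k
      _ ≤ ∑ k ∈ Finset.range K,
            ∫⁻ τ in Set.Ioc (T k) (T (k+1)), (distr y τ) ^ (1/p) := by
          apply Finset.sum_le_sum
          intro k hk
          exact lintegral_mono fun τ =>
            ENNReal.rpow_le_rpow (hdom k (Finset.mem_range.1 hk) τ) hip.le
      _ = ∫⁻ τ in (⋃ k ∈ Finset.range K, Set.Ioc (T k) (T (k+1))), (distr y τ) ^ (1/p) :=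
          (lintegral_biUnion_finset hwin_disj (fun k _ => measurableSet_Ioc) _).symm
      _ ≤ J p y := lintegral_mono_set hwin_sub
  -- upper bound for the Lp norm of y
  have hup : (∫⁻ s in Set.Icc (0:ℝ) 1, ENNReal.ofReal |y s| ^ p) ≤ ENNReal.ofReal (K * p) := by
    have hptws : ∀ᵐ s ∂(volume.restrict (Set.Icc (0:ℝ) 1)),
        ENNReal.ofReal |y s| ^ p
          = ∑ k ∈ Finset.range K, ENNReal.ofReal |z (m k) s| ^ p := by
      filter_upwards [hae] with s hs
      have hpairs : ∀ l ∈ Finset.range K, ∀ m' ∈ Finset.range K, l ≠ m' →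
          z (m l) s * z (m m') s = 0 := by
        intro l _ m' _ hlm
        have hx0 : x (m l) s * x (m m') s = 0 :=
          hs (m l) (m m') fun e => hlm (hmmono.injective e)
        rw [hzdef]
        show (((lorentzP p (x (m l))).toReal)⁻¹ * x (m l) s)
          * (((lorentzP p (x (m m'))).toReal)⁻¹ * x (m m') s) = 0
        rw [mul_mul_mul_comm, hx0, mul_zero]
      have halg := abs_sum_rpow hp0 (Finset.range K) (fun k => z (m k) s) hpairs
      rw [hy]
      rw [ENNReal.ofReal_rpow_of_nonneg (abs_nonneg _) hp0.le, halg,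
        ENNReal.ofReal_sum_of_nonneg fun k _ => Real.rpow_nonneg (abs_nonneg _) p]
      apply Finset.sum_congr rfl
      intro k _
      rw [ENNReal.ofReal_rpow_of_nonneg (abs_nonneg _) hp0.le]
    calc (∫⁻ s in Set.Icc (0:ℝ) 1, ENNReal.ofReal |y s| ^ p)
        = ∑ k ∈ Finset.range K, ∫⁻ s in Set.Icc (0:ℝ) 1, ENNReal.ofReal |z (m k) s| ^ p := by
          rw [lintegral_congr_ae hptws]
          exact lintegral_finset_sum _ fun k _ =>
            ((hzmeas (m k)).abs.ennreal_ofReal).pow measurable_const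
      _ ≤ ∑ _k ∈ Finset.range K, ENNReal.ofReal p := by
          apply Finset.sum_le_sum
          intro k _
          have h := lp_int_le hp (hzmeas (m k))
          rwa [hJz (m k), ENNReal.one_rpow, mul_one] at h
      _ = ENNReal.ofReal (K * p) := by
          rw [Finset.sum_const, Finset.card_range, nsmul_eq_mul,
            ENNReal.ofReal_mul (Nat.cast_nonneg K), ENNReal.ofReal_natCast]
  have hLp : LpNorm p y ≤ ENNReal.ofReal (((K:ℝ) * p) ^ (1/p)) := by
    calc LpNorm p y ≤ (ENNReal.ofReal ((K:ℝ) * p)) ^ (1/p) := ENNReal.rpow_le_rpow hup hip.le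
      _ = ENNReal.ofReal (((K:ℝ) * p) ^ (1/p)) :=
          ENNReal.ofReal_rpow_of_nonneg (by positivity) hip.le
  -- contradiction
  have hchain : ENNReal.ofReal ((K:ℝ) * (1/2))
      ≤ ENNReal.ofReal (B * ((K:ℝ) * p) ^ (1/p)) := by
    rw [ENNReal.ofReal_mul hB.le]
    exact le_trans hlow (le_trans (hspan y hyspan) (mul_le_mul_right hLp _))
  have hreal : (K:ℝ) * (1/2) ≤ B * ((K:ℝ) * p) ^ (1/p) :=
    (ENNReal.ofReal_le_ofReal_iff (by positivity)).1 hchain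
  have hKpos : (0:ℝ) < K := by exact_mod_cast hK1
  have hKp : ((K:ℝ) * p) ^ (1/p) = (K:ℝ) ^ (1/p) * p ^ (1/p) :=
    Real.mul_rpow (Nat.cast_nonneg K) hp0.le
  have hsplitK : (K:ℝ) ^ (1 - 1/p) * (K:ℝ) ^ (1/p) = (K:ℝ) := by
    rw [← Real.rpow_add hKpos]
    norm_num
  have h2 : 2 * B * p ^ (1/p) * (K:ℝ) ^ (1/p) < (K:ℝ) := by
    have h3 := mul_lt_mul_of_pos_right hKbig (Real.rpow_pos_of_pos hKpos (1/p))
    rwa [hsplitK] at h3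
  rw [hKp] at hreal
  nlinarith [hreal, h2]
end
end

section
/- With b_k, n_m and w_m as in the construction, for every m ≥ 0 the L² norm of w_m satisfies 1/2 ≤ ‖w_m‖_{L²[0,1]} ≤ 1; more precisely, 1/4 ≤ ∫₀¹ w_m(t)² dt ≤ 1. -/
open MeasureTheory Set Filter Topology
open scoped ENNReal

noncomputable section

/-- `ψ(t) = t^{1/2} (log₂(4/t))^{1/2}`. -/
def psiF (t : ℝ) : ℝ := t ^ ((1:ℝ)/2) * (Real.logb 2 (4 / t)) ^ ((1:ℝ)/2)

/-- `b_k = (k+2)^{-1/2} 2^{k/2}`. -/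
def bseq (k : ℕ) : ℝ := ((k:ℝ) + 2) ^ (-(1:ℝ)/2) * (2:ℝ) ^ ((k:ℝ)/2)

/-- `z_k = b_k χ_{(0, 2^{-k}]}`. -/
def zfun (k : ℕ) : ℝ → ℝ :=
  fun t => bseq k * (Set.Ioc (0:ℝ) ((2:ℝ) ^ (-(k:ℤ)))).indicator (fun _ => (1:ℝ)) t

/-- `n_0 = 1`, `n_{m+1} = max{n : Σ_{k=n_m}^{n-1} 1/(k+2) ≤ 1}`. -/
def nseq : ℕ → ℕ
  | 0 => 1
  | m + 1 => sSup {n : ℕ | ∑ k ∈ Finset.Ico (nseq m) n, (1:ℝ) / ((k:ℝ) + 2) ≤ 1}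

/-- `w_m(t) = max_{n_m ≤ k < n_{m+1}} z_k(t)`. -/
def wfun (m : ℕ) (t : ℝ) : ℝ := ⨆ k ∈ Finset.Ico (nseq m) (nseq (m+1)), zfun k t

/-- `‖w_m‖_{L²[0,1]}`. -/
def wnorm (m : ℕ) : ℝ := Real.sqrt (∫ t in Set.Icc (0:ℝ) 1, (wfun m t)^2)

/-! ### Auxiliary development -/

lemma sum_tendsto (a : ℕ) :
    Tendsto (fun n => ∑ k ∈ Finset.Ico a n, (1:ℝ) / ((k:ℝ) + 2)) atTop atTop := by
  have h1 : Tendsto (fun n => ∑ i ∈ Finset.range n, (1:ℝ) / (i + 1)) atTop atTop :=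
    Real.tendsto_sum_range_one_div_nat_succ_atTop
  have key : ∀ n, ∑ k ∈ Finset.range n, (1:ℝ) / ((k:ℝ) + 2)
      = (∑ i ∈ Finset.range (n+1), (1:ℝ) / ((i:ℝ) + 1)) - 1 := by
    intro n
    rw [Finset.sum_range_succ' (fun i => (1:ℝ)/((i:ℝ)+1)) n]
    simp only [Nat.cast_zero, zero_add, Nat.cast_add, Nat.cast_one, add_assoc]
    norm_num
  have h1' : Tendsto (fun n => ∑ i ∈ Finset.range (n+1), (1:ℝ)/((i:ℝ)+1)) atTop atTop :=
    h1.comp (tendsto_add_atTop_nat 1)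
  have h2 : Tendsto (fun n => ∑ k ∈ Finset.range n, (1:ℝ) / ((k:ℝ) + 2)) atTop atTop := by
    rw [show (fun n => ∑ k ∈ Finset.range n, (1:ℝ)/((k:ℝ)+2))
        = fun n => (∑ i ∈ Finset.range (n+1), (1:ℝ)/((i:ℝ)+1)) - 1 from funext key]
    exact (tendsto_atTop_add_const_right atTop (-1) h1').congr
      fun n => (sub_eq_add_neg _ _).symm
  have h3 := tendsto_atTop_add_const_right atTop
    (-(∑ k ∈ Finset.range a, (1:ℝ) / ((k:ℝ) + 2))) h2
  apply h3.congr'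
  filter_upwards [eventually_ge_atTop a] with n hn
  rw [Finset.sum_Ico_eq_sub _ hn, sub_eq_add_neg]

lemma nseq_bdd (m : ℕ) :
    BddAbove {n : ℕ | ∑ k ∈ Finset.Ico (nseq m) n, (1:ℝ) / ((k:ℝ) + 2) ≤ 1} := by
  obtain ⟨n₀, hn₀⟩ := (tendsto_atTop.mp (sum_tendsto (nseq m)) 2).exists_forall_of_atTop
  refine ⟨n₀, fun n hn => ?_⟩
  by_contra hcon
  push_neg at hcon
  have h2 := hn₀ n hcon.le
  have : (2:ℝ) ≤ 1 := le_trans h2 hn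
  norm_num at this

lemma nseq_sum_le (m : ℕ) :
    ∑ k ∈ Finset.Ico (nseq m) (nseq (m+1)), (1:ℝ) / ((k:ℝ) + 2) ≤ 1 := by
  have hne : {n : ℕ | ∑ k ∈ Finset.Ico (nseq m) n, (1:ℝ) / ((k:ℝ) + 2) ≤ 1}.Nonempty :=
    ⟨0, by simp⟩
  have := Nat.sSup_mem hne (nseq_bdd m)
  simpa [nseq] using this

lemma nseq_lt (m : ℕ) : nseq m < nseq (m+1) := by
  have : nseq m + 1 ∈ {n : ℕ | ∑ k ∈ Finset.Ico (nseq m) n, (1:ℝ) / ((k:ℝ) + 2) ≤ 1} := by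
    simp only [Set.mem_setOf_eq]
    rw [Finset.sum_Ico_succ_top (le_refl _), Finset.Ico_self, Finset.sum_empty, zero_add,
      div_le_one (by positivity)]
    linarith [Nat.cast_nonneg (nseq m) (α := ℝ)]
  have := le_csSup (nseq_bdd m) this
  have h2 : nseq (m+1) = sSup {n : ℕ | ∑ k ∈ Finset.Ico (nseq m) n, (1:ℝ) / ((k:ℝ) + 2) ≤ 1} := rfl
  omega

lemma nseq_sum_gt (m : ℕ) :
    1 < ∑ k ∈ Finset.Ico (nseq m) (nseq (m+1) + 1), (1:ℝ) / ((k:ℝ) + 2) := by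
  by_contra h
  push_neg at h
  have hmem : nseq (m+1) + 1 ∈ {n : ℕ | ∑ k ∈ Finset.Ico (nseq m) n, (1:ℝ) / ((k:ℝ) + 2) ≤ 1} := h
  have := le_csSup (nseq_bdd m) hmem
  have h2 : nseq (m+1) = sSup {n : ℕ | ∑ k ∈ Finset.Ico (nseq m) n, (1:ℝ) / ((k:ℝ) + 2) ≤ 1} := rfl
  omega

def aseq (k : ℕ) : ℝ := (2:ℝ)^(k:ℕ) / ((k:ℝ) + 2)

lemma bseq_nonneg (k : ℕ) : 0 ≤ bseq k := by
  unfold bseq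
  positivity

lemma bseq_sq (k : ℕ) : bseq k ^ 2 = aseq k := by
  unfold bseq aseq
  have hx : (0:ℝ) < (k:ℝ) + 2 := by positivity
  rw [mul_pow, ← Real.rpow_natCast (((k:ℝ)+2) ^ (-(1:ℝ)/2)) 2,
    ← Real.rpow_natCast ((2:ℝ) ^ ((k:ℝ)/2)) 2,
    ← Real.rpow_mul hx.le, ← Real.rpow_mul (by norm_num : (0:ℝ) ≤ 2)]
  push_cast
  rw [show (-(1:ℝ)/2) * 2 = -1 by ring, show ((k:ℝ)/2) * 2 = (k:ℝ) by ring,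
    Real.rpow_neg_one, Real.rpow_natCast]
  ring

lemma aseq_mono : Monotone aseq := by
  apply monotone_nat_of_le_succ
  intro k
  unfold aseq
  rw [div_le_div_iff₀ (by positivity) (by positivity)]
  push_cast
  ring_nf
  nlinarith [pow_pos (by norm_num : (0:ℝ) < 2) k, Nat.cast_nonneg (α := ℝ) k]

lemma aseq_pos (k : ℕ) : 0 < aseq k := by unfold aseq; positivity

lemma bseq_mono : Monotone bseq := by
  intro k l hkl
  have := aseq_mono hkl
  rw [← bseq_sq, ← bseq_sq] at this
  nlinarith [bseq_nonneg k, bseq_nonneg l]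

lemma aseq_mul (k : ℕ) : aseq k * (2:ℝ)^(-(k:ℤ)) = 1 / ((k:ℝ) + 2) := by
  unfold aseq
  rw [div_mul_eq_mul_div, zpow_neg, ← zpow_natCast (2:ℝ) k]
  field_simp

lemma ciSup_finset_eq {s : Finset ℕ} {f : ℕ → ℝ} {K : ℕ} (hK : K ∈ s)
    (h0 : ∀ k, 0 ≤ f k) (hmax : ∀ k ∈ s, f k ≤ f K) :
    ⨆ k ∈ s, f k = f K := by
  have hinner : ∀ k : ℕ, (⨆ _ : k ∈ s, f k) ≤ f K := by
    intro k
    by_cases h : k ∈ s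
    · rw [ciSup_pos h]; exact hmax k h
    · haveI : IsEmpty (k ∈ s) := ⟨fun hk => h hk⟩
      rw [Real.iSup_of_isEmpty]
      exact h0 K
  apply le_antisymm
  · exact Real.iSup_le hinner (h0 K)
  · refine le_ciSup_of_le ⟨f K, ?_⟩ K ?_
    · rintro x ⟨k, rfl⟩
      exact hinner k
    · rw [ciSup_pos hK]

lemma pow2_anti {k l : ℕ} (hkl : k ≤ l) : (2:ℝ)^(-(l:ℤ)) ≤ (2:ℝ)^(-(k:ℤ)) := by
  apply zpow_le_zpow_right₀ (by norm_num : (1:ℝ) ≤ 2)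
  omega

lemma pow2_pos (k : ℕ) : (0:ℝ) < (2:ℝ)^(-(k:ℤ)) := zpow_pos (by norm_num) _

lemma zfun_nonneg (k : ℕ) (t : ℝ) : 0 ≤ zfun k t := by
  unfold zfun
  apply mul_nonneg (bseq_nonneg k)
  exact Set.indicator_nonneg (fun _ _ => zero_le_one) t

lemma zfun_of_mem {k : ℕ} {t : ℝ} (h : t ∈ Set.Ioc (0:ℝ) ((2:ℝ)^(-(k:ℤ)))) :
    zfun k t = bseq k := by
  unfold zfun
  rw [Set.indicator_of_mem h, mul_one]

lemma zfun_of_not_mem {k : ℕ} {t : ℝ} (h : t ∉ Set.Ioc (0:ℝ) ((2:ℝ)^(-(k:ℤ)))) :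
    zfun k t = 0 := by
  unfold zfun
  rw [Set.indicator_of_notMem h, mul_zero]

/-- coefficients of the layer-cake decomposition of `w_m²`. -/
def cseq (n k : ℕ) : ℝ := aseq k - (if n < k then aseq (k-1) else 0)

lemma cseq_tele (n : ℕ) : ∀ K, n ≤ K → ∑ k ∈ Finset.Ico n (K+1), cseq n k = aseq K := by
  intro K hK
  induction K, hK using Nat.le_induction with
  | base =>
      rw [Finset.sum_Ico_succ_top (le_refl _), Finset.Ico_self, Finset.sum_empty, zero_add]
      simp [cseq]
  | succ K hK ih =>
      rw [Finset.sum_Ico_succ_top (by omega), ih]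
      have : cseq n (K+1) = aseq (K+1) - aseq K := by
        simp only [cseq, if_pos (by omega : n < K + 1)]
        norm_num
      rw [this]
      ring

/-- The pointwise layer-cake identity for `w_m²`. -/
lemma wfun_sq_eq (m : ℕ) (t : ℝ) :
    (wfun m t)^2 = ∑ k ∈ Finset.Ico (nseq m) (nseq (m+1)),
      cseq (nseq m) k * (Set.Ioc (0:ℝ) ((2:ℝ)^(-(k:ℤ)))).indicator (fun _ => (1:ℝ)) t := by
  classical
  set n := nseq m with hn
  set N := nseq (m+1) with hN
  have hnN : n < N := nseq_lt m
  by_cases ht : t ∈ Set.Ioc (0:ℝ) ((2:ℝ)^(-(n:ℤ)))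
  · -- main case
    obtain ⟨htpos, htle⟩ := ht
    set P : ℕ → Prop := fun k => t ≤ (2:ℝ)^(-(k:ℤ)) with hP
    have hPanti : ∀ j k : ℕ, j ≤ k → P k → P j := fun j k hjk hk =>
      le_trans hk (pow2_anti hjk)
    obtain ⟨B, hB⟩ : ∃ B : ℕ, (2:ℝ)^(-(B:ℤ)) < t := by
      obtain ⟨B, hB⟩ := exists_pow_lt_of_lt_one htpos (by norm_num : (1:ℝ)/2 < 1)
      refine ⟨B, ?_⟩
      calc (2:ℝ)^(-(B:ℤ)) = ((1:ℝ)/2)^B := by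
            rw [one_div, inv_pow, ← zpow_natCast (2:ℝ) B, ← zpow_neg]
        _ < t := hB
    have hnotPB : ¬ P B := fun h => absurd h (not_le.mpr hB)
    have hPn : P n := htle
    have hnB : n ≤ B := by
      by_contra h
      exact hnotPB (hPanti B n (by omega) hPn)
    set K0 := Nat.findGreatest P B with hK0
    have hPK0 : P K0 := Nat.findGreatest_spec hnB hPn
    have hnK0 : n ≤ K0 := Nat.le_findGreatest hnB hPn
    have hnotgt : ∀ k, K0 < k → ¬ P k := by
      intro k hk hPk
      by_cases hkB : k ≤ B
      · exact Nat.findGreatest_is_greatest hk hkB hPk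
      · exact hnotPB (hPanti B k (by omega) hPk)
    set K := min K0 (N-1) with hKdef
    have hKmem : K ∈ Finset.Ico n N := by
      simp only [Finset.mem_Ico]
      omega
    have hchar : ∀ k ∈ Finset.Ico n N,
        (t ∈ Set.Ioc (0:ℝ) ((2:ℝ)^(-(k:ℤ))) ↔ k ≤ K) := by
      intro k hk
      simp only [Finset.mem_Ico] at hk
      constructor
      · intro hmem
        have hPk : P k := hmem.2
        have : k ≤ K0 := by
          by_contra h
          exact hnotgt k (by omega) hPk
        omega
      · intro hkK
        exact ⟨htpos, hPanti k K0 (by omega) hPK0⟩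
    have hwf : wfun m t = bseq K := by
      have hmax : ∀ k ∈ Finset.Ico n N, zfun k t ≤ zfun K t := by
        intro k hk
        rw [zfun_of_mem ((hchar K hKmem).mpr (le_refl K))]
        by_cases hkK : k ≤ K
        · rw [zfun_of_mem ((hchar k hk).mpr hkK)]
          exact bseq_mono hkK
        · rw [zfun_of_not_mem (fun hmem => hkK ((hchar k hk).mp hmem))]
          exact bseq_nonneg K
      have := ciSup_finset_eq hKmem (fun k => zfun_nonneg k t) hmax
      rw [wfun, ← hn, ← hN, this, zfun_of_mem ((hchar K hKmem).mpr (le_refl K))]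
    rw [hwf, bseq_sq]
    -- now compute the sum
    have hsplit : Finset.Ico n N = Finset.Ico n (K+1) ∪ Finset.Ico (K+1) N := by
      rw [Finset.Ico_union_Ico_eq_Ico (by omega) (by omega)]
    rw [hsplit, Finset.sum_union (Finset.Ico_disjoint_Ico_consecutive n (K+1) N)]
    have hsum2 : ∑ k ∈ Finset.Ico (K+1) N,
        cseq n k * (Set.Ioc (0:ℝ) ((2:ℝ)^(-(k:ℤ)))).indicator (fun _ => (1:ℝ)) t = 0 := by
      apply Finset.sum_eq_zero
      intro k hk
      simp only [Finset.mem_Ico] at hk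
      have hknotmem : t ∉ Set.Ioc (0:ℝ) ((2:ℝ)^(-(k:ℤ))) := by
        intro hmem
        have := (hchar k (by simp only [Finset.mem_Ico]; omega)).mp hmem
        omega
      rw [Set.indicator_of_notMem hknotmem, mul_zero]
    have hsum1 : ∑ k ∈ Finset.Ico n (K+1),
        cseq n k * (Set.Ioc (0:ℝ) ((2:ℝ)^(-(k:ℤ)))).indicator (fun _ => (1:ℝ)) t
        = ∑ k ∈ Finset.Ico n (K+1), cseq n k := by
      apply Finset.sum_congr rfl
      intro k hk
      simp only [Finset.mem_Ico] at hk
      have hmem : t ∈ Set.Ioc (0:ℝ) ((2:ℝ)^(-(k:ℤ))) :=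
        (hchar k (by simp only [Finset.mem_Ico]; omega)).mpr (by omega)
      rw [Set.indicator_of_mem hmem, mul_one]
    rw [hsum1, hsum2, add_zero, cseq_tele n K (by omega)]
  · -- zero case
    have hzero : ∀ k ∈ Finset.Ico n N, zfun k t = 0 := by
      intro k hk
      simp only [Finset.mem_Ico] at hk
      apply zfun_of_not_mem
      intro hmem
      exact ht ⟨hmem.1, le_trans hmem.2 (pow2_anti hk.1)⟩
    have hwf : wfun m t = 0 := by
      have hnmem : n ∈ Finset.Ico n N := by simp only [Finset.mem_Ico]; omega
      have := ciSup_finset_eq hnmem (fun k => zfun_nonneg k t)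
        (fun k hk => by rw [hzero k hk, hzero n hnmem])
      rw [wfun, ← hn, ← hN, this, hzero n hnmem]
    rw [hwf]
    rw [Finset.sum_eq_zero, zero_pow (by norm_num)]
    intro k hk
    simp only [Finset.mem_Ico] at hk
    have : t ∉ Set.Ioc (0:ℝ) ((2:ℝ)^(-(k:ℤ))) := by
      intro hmem
      exact ht ⟨hmem.1, le_trans hmem.2 (pow2_anti hk.1)⟩
    rw [Set.indicator_of_notMem this, mul_zero]

/-- value of the integral of the indicator. -/
lemma indicator_integral (k : ℕ) :
    ∫ t in Set.Icc (0:ℝ) 1, (Set.Ioc (0:ℝ) ((2:ℝ)^(-(k:ℤ)))).indicator (fun _ => (1:ℝ)) t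
      = (2:ℝ)^(-(k:ℤ)) := by
  rw [MeasureTheory.setIntegral_indicator measurableSet_Ioc]
  have hsub : Set.Icc (0:ℝ) 1 ∩ Set.Ioc (0:ℝ) ((2:ℝ)^(-(k:ℤ))) = Set.Ioc (0:ℝ) ((2:ℝ)^(-(k:ℤ))) := by
    apply Set.inter_eq_right.mpr
    intro x hx
    constructor
    · exact hx.1.le
    · refine le_trans hx.2 ?_
      calc (2:ℝ)^(-(k:ℤ)) ≤ (2:ℝ)^(-(0:ℤ)) := pow2_anti (Nat.zero_le k)
        _ = 1 := by norm_num
  rw [hsub]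
  simp only [MeasureTheory.integral_const, smul_eq_mul, mul_one,
    MeasureTheory.Measure.restrict_apply_univ, Real.volume_Ioc]
  rw [MeasureTheory.measureReal_def, MeasureTheory.Measure.restrict_apply_univ, Real.volume_Ioc,
    ENNReal.toReal_ofReal (by rw [sub_zero]; positivity : (0:ℝ) ≤ (2:ℝ)^(-(k:ℤ)) - 0)]
  ring

lemma indicator_integrable (k : ℕ) :
    IntegrableOn ((Set.Ioc (0:ℝ) ((2:ℝ)^(-(k:ℤ)))).indicator (fun _ => (1:ℝ)))
      (Set.Icc (0:ℝ) 1) volume := by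
  apply MeasureTheory.Integrable.indicator _ measurableSet_Ioc
  exact (MeasureTheory.integrableOn_const_iff).mpr (Or.inr (by
    rw [Real.volume_Icc]; exact ENNReal.ofReal_lt_top))

lemma csum (n : ℕ) : ∀ j, n ≤ j →
    ∑ k ∈ Finset.Ico n (j+1), cseq n k * (2:ℝ)^(-(k:ℤ))
      = (∑ k ∈ Finset.Ico n (j+1), (1:ℝ)/((k:ℝ)+2))/2 + 1/(2*((j:ℝ)+2)) := by
  intro j hj
  induction j, hj using Nat.le_induction with
  | base =>
      rw [Finset.sum_Ico_succ_top (le_refl _), Finset.Ico_self, Finset.sum_empty, zero_add,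
        Finset.sum_Ico_succ_top (le_refl _), Finset.Ico_self, Finset.sum_empty, zero_add]
      have : cseq n n = aseq n := by simp [cseq]
      rw [this, aseq_mul]
      have hp : (0:ℝ) < (n:ℝ) + 2 := by positivity
      field_simp
      ring
  | succ j hjn ih =>
      rw [Finset.sum_Ico_succ_top (by omega : n ≤ j + 1),
        Finset.sum_Ico_succ_top (by omega : n ≤ j + 1), ih]
      have hc : cseq n (j+1) = aseq (j+1) - aseq j := by
        simp only [cseq, if_pos (by omega : n < j + 1)]
        norm_num
      have hpow : (2:ℝ)^(-((j+1:ℕ):ℤ)) = (2:ℝ)^(-(j:ℤ)) * (1/2) := by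
        push_cast
        rw [show -((j:ℤ)+1) = -(j:ℤ) + (-1) by ring, zpow_add₀ (by norm_num : (2:ℝ) ≠ 0)]
        norm_num
      have ha1 : aseq (j+1) * (2:ℝ)^(-((j+1:ℕ):ℤ)) = 1 / (((j:ℝ)+1) + 2) := by
        rw [aseq_mul (j+1)]
        push_cast
        ring_nf
      have ha2 : aseq j * (2:ℝ)^(-((j+1:ℕ):ℤ)) = (1 / ((j:ℝ) + 2)) * (1/2) := by
        rw [hpow, ← mul_assoc, aseq_mul j]
      rw [hc, sub_mul, ha1, ha2]
      have e1 : ((j:ℝ) + 1) + 2 = (j:ℝ) + 3 := by ring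
      have e2 : (((j+1:ℕ):ℝ)) + 2 = (j:ℝ) + 3 := by push_cast; ring
      have e3 : (((j+1:ℕ):ℝ)) + 2 = (j:ℝ) + 3 := e2
      rw [e1, e2]
      have h2pos : (0:ℝ) < (j:ℝ) + 2 := by positivity
      have h3pos : (0:ℝ) < (j:ℝ) + 3 := by positivity
      field_simp
      ring

/-- The value of the integral. -/
lemma wfun_sq_integral (m : ℕ) :
    (∫ t in Set.Icc (0:ℝ) 1, (wfun m t)^2)
      = (∑ k ∈ Finset.Ico (nseq m) (nseq (m+1)), (1:ℝ) / ((k:ℝ) + 2)) / 2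
        + 1 / (2 * ((nseq (m+1):ℝ) + 1)) := by
  classical
  set n := nseq m with hn
  set N := nseq (m+1) with hN
  have hnN : n < N := nseq_lt m
  have h1 : (∫ t in Set.Icc (0:ℝ) 1, (wfun m t)^2)
      = ∑ k ∈ Finset.Ico n N, cseq n k * (2:ℝ)^(-(k:ℤ)) := by
    have heq : (fun t => (wfun m t)^2) = fun t => ∑ k ∈ Finset.Ico n N,
        cseq n k * (Set.Ioc (0:ℝ) ((2:ℝ)^(-(k:ℤ)))).indicator (fun _ => (1:ℝ)) t :=
      funext (wfun_sq_eq m)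
    rw [heq, MeasureTheory.integral_finset_sum _ (fun k _ =>
      ((indicator_integrable k).const_mul (cseq n k)))]
    apply Finset.sum_congr rfl
    intro k _
    rw [MeasureTheory.integral_const_mul, indicator_integral]
  rw [h1]
  obtain ⟨j, hj1, hj2⟩ : ∃ j, N = j + 1 ∧ n ≤ j := ⟨N - 1, by omega, by omega⟩
  rw [hj1, csum n j hj2]
  congr 1
  push_cast
  ring


/-- Estimate (8): `1/4 ≤ ∫₀¹ w_m(t)² dt ≤ 1`, hence `1/2 ≤ ‖w_m‖₂ ≤ 1`. -/
theorem wfun_L2_bounds (m : ℕ) :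
    ((1:ℝ)/4 ≤ ∫ t in Set.Icc (0:ℝ) 1, (wfun m t)^2) ∧
    ((∫ t in Set.Icc (0:ℝ) 1, (wfun m t)^2) ≤ 1) ∧
    ((1:ℝ)/2 ≤ wnorm m) ∧ (wnorm m ≤ 1) := by
  have hint := wfun_sq_integral m
  set S := ∑ k ∈ Finset.Ico (nseq m) (nseq (m+1)), (1:ℝ) / ((k:ℝ) + 2) with hS
  have hSle : S ≤ 1 := nseq_sum_le m
  have hSgt : 1 < S + 1 / ((nseq (m+1):ℝ) + 2) := by
    have := nseq_sum_gt m
    rwa [Finset.sum_Ico_succ_top (nseq_lt m).le, ← hS] at this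
  set N := (nseq (m+1) : ℝ) with hNr
  have hN0 : 0 ≤ N := Nat.cast_nonneg _
  have hlow : (1:ℝ)/4 ≤ ∫ t in Set.Icc (0:ℝ) 1, (wfun m t)^2 := by
    rw [hint]
    have h1 : 1 / (N + 2) ≤ 1 / (N + 1) := by
      apply div_le_div_of_nonneg_left (by norm_num) (by linarith) (by linarith)
    have hkey : 1 < S + 1 / (N + 1) := lt_of_lt_of_le hSgt (by linarith)
    have h2 : 1 / (2 * (N + 1)) = (1 / (N + 1)) / 2 := by rw [div_div, mul_comm]
    linarith
  have hup : (∫ t in Set.Icc (0:ℝ) 1, (wfun m t)^2) ≤ 1 := by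
    rw [hint]
    have : 1 / (2 * (N + 1)) ≤ 1/2 := by
      rw [div_le_div_iff₀ (by positivity) (by norm_num)]
      linarith
    linarith
  refine ⟨hlow, hup, ?_, ?_⟩
  · have h := Real.sqrt_le_sqrt hlow
    rwa [show Real.sqrt ((1:ℝ)/4) = 1/2 by
      rw [show (1:ℝ)/4 = (1/2)^2 by norm_num, Real.sqrt_sq (by norm_num)]] at h
  · have h := Real.sqrt_le_sqrt hup
    rwa [Real.sqrt_one] at h
end
end
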